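/- arXiv:2409.19341 — 7 statements merged into one kernel-verified Lean document; each statement's English description precedes it below -/
import Mathlib

section
/- The Fermi–Dirac entropy is strongly convex on L¹_{[0,1]}(Ω) with constant 2/|Ω| with respect to the L¹ norm: for all ρ, q ∈ L¹_{[0,1]}(Ω) and all t ∈ [0,1], tφ(ρ) + (1−t)φ(q) − φ(tρ+(1−t)q) ≥ (2/|Ω|) · t(1−t) · ‖ρ−q‖²_{L¹(Ω)}. -/
open MeasureTheory Real Set Filter
open scoped ENNReal Topology Classical

/-- Scalar Fermi–Dirac integrand `x ln x + (1-x) ln (1-x)`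
(the convention `0 ln 0 = 0` is automatic since `Real.log 0 = 0`). -/
noncomputable def fermiDirac (x : ℝ) : ℝ := x * Real.log x + (1 - x) * Real.log (1 - x)

lemma fermiDirac_continuous : Continuous fermiDirac := by
  unfold fermiDirac
  exact (Real.continuous_mul_log).add
    ((Real.continuous_mul_log).comp (continuous_const.sub continuous_id))

lemma mul_log_ge {x : ℝ} (h0 : 0 ≤ x) (h1 : x ≤ 1) : -1 ≤ x * Real.log x := by
  rcases eq_or_lt_of_le h0 with h | h
  · simp [← h]
  · have hlog : Real.log x⁻¹ ≤ x⁻¹ - 1 := Real.log_le_sub_one_of_pos (by positivity)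
    rw [Real.log_inv] at hlog
    have hx : x * x⁻¹ = 1 := mul_inv_cancel₀ h.ne'
    nlinarith [mul_le_mul_of_nonneg_left hlog h0]

lemma abs_fermiDirac_le {x : ℝ} (h0 : 0 ≤ x) (h1 : x ≤ 1) : |fermiDirac x| ≤ 2 := by
  have h0' : (0:ℝ) ≤ 1 - x := by linarith
  have h1' : 1 - x ≤ 1 := by linarith
  have a1 := Real.mul_log_nonpos h0 h1
  have a2 := Real.mul_log_nonpos h0' h1'
  have b1 := mul_log_ge h0 h1
  have b2 := mul_log_ge h0' h1'
  rw [abs_le]; unfold fermiDirac; constructor <;> linarith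

lemma hasDerivAt_fdg {x : ℝ} (hx : x ∈ Ioo (0:ℝ) 1) :
    HasDerivAt (fun y => fermiDirac y - 2 * y ^ 2)
      (Real.log x - Real.log (1 - x) - 4 * x) x := by
  obtain ⟨h0, h1⟩ := hx
  have h1' : (0:ℝ) < 1 - x := by linarith
  have A : HasDerivAt (fun y : ℝ => y * Real.log y) (Real.log x + 1) x :=
    Real.hasDerivAt_mul_log h0.ne'
  have Binner : HasDerivAt (fun y : ℝ => 1 - y) (-1) x := by
    simpa using (hasDerivAt_id x).const_sub (1:ℝ)
  have B : HasDerivAt (fun y : ℝ => (1 - y) * Real.log (1 - y))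
      ((Real.log (1 - x) + 1) * (-1)) x :=
    (Real.hasDerivAt_mul_log h1'.ne').comp x Binner
  have C : HasDerivAt (fun y : ℝ => 2 * y ^ 2) (4 * x) x := by
    have := (hasDerivAt_pow 2 x).const_mul (2:ℝ)
    simpa using this.congr_deriv (by ring)
  have : HasDerivAt (fun y => y * Real.log y + (1 - y) * Real.log (1 - y) - 2 * y ^ 2)
      (Real.log x + 1 + (Real.log (1 - x) + 1) * (-1) - 4 * x) x := (A.add B).sub C
  unfold fermiDirac
  convert this using 1
  ring

lemma hasDerivAt_fdg' {x : ℝ} (hx : x ∈ Ioo (0:ℝ) 1) :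
    HasDerivAt (fun y => Real.log y - Real.log (1 - y) - 4 * y)
      (x⁻¹ + (1 - x)⁻¹ - 4) x := by
  obtain ⟨h0, h1⟩ := hx
  have h1' : (0:ℝ) < 1 - x := by linarith
  have Binner : HasDerivAt (fun y : ℝ => 1 - y) (-1) x := by
    simpa using (hasDerivAt_id x).const_sub (1:ℝ)
  have L1 : HasDerivAt Real.log x⁻¹ x := Real.hasDerivAt_log h0.ne'
  have L2 : HasDerivAt (fun y : ℝ => Real.log (1 - y)) ((1 - x)⁻¹ * (-1)) x :=
    (Real.hasDerivAt_log h1'.ne').comp x Binner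
  have L3 : HasDerivAt (fun y : ℝ => 4 * y) 4 x := by
    simpa using (hasDerivAt_id x).const_mul (4:ℝ)
  have : HasDerivAt (fun y => Real.log y - Real.log (1 - y) - 4 * y)
      (x⁻¹ - (1 - x)⁻¹ * (-1) - 4) x := (L1.sub L2).sub L3
  convert this using 1
  ring

lemma fdg_convex : ConvexOn ℝ (Icc (0:ℝ) 1) (fun x => fermiDirac x - 2 * x ^ 2) := by
  have hio : interior (Icc (0:ℝ) 1) = Ioo 0 1 := interior_Icc
  apply convexOn_of_deriv2_nonneg (convex_Icc 0 1)
  · exact (fermiDirac_continuous.sub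
      (continuous_const.mul (continuous_pow 2))).continuousOn
  · rw [hio]
    exact fun x hx => (hasDerivAt_fdg hx).differentiableAt.differentiableWithinAt
  · rw [hio]
    refine DifferentiableOn.congr (f := fun y => Real.log y - Real.log (1 - y) - 4 * y)
      (fun x hx => (hasDerivAt_fdg' hx).differentiableAt.differentiableWithinAt)
      (fun x hx => (hasDerivAt_fdg hx).deriv)
  · rw [hio]
    intro x hx
    obtain ⟨h0, h1⟩ := hx
    have h1' : (0:ℝ) < 1 - x := by linarith
    have e1 : deriv^[2] (fun x => fermiDirac x - 2 * x ^ 2) x = x⁻¹ + (1 - x)⁻¹ - 4 := by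
      have heq : deriv (fun y => fermiDirac y - 2 * y ^ 2)
          =ᶠ[nhds x] (fun y => Real.log y - Real.log (1 - y) - 4 * y) := by
        filter_upwards [Ioo_mem_nhds h0 h1] with y hy using (hasDerivAt_fdg hy).deriv
      simp only [Function.iterate_succ, Function.iterate_zero, Function.comp, id]
      rw [heq.deriv_eq]
      exact (hasDerivAt_fdg' ⟨h0, h1⟩).deriv
    rw [e1]
    have key : x⁻¹ + (1 - x)⁻¹ - 4 = (1 - 2 * x) ^ 2 / (x * (1 - x)) := by
      field_simp
      ring
    rw [key]
    positivity

lemma fermiDirac_ineq {a b t : ℝ} (ha : a ∈ Icc (0:ℝ) 1) (hb : b ∈ Icc (0:ℝ) 1)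
    (ht0 : 0 ≤ t) (ht1 : t ≤ 1) :
    2 * (t * (1 - t)) * (a - b) ^ 2 + fermiDirac (t * a + (1 - t) * b)
      ≤ t * fermiDirac a + (1 - t) * fermiDirac b := by
  have hsc : StrongConvexOn (Icc (0:ℝ) 1) 4 fermiDirac := by
    rw [strongConvexOn_iff_convex]
    have : (fun x : ℝ => fermiDirac x - 4 / 2 * ‖x‖ ^ 2)
        = fun x => fermiDirac x - 2 * x ^ 2 := by
      funext x; rw [Real.norm_eq_abs, sq_abs]; ring
    rw [this]
    exact fdg_convex
  have h := hsc.2 ha hb ht0 (by linarith : (0:ℝ) ≤ 1 - t) (by ring)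
  simp only [smul_eq_mul, Real.norm_eq_abs, sq_abs] at h
  nlinarith [h]

/-- The (negative) Fermi–Dirac entropy on `L^p(μ)`, as an extended-real-valued
function: `∫ ρ ln ρ + (1-ρ) ln(1-ρ)` if `0 ≤ ρ ≤ 1` a.e., and `+∞` otherwise. -/
noncomputable def FDentropy {α : Type*} [MeasurableSpace α] (μ : MeasureTheory.Measure α)
    (p : ℝ≥0∞) [Fact (1 ≤ p)] (ρ : Lp ℝ p μ) : EReal :=
  if (∀ᵐ x ∂μ, 0 ≤ ρ x ∧ ρ x ≤ 1) then ((∫ x, fermiDirac (ρ x) ∂μ : ℝ) : EReal) else ⊤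

/-- the Fermi–Dirac entropy is strongly convex on `L¹_{[0,1]}(Ω)` with
constant `2/|Ω|` with respect to the `L¹` norm:
`t φ(ρ) + (1-t) φ(q) - φ(tρ + (1-t)q) ≥ (2/|Ω|) t (1-t) ‖ρ - q‖²_{L¹}`. -/
theorem fermiDirac_entropy_strongConvex_L1
    {d : ℕ} (Ω : Set (Fin d → ℝ)) (hmeas : MeasurableSet Ω)
    (hpos : 0 < volume Ω) (hfin : volume Ω ≠ ⊤)
    (ρ q : Lp ℝ 1 (volume.restrict Ω))
    (hρ : ∀ᵐ x ∂(volume.restrict Ω), 0 ≤ ρ x ∧ ρ x ≤ 1)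
    (hq : ∀ᵐ x ∂(volume.restrict Ω), 0 ≤ q x ∧ q x ≤ 1)
    (t : ℝ) (ht : t ∈ Set.Icc (0:ℝ) 1) :
    (((2 / (volume Ω).toReal) * (t * (1 - t)) * ‖ρ - q‖ ^ 2 : ℝ) : EReal)
      ≤ (t : EReal) * FDentropy (volume.restrict Ω) 1 ρ
        + ((1 - t : ℝ) : EReal) * FDentropy (volume.restrict Ω) 1 q
        - FDentropy (volume.restrict Ω) 1 (t • ρ + (1 - t) • q) := by
  obtain ⟨ht0, ht1⟩ := ht
  have ht1' : (0:ℝ) ≤ 1 - t := by linarith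
  haveI : IsFiniteMeasure (volume.restrict Ω : Measure (Fin d → ℝ)) := by
    constructor; rw [Measure.restrict_apply_univ]; exact hfin.lt_top
  -- coeFn of the combination
  have hc : (⇑(t • ρ + (1 - t) • q) : _ → ℝ) =ᵐ[volume.restrict Ω] fun x => t * ρ x + (1 - t) * q x := by
    filter_upwards [Lp.coeFn_add (t • ρ) ((1 - t) • q), Lp.coeFn_smul t ρ,
      Lp.coeFn_smul (1 - t) q] with x h1 h2 h3
    rw [h1, Pi.add_apply, h2, h3]
    simp [smul_eq_mul]
  have hcomb : ∀ᵐ x ∂(volume.restrict Ω), 0 ≤ (t • ρ + (1 - t) • q) x ∧ (t • ρ + (1 - t) • q) x ≤ 1 := by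
    filter_upwards [hc, hρ, hq] with x h1 h2 h3
    rw [h1]
    constructor <;> nlinarith [h2.1, h2.2, h3.1, h3.2]
  unfold FDentropy
  rw [if_pos hρ, if_pos hq, if_pos hcomb, ← EReal.coe_mul, ← EReal.coe_mul,
    ← EReal.coe_add, ← EReal.coe_sub, EReal.coe_le_coe_iff]
  -- integrability
  have hmρ : AEStronglyMeasurable (fun x => fermiDirac (ρ x)) (volume.restrict Ω) :=
    fermiDirac_continuous.comp_aestronglyMeasurable (Lp.aestronglyMeasurable ρ)
  have hmq : AEStronglyMeasurable (fun x => fermiDirac (q x)) (volume.restrict Ω) :=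
    fermiDirac_continuous.comp_aestronglyMeasurable (Lp.aestronglyMeasurable q)
  have hmc : AEStronglyMeasurable (fun x => fermiDirac (t * ρ x + (1 - t) * q x)) (volume.restrict Ω) :=
    fermiDirac_continuous.comp_aestronglyMeasurable
      (((Lp.aestronglyMeasurable ρ).const_smul t).add
        ((Lp.aestronglyMeasurable q).const_smul (1 - t)))
  have hiρ : Integrable (fun x => fermiDirac (ρ x)) (volume.restrict Ω) := by
    refine Integrable.mono' (integrable_const 2) hmρ ?_
    filter_upwards [hρ] with x hx
    rw [Real.norm_eq_abs]; exact abs_fermiDirac_le hx.1 hx.2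
  have hiq : Integrable (fun x => fermiDirac (q x)) (volume.restrict Ω) := by
    refine Integrable.mono' (integrable_const 2) hmq ?_
    filter_upwards [hq] with x hx
    rw [Real.norm_eq_abs]; exact abs_fermiDirac_le hx.1 hx.2
  have hic : Integrable (fun x => fermiDirac (t * ρ x + (1 - t) * q x)) (volume.restrict Ω) := by
    refine Integrable.mono' (integrable_const 2) hmc ?_
    filter_upwards [hρ, hq] with x h2 h3
    rw [Real.norm_eq_abs]
    exact abs_fermiDirac_le (by nlinarith [h2.1, h3.1]) (by nlinarith [h2.2, h3.2])
  have hC : ∫ x, fermiDirac ((t • ρ + (1 - t) • q) x) ∂(volume.restrict Ω)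
      = ∫ x, fermiDirac (t * ρ x + (1 - t) * q x) ∂(volume.restrict Ω) :=
    by
      refine integral_congr_ae ?_
      filter_upwards [hc] with x hx
      simp only [hx]
  rw [hC]
  -- the squared-difference integrand
  have hm2 : AEStronglyMeasurable (fun x => (ρ x - q x) ^ 2) (volume.restrict Ω) :=
    (continuous_pow 2).comp_aestronglyMeasurable
      ((Lp.aestronglyMeasurable ρ).sub (Lp.aestronglyMeasurable q))
  have hsq1 : ∀ᵐ x ∂(volume.restrict Ω), (ρ x - q x) ^ 2 ≤ 1 := by
    filter_upwards [hρ, hq] with x h2 h3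
    nlinarith [h2.1, h2.2, h3.1, h3.2]
  have hi2 : Integrable (fun x => (ρ x - q x) ^ 2) (volume.restrict Ω) := by
    refine Integrable.mono' (integrable_const 1) hm2 ?_
    filter_upwards [hsq1] with x hx
    rw [Real.norm_eq_abs, abs_of_nonneg (sq_nonneg _)]; exact hx
  set S := ∫ x, (ρ x - q x) ^ 2 ∂(volume.restrict Ω) with hS
  set V := (volume Ω).toReal with hV
  have hVpos : 0 < V := ENNReal.toReal_pos hpos.ne' hfin
  have hS0 : 0 ≤ S := integral_nonneg fun x => sq_nonneg _
  -- step 1: strong convexity pointwise, integrated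
  have key1 : 2 * (t * (1 - t)) * S
      ≤ t * ∫ x, fermiDirac (ρ x) ∂(volume.restrict Ω) + (1 - t) * ∫ x, fermiDirac (q x) ∂(volume.restrict Ω)
        - ∫ x, fermiDirac (t * ρ x + (1 - t) * q x) ∂(volume.restrict Ω) := by
    have hAB : Integrable (fun x => t * fermiDirac (ρ x)
        + (1 - t) * fermiDirac (q x)) (volume.restrict Ω) :=
      (hiρ.const_mul t).add (hiq.const_mul (1 - t))
    have h1 : ∫ x, 2 * (t * (1 - t)) * (ρ x - q x) ^ 2 ∂(volume.restrict Ω)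
        ≤ ∫ x, (t * fermiDirac (ρ x) + (1 - t) * fermiDirac (q x)
            - fermiDirac (t * ρ x + (1 - t) * q x)) ∂(volume.restrict Ω) := by
      refine integral_mono_ae (hi2.const_mul _) (hAB.sub hic) ?_
      filter_upwards [hρ, hq] with x h2 h3
      have := fermiDirac_ineq (a := ρ x) (b := q x) ⟨h2.1, h2.2⟩ ⟨h3.1, h3.2⟩ ht0 ht1
      linarith
    rw [integral_sub hAB hic,
      integral_add (hiρ.const_mul t) (hiq.const_mul (1 - t)),
      integral_const_mul, integral_const_mul, integral_const_mul] at h1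
    exact h1
  -- step 2: Cauchy–Schwarz
  have hN : ‖ρ - q‖ = ∫ x, |ρ x - q x| ∂(volume.restrict Ω) := by
    rw [L1.norm_eq_integral_norm]
    refine integral_congr_ae ?_
    filter_upwards [Lp.coeFn_sub ρ q] with x hx
    rw [hx]; simp [Real.norm_eq_abs]
  have habs_mem : MemLp (fun x => |ρ x - q x|) (ENNReal.ofReal 2) (volume.restrict Ω) := by
    refine MemLp.of_bound ?_ 1 ?_
    · have := ((Lp.aestronglyMeasurable ρ).sub (Lp.aestronglyMeasurable q)).norm
      simpa [Real.norm_eq_abs] using this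
    · filter_upwards [hρ, hq] with x h2 h3
      rw [Real.norm_eq_abs, abs_abs, abs_le]
      constructor <;> nlinarith [h2.1, h2.2, h3.1, h3.2]
  have hone : MemLp (fun _ : Fin d → ℝ => (1:ℝ)) (ENNReal.ofReal 2) (volume.restrict Ω) := memLp_const 1
  have hcs := integral_mul_le_Lp_mul_Lq_of_nonneg (μ := volume.restrict Ω)
    Real.HolderConjugate.two_two
    (Eventually.of_forall fun x => abs_nonneg _)
    (Eventually.of_forall fun _ => zero_le_one) habs_mem hone
  simp only [mul_one, Real.one_rpow, integral_const, smul_eq_mul] at hcs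
  have hrw : (∫ x, |ρ x - q x| ^ (2:ℝ) ∂(volume.restrict Ω)) = S := by
    rw [hS]
    refine integral_congr_ae (Eventually.of_forall fun x => ?_)
    dsimp only
    rw [Real.rpow_two, sq_abs]
  rw [hrw, measureReal_restrict_apply_univ, measureReal_def, ← hV] at hcs
  have hNS : ‖ρ - q‖ ^ 2 ≤ S * V := by
    have hsq : (S ^ (1/(2:ℝ)) * (V * 1) ^ (1/(2:ℝ))) ^ 2 = S * V := by
      rw [mul_one, mul_pow, ← Real.rpow_natCast (S ^ (1/(2:ℝ))) 2,
        ← Real.rpow_natCast (V ^ (1/(2:ℝ))) 2, ← Real.rpow_mul hS0,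
        ← Real.rpow_mul hVpos.le]
      norm_num
    calc ‖ρ - q‖ ^ 2 ≤ (S ^ (1/(2:ℝ)) * (V * 1) ^ (1/(2:ℝ))) ^ 2 := by
          rw [hN]
          refine pow_le_pow_left₀ (integral_nonneg fun x => abs_nonneg _) ?_ 2
          rw [mul_one]; exact hcs
      _ = S * V := hsq
  -- combine
  have htt : 0 ≤ t * (1 - t) := mul_nonneg ht0 ht1'
  calc 2 / V * (t * (1 - t)) * ‖ρ - q‖ ^ 2
      ≤ 2 / V * (t * (1 - t)) * (S * V) := by
        refine mul_le_mul_of_nonneg_left hNS (by positivity)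
    _ = 2 * (t * (1 - t)) * S := by field_simp
    _ ≤ _ := key1
end

section
/- Viewed as a real-valued function on L^∞(Ω), the Fermi–Dirac entropy φ is continuously Fréchet differentiable on the open set {ρ ∈ L^∞(Ω) : ess inf ρ > 0 and ess sup ρ < 1}, and for every ρ in this set its Fréchet derivative is the bounded linear functional v ↦ ∫_Ω ln(ρ/(1−ρ)) · v dx = ∫_Ω σ⁻¹(ρ) v dx. -/
open MeasureTheory Real Set Filter
open scoped ENNReal Topology Classical

lemma hasDerivAt_fermiDirac {x : ℝ} (hx : 0 < x) (hx1 : x < 1) :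
    HasDerivAt fermiDirac (Real.log (x / (1 - x))) x := by
  have h1x : (0:ℝ) < 1 - x := by linarith
  have h1 : HasDerivAt (fun y : ℝ => y * Real.log y) (1 * Real.log x + x * x⁻¹) x :=
    (hasDerivAt_id x).mul (Real.hasDerivAt_log hx.ne')
  have h2 : HasDerivAt (fun y : ℝ => (1 - y)) (-1) x := by
    exact (hasDerivAt_id x).const_sub 1
  have h3 : HasDerivAt (fun y : ℝ => Real.log (1 - y)) ((1 - x)⁻¹ * -1) x :=
    (Real.hasDerivAt_log h1x.ne').comp x h2
  have h4 : HasDerivAt (fun y : ℝ => (1 - y) * Real.log (1 - y))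
      (-1 * Real.log (1 - x) + (1 - x) * ((1 - x)⁻¹ * -1)) x := h2.mul h3
  have h5 := h1.add h4
  have heq : 1 * Real.log x + x * x⁻¹ + (-1 * Real.log (1 - x) + (1 - x) * ((1 - x)⁻¹ * -1))
      = Real.log (x / (1 - x)) := by
    rw [Real.log_div hx.ne' h1x.ne']
    field_simp
    ring
  rw [heq] at h5
  exact h5

lemma hasDerivAt_logit {x : ℝ} (hx : 0 < x) (hx1 : x < 1) :
    HasDerivAt (fun y : ℝ => Real.log (y / (1 - y))) (x⁻¹ + (1 - x)⁻¹) x := by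
  have h1x : (0:ℝ) < 1 - x := by linarith
  have h2 : HasDerivAt (fun y : ℝ => (1 - y)) (-1) x := by
    exact (hasDerivAt_id x).const_sub 1
  have h3 : HasDerivAt (fun y : ℝ => Real.log (1 - y)) ((1 - x)⁻¹ * -1) x :=
    (Real.hasDerivAt_log h1x.ne').comp x h2
  have h := (Real.hasDerivAt_log hx.ne').sub h3
  have heq : ∀ᶠ y in 𝓝 x, Real.log (y / (1 - y)) = Real.log y - Real.log (1 - y) := by
    filter_upwards [Ioo_mem_nhds hx hx1] with y hy
    rw [Real.log_div hy.1.ne' (by linarith [hy.2] : (1:ℝ) - y ≠ 0)]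
  have h' : HasDerivAt (fun y : ℝ => Real.log (y / (1 - y)))
      (x⁻¹ - (1 - x)⁻¹ * -1) x := by
    apply HasDerivAt.congr_of_eventuallyEq h heq
  have heq2 : x⁻¹ - (1 - x)⁻¹ * -1 = x⁻¹ + (1 - x)⁻¹ := by ring
  rwa [heq2] at h'

lemma mem_Icc_aux {ε x : ℝ} (hε : 0 < ε) (hx : x ∈ Icc ε (1 - ε)) :
    0 < x ∧ x < 1 ∧ 0 < 1 - x ∧ ε ≤ 1 / 2 := by
  have h1 := hx.1; have h2 := hx.2
  refine ⟨by linarith, by linarith, by linarith, by linarith⟩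

lemma logit_lipschitz {ε x y : ℝ} (hε : 0 < ε) (hx : x ∈ Icc ε (1 - ε))
    (hy : y ∈ Icc ε (1 - ε)) :
    |Real.log (y / (1 - y)) - Real.log (x / (1 - x))| ≤ (2 / ε) * |y - x| := by
  have h := (convex_Icc ε (1 - ε)).norm_image_sub_le_of_norm_hasDerivWithin_le
    (f := fun t : ℝ => Real.log (t / (1 - t))) (f' := fun t : ℝ => t⁻¹ + (1 - t)⁻¹)
    (C := 2 / ε) (fun t ht => by
      obtain ⟨ht0, ht1, _, _⟩ := mem_Icc_aux hε ht
      exact (hasDerivAt_logit ht0 ht1).hasDerivWithinAt)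
    (fun t ht => by
      obtain ⟨ht0, ht1, ht2, _⟩ := mem_Icc_aux hε ht
      have hb1 : t⁻¹ ≤ ε⁻¹ := inv_anti₀ hε ht.1
      have hb2 : (1 - t)⁻¹ ≤ ε⁻¹ := inv_anti₀ hε (by linarith [ht.2])
      have hpos : 0 ≤ t⁻¹ + (1 - t)⁻¹ := by positivity
      rw [Real.norm_eq_abs, abs_of_nonneg hpos]
      have hsum : ε⁻¹ + ε⁻¹ = 2 / ε := by field_simp; ring
      linarith) hx hy
  simpa [Real.norm_eq_abs] using h

lemma fermiDirac_taylor {ε x y : ℝ} (hε : 0 < ε) (hx : x ∈ Icc ε (1 - ε))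
    (hy : y ∈ Icc ε (1 - ε)) :
    |fermiDirac y - fermiDirac x - Real.log (x / (1 - x)) * (y - x)|
      ≤ (2 / ε) * |y - x| ^ 2 := by
  set c := Real.log (x / (1 - x)) with hc
  have hsub : uIcc x y ⊆ Icc ε (1 - ε) := uIcc_subset_Icc hx hy
  have h := (convex_uIcc x y).norm_image_sub_le_of_norm_hasDerivWithin_le
    (f := fun t : ℝ => fermiDirac t - c * t)
    (f' := fun t : ℝ => Real.log (t / (1 - t)) - c)
    (C := (2 / ε) * |y - x|) (fun t ht => by
      obtain ⟨ht0, ht1, _, _⟩ := mem_Icc_aux hε (hsub ht)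
      have h1 := (hasDerivAt_fermiDirac ht0 ht1).sub
        (((hasDerivAt_id t).const_mul c) : HasDerivAt (fun z : ℝ => c * z) (c * 1) t)
      have h2 : Real.log (t / (1 - t)) - c * 1 = Real.log (t / (1 - t)) - c := by ring
      rw [h2] at h1
      exact h1.hasDerivWithinAt)
    (fun t ht => by
      have hL := logit_lipschitz hε hx (hsub ht)
      have habs : |t - x| ≤ |y - x| := abs_sub_left_of_mem_uIcc ht
      rw [Real.norm_eq_abs]
      calc |Real.log (t / (1 - t)) - c| ≤ (2 / ε) * |t - x| := hL
        _ ≤ (2 / ε) * |y - x| := by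
            apply mul_le_mul_of_nonneg_left habs (by positivity))
    (left_mem_uIcc : x ∈ uIcc x y) (right_mem_uIcc : y ∈ uIcc x y)
  have heq : (fermiDirac y - c * y) - (fermiDirac x - c * x)
      = fermiDirac y - fermiDirac x - c * (y - x) := by ring
  rw [Real.norm_eq_abs, Real.norm_eq_abs, heq] at h
  calc |fermiDirac y - fermiDirac x - c * (y - x)|
      ≤ (2 / ε) * |y - x| * |y - x| := h
    _ = (2 / ε) * |y - x| ^ 2 := by ring

lemma abs_logit_le {ε x : ℝ} (hε : 0 < ε) (hx : x ∈ Icc ε (1 - ε)) :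
    |Real.log (x / (1 - x))| ≤ 2 * |Real.log ε| := by
  obtain ⟨hx0, hx1, h1x, hε2⟩ := mem_Icc_aux hε hx
  have hlogε : Real.log ε ≤ 0 := Real.log_nonpos hε.le (by linarith)
  have h1 : Real.log ε ≤ Real.log x := Real.log_le_log hε hx.1
  have h2 : Real.log x ≤ 0 := Real.log_nonpos hx0.le hx1.le
  have h3 : Real.log ε ≤ Real.log (1 - x) := Real.log_le_log hε (by linarith [hx.2])
  have h4 : Real.log (1 - x) ≤ 0 := Real.log_nonpos h1x.le (by linarith)
  rw [Real.log_div hx0.ne' h1x.ne', abs_of_nonpos hlogε, abs_le]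
  constructor <;> linarith

lemma abs_fermiDirac_le_s4 {ε x : ℝ} (hε : 0 < ε) (hx : x ∈ Icc ε (1 - ε)) :
    |fermiDirac x| ≤ 2 * |Real.log ε| := by
  obtain ⟨hx0, hx1, h1x, hε2⟩ := mem_Icc_aux hε hx
  have hlogε : Real.log ε ≤ 0 := Real.log_nonpos hε.le (by linarith)
  have h1 : Real.log ε ≤ Real.log x := Real.log_le_log hε hx.1
  have h2 : Real.log x ≤ 0 := Real.log_nonpos hx0.le hx1.le
  have h3 : Real.log ε ≤ Real.log (1 - x) := Real.log_le_log hε (by linarith [hx.2])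
  have h4 : Real.log (1 - x) ≤ 0 := Real.log_nonpos h1x.le (by linarith)
  unfold fermiDirac
  have b1 : |x * Real.log x| ≤ |Real.log ε| := by
    rw [abs_mul, abs_of_nonneg hx0.le, abs_of_nonpos h2, abs_of_nonpos hlogε]
    nlinarith
  have b2 : |(1 - x) * Real.log (1 - x)| ≤ |Real.log ε| := by
    rw [abs_mul, abs_of_nonneg h1x.le, abs_of_nonpos h4, abs_of_nonpos hlogε]
    nlinarith
  calc |x * Real.log x + (1 - x) * Real.log (1 - x)|
      ≤ |x * Real.log x| + |(1 - x) * Real.log (1 - x)| := abs_add_le _ _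
    _ ≤ 2 * |Real.log ε| := by linarith

section LpTop

variable {α : Type*} [MeasurableSpace α] {μ : Measure α}

lemma Lp_top_ae_le (f : Lp ℝ ⊤ μ) : ∀ᵐ x ∂μ, |f x| ≤ ‖f‖ := by
  have h := ae_le_eLpNormEssSup (f := (⇑f : α → ℝ)) (μ := μ)
  have hne : eLpNormEssSup (⇑f) μ ≠ ⊤ := by
    rw [← eLpNorm_exponent_top]; exact Lp.eLpNorm_ne_top f
  filter_upwards [h] with x hx
  rw [Lp.norm_def, eLpNorm_exponent_top]
  have h2 := ENNReal.toReal_mono hne hx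
  simpa [Real.norm_eq_abs] using h2

lemma Lp_top_bddBelow_ae (f : Lp ℝ ⊤ μ) : IsBoundedUnder (· ≥ ·) (ae μ) ⇑f := by
  refine ⟨-‖f‖, eventually_map.2 ?_⟩
  filter_upwards [Lp_top_ae_le f] with x hx
  exact (abs_le.mp hx).1

lemma Lp_top_bddAbove_ae (f : Lp ℝ ⊤ μ) : IsBoundedUnder (· ≤ ·) (ae μ) ⇑f := by
  refine ⟨‖f‖, eventually_map.2 ?_⟩
  filter_upwards [Lp_top_ae_le f] with x hx
  exact (abs_le.mp hx).2

lemma Lp_top_ae_mem (f : Lp ℝ ⊤ μ) :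
    ∀ᵐ x ∂μ, essInf (⇑f) μ ≤ f x ∧ f x ≤ essSup (⇑f) μ := by
  filter_upwards [ae_essInf_le (Lp_top_bddBelow_ae f), ae_le_essSup (Lp_top_bddAbove_ae f)]
    with x h1 h2
  exact ⟨h1, h2⟩

lemma pair_integrable [IsFiniteMeasure μ] {g : α → ℝ} {M : ℝ}
    (hg : AEStronglyMeasurable g μ) (hM : ∀ᵐ x ∂μ, |g x| ≤ M) (v : Lp ℝ ⊤ μ) :
    Integrable (fun x => g x * v x) μ := by
  apply Integrable.mono' (integrable_const (M * ‖v‖)) (hg.mul (Lp.aestronglyMeasurable v))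
  filter_upwards [hM, Lp_top_ae_le v] with x h1 h2
  simp only [Pi.mul_apply, Real.norm_eq_abs, abs_mul]
  exact mul_le_mul h1 h2 (abs_nonneg _) ((abs_nonneg _).trans h1)

/-- The pairing `v ↦ ∫ g v` as a continuous linear functional on `L^∞`, for `g`
essentially bounded and the measure finite. -/
noncomputable def pairCLM (μ : Measure α) [IsFiniteMeasure μ] (g : α → ℝ) (M : ℝ)
    (hg : AEStronglyMeasurable g μ) (hM : ∀ᵐ x ∂μ, |g x| ≤ M) :
    Lp ℝ ⊤ μ →L[ℝ] ℝ :=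
  LinearMap.mkContinuous
    { toFun := fun v => ∫ x, g x * v x ∂μ
      map_add' := fun v w => by
        show (∫ x, g x * (↑(v + w) : α → ℝ) x ∂μ)
            = (∫ x, g x * v x ∂μ) + ∫ x, g x * w x ∂μ
        have h : (fun x => g x * (↑(v + w) : α → ℝ) x)
            =ᵐ[μ] fun x => g x * v x + g x * w x := by
          filter_upwards [Lp.coeFn_add v w] with x hx
          rw [hx, Pi.add_apply, mul_add]
        rw [integral_congr_ae h,
          integral_add (pair_integrable hg hM v) (pair_integrable hg hM w)]
      map_smul' := fun c v => by
        show (∫ x, g x * (↑(c • v) : α → ℝ) x ∂μ) = (RingHom.id ℝ) c • ∫ x, g x * v x ∂μ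
        have h : (fun x => g x * (↑(c • v) : α → ℝ) x)
            =ᵐ[μ] fun x => c * (g x * v x) := by
          filter_upwards [Lp.coeFn_smul c v] with x hx
          rw [hx, Pi.smul_apply, smul_eq_mul]
          ring
        rw [integral_congr_ae h, integral_const_mul, RingHom.id_apply, smul_eq_mul] }
    (M * (μ univ).toReal)
    (fun v => by
      have hb : ∀ᵐ x ∂μ, ‖g x * v x‖ ≤ M * ‖v‖ := by
        filter_upwards [hM, Lp_top_ae_le v] with x h1 h2
        rw [Real.norm_eq_abs, abs_mul]
        exact mul_le_mul h1 h2 (abs_nonneg _) ((abs_nonneg _).trans h1)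
      calc ‖∫ x, g x * v x ∂μ‖ ≤ M * ‖v‖ * (μ univ).toReal :=
            norm_integral_le_of_norm_le_const hb
        _ = M * (μ univ).toReal * ‖v‖ := by ring)

lemma pairCLM_apply (μ : Measure α) [IsFiniteMeasure μ] (g : α → ℝ) (M : ℝ)
    (hg : AEStronglyMeasurable g μ) (hM : ∀ᵐ x ∂μ, |g x| ≤ M) (v : Lp ℝ ⊤ μ) :
    pairCLM μ g M hg hM v = ∫ x, g x * v x ∂μ := rfl

end LpTop

set_option maxHeartbeats 1600000 in
/-- viewed as a real-valued function on `L^∞(Ω)`, the Fermi–Dirac entropy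
`φ(ρ) = ∫_Ω ρ ln ρ + (1-ρ) ln(1-ρ) dx` is continuously Fréchet differentiable on the
open set `{ρ ∈ L^∞(Ω) : ess inf ρ > 0 and ess sup ρ < 1}`, with Fréchet derivative at
`ρ` given by the bounded linear functional `v ↦ ∫_Ω ln(ρ/(1-ρ)) v dx = ∫_Ω σ⁻¹(ρ) v dx`. -/
theorem fermiDirac_entropy_C1_on_Linfty
    {d : ℕ} (Ω : Set (Fin d → ℝ)) (hmeas : MeasurableSet Ω)
    (hpos : 0 < volume Ω) (hfin : volume Ω ≠ ⊤)
    (φ : Lp ℝ ⊤ (volume.restrict Ω) → ℝ)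
    (hφ : ∀ ρ : Lp ℝ ⊤ (volume.restrict Ω), φ ρ = ∫ x, fermiDirac (ρ x) ∂(volume.restrict Ω))
    (S : Set (Lp ℝ ⊤ (volume.restrict Ω)))
    (hS : S = {ρ : Lp ℝ ⊤ (volume.restrict Ω) |
      0 < essInf (⇑ρ) (volume.restrict Ω) ∧ essSup (⇑ρ) (volume.restrict Ω) < 1}) :
    IsOpen S ∧
    ∃ D : Lp ℝ ⊤ (volume.restrict Ω) → (Lp ℝ ⊤ (volume.restrict Ω) →L[ℝ] ℝ),
      ContinuousOn D S ∧
      ∀ ρ ∈ S, HasFDerivAt φ (D ρ) ρ ∧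
        ∀ v : Lp ℝ ⊤ (volume.restrict Ω),
          D ρ v = ∫ x, Real.log (ρ x / (1 - ρ x)) * v x ∂(volume.restrict Ω) := by
  subst hS
  set μ := volume.restrict Ω with hμdef
  haveI : IsFiniteMeasure μ := ⟨by rw [hμdef, Measure.restrict_apply_univ]; exact hfin.lt_top⟩
  have hμ0 : μ ≠ 0 := by
    intro h0
    have hz : volume Ω = 0 := by
      rw [← Measure.restrict_apply_univ Ω, ← hμdef, h0]; simp
    exact hpos.ne' hz
  haveI : (ae μ).NeBot := ae_neBot.mpr hμ0
  set A := (μ univ).toReal with hA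
  have hA0 : (0:ℝ) ≤ A := ENNReal.toReal_nonneg
  set e : Lp ℝ ⊤ μ → ℝ := fun ρ => min (essInf (⇑ρ) μ) (1 - essSup (⇑ρ) μ) with he
  have hepos : ∀ ρ : Lp ℝ ⊤ μ,
      (0 < essInf (⇑ρ) μ ∧ essSup (⇑ρ) μ < 1) → 0 < e ρ := fun ρ h =>
    lt_min h.1 (by linarith [h.2])
  have hIcc : ∀ ρ : Lp ℝ ⊤ μ, ∀ᵐ x ∂μ, ρ x ∈ Icc (e ρ) (1 - e ρ) := by
    intro ρ
    filter_upwards [Lp_top_ae_mem ρ] with x hx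
    constructor
    · exact le_trans (min_le_left _ _) hx.1
    · have h1 : e ρ ≤ 1 - essSup (⇑ρ) μ := min_le_right _ _
      linarith [hx.2]
  have hGmeas : ∀ ρ : Lp ℝ ⊤ μ,
      AEStronglyMeasurable (fun x => Real.log (ρ x / (1 - ρ x))) μ := by
    intro ρ
    have h := (Lp.aestronglyMeasurable ρ).aemeasurable
    exact (Real.measurable_log.comp_aemeasurable
      (h.div (aemeasurable_const.sub h))).aestronglyMeasurable
  have hGbd : ∀ ρ : Lp ℝ ⊤ μ, (0 < essInf (⇑ρ) μ ∧ essSup (⇑ρ) μ < 1) →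
      ∀ᵐ x ∂μ, |Real.log (ρ x / (1 - ρ x))| ≤ 2 * |Real.log (e ρ)| := by
    intro ρ h
    filter_upwards [hIcc ρ] with x hx
    exact abs_logit_le (hepos ρ h) hx
  have hFDm : Measurable fermiDirac :=
    (measurable_id.mul Real.measurable_log).add
      ((measurable_const.sub measurable_id).mul
        (Real.measurable_log.comp (measurable_const.sub measurable_id)))
  have hFDmeas : ∀ f : Lp ℝ ⊤ μ,
      AEStronglyMeasurable (fun x => fermiDirac (f x)) μ := fun f =>
    (hFDm.comp_aemeasurable (Lp.aestronglyMeasurable f).aemeasurable).aestronglyMeasurable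
  constructor
  · -- openness
    rw [Metric.isOpen_iff]
    intro ρ hρ
    obtain ⟨h1, h2⟩ := hρ
    set a := essInf (⇑ρ) μ with ha
    set b := essSup (⇑ρ) μ with hb
    set δ := min a (1 - b) / 2 with hδ
    have hδpos : 0 < δ := half_pos (lt_min h1 (by linarith))
    refine ⟨δ, hδpos, ?_⟩
    intro ρ' hρ'
    have hd : ‖ρ' - ρ‖ < δ := by
      rw [← dist_eq_norm]; exact Metric.mem_ball.mp hρ'
    have h3 : ∀ᵐ x ∂μ, a - δ ≤ ρ' x ∧ ρ' x ≤ b + δ := by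
      filter_upwards [Lp_top_ae_le (ρ' - ρ), Lp.coeFn_sub ρ' ρ, Lp_top_ae_mem ρ]
        with x hx1 hx2 hx3
      rw [hx2, Pi.sub_apply] at hx1
      have h4 := abs_le.mp hx1
      exact ⟨by linarith [hx3.1, h4.1], by linarith [hx3.2, h4.2]⟩
    have hδa : δ ≤ a / 2 := by
      rw [hδ]; have := min_le_left a (1 - b); linarith
    have hδb : δ ≤ (1 - b) / 2 := by
      rw [hδ]; have := min_le_right a (1 - b); linarith
    constructor
    · have hle : a - δ ≤ essInf (⇑ρ') μ :=
        le_liminf_of_le ((Lp_top_bddAbove_ae ρ').isCoboundedUnder_ge)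
          (h3.mono fun x hx => hx.1)
      linarith
    · have hle : essSup (⇑ρ') μ ≤ b + δ :=
        limsup_le_of_le ((Lp_top_bddBelow_ae ρ').isCoboundedUnder_le)
          (h3.mono fun x hx => hx.2)
      linarith
  · -- differentiability
    set D : Lp ℝ ⊤ μ → (Lp ℝ ⊤ μ →L[ℝ] ℝ) := fun ρ =>
      if h : 0 < essInf (⇑ρ) μ ∧ essSup (⇑ρ) μ < 1 then
        pairCLM μ (fun x => Real.log (ρ x / (1 - ρ x))) (2 * |Real.log (e ρ)|)
          (hGmeas ρ) (hGbd ρ h)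
      else 0 with hDdef
    have hDeq : ∀ (ρ : Lp ℝ ⊤ μ) (h : 0 < essInf (⇑ρ) μ ∧ essSup (⇑ρ) μ < 1),
        D ρ = pairCLM μ (fun x => Real.log (ρ x / (1 - ρ x))) (2 * |Real.log (e ρ)|)
          (hGmeas ρ) (hGbd ρ h) := fun ρ h => dif_pos h
    refine ⟨D, ?_, ?_⟩
    · -- continuity of D on S
      intro ρ₀ hρ₀
      obtain ⟨h1, h2⟩ := hρ₀
      set ε0 := e ρ₀ with hε0
      have hε0pos : 0 < ε0 := hepos ρ₀ ⟨h1, h2⟩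
      set ε := ε0 / 2 with hεdef
      have hεpos : 0 < ε := half_pos hε0pos
      set K := (2 / ε) * A with hK
      have hK0 : 0 ≤ K := by positivity
      rw [Metric.continuousWithinAt_iff]
      intro c hc
      refine ⟨min ε (c / (K + 1)), lt_min hεpos (by positivity), ?_⟩
      intro ρ hρS hdist
      obtain ⟨hP1, hP2⟩ := hρS
      rw [dist_eq_norm] at hdist ⊢
      have hd1 : ‖ρ - ρ₀‖ < ε := lt_of_lt_of_le hdist (min_le_left _ _)
      have hd2 : ‖ρ - ρ₀‖ < c / (K + 1) := lt_of_lt_of_le hdist (min_le_right _ _)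
      have hIb : ∀ᵐ x ∂μ, ρ₀ x ∈ Icc ε (1 - ε) ∧ ρ x ∈ Icc ε (1 - ε) ∧
          |ρ x - ρ₀ x| ≤ ‖ρ - ρ₀‖ := by
        filter_upwards [hIcc ρ₀, Lp_top_ae_le (ρ - ρ₀), Lp.coeFn_sub ρ ρ₀]
          with x hx1 hx2 hx3
        rw [hx3, Pi.sub_apply] at hx2
        have h4 := abs_le.mp hx2
        refine ⟨⟨by linarith [hx1.1], by linarith [hx1.2]⟩,
          ⟨by linarith [hx1.1, h4.1], by linarith [hx1.2, h4.2]⟩, hx2⟩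
      rw [hDeq ρ ⟨hP1, hP2⟩, hDeq ρ₀ ⟨h1, h2⟩]
      have hnorm : ‖pairCLM μ (fun x => Real.log (ρ x / (1 - ρ x)))
            (2 * |Real.log (e ρ)|) (hGmeas ρ) (hGbd ρ ⟨hP1, hP2⟩) -
          pairCLM μ (fun x => Real.log (ρ₀ x / (1 - ρ₀ x)))
            (2 * |Real.log (e ρ₀)|) (hGmeas ρ₀) (hGbd ρ₀ ⟨h1, h2⟩)‖
          ≤ K * ‖ρ - ρ₀‖ := by
        apply ContinuousLinearMap.opNorm_le_bound _ (by positivity)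
        intro v
        rw [ContinuousLinearMap.sub_apply, pairCLM_apply, pairCLM_apply,
          ← integral_sub (pair_integrable (hGmeas ρ) (hGbd ρ ⟨hP1, hP2⟩) v)
            (pair_integrable (hGmeas ρ₀) (hGbd ρ₀ ⟨h1, h2⟩) v)]
        have hb : ∀ᵐ x ∂μ, ‖Real.log (ρ x / (1 - ρ x)) * v x -
            Real.log (ρ₀ x / (1 - ρ₀ x)) * v x‖ ≤ ((2 / ε) * ‖ρ - ρ₀‖) * ‖v‖ := by
          filter_upwards [hIb, Lp_top_ae_le v] with x hx hxv
          rw [Real.norm_eq_abs, ← sub_mul, abs_mul]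
          have hlip := logit_lipschitz hεpos hx.1 hx.2.1
          have hle : |Real.log (ρ x / (1 - ρ x)) - Real.log (ρ₀ x / (1 - ρ₀ x))|
              ≤ (2 / ε) * ‖ρ - ρ₀‖ :=
            le_trans hlip (mul_le_mul_of_nonneg_left hx.2.2 (by positivity))
          exact mul_le_mul hle hxv (abs_nonneg _)
            (mul_nonneg (by positivity) (norm_nonneg _))
        calc ‖∫ x, (Real.log (ρ x / (1 - ρ x)) * v x -
              Real.log (ρ₀ x / (1 - ρ₀ x)) * v x) ∂μ‖
            ≤ ((2 / ε) * ‖ρ - ρ₀‖) * ‖v‖ * A := norm_integral_le_of_norm_le_const hb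
          _ = K * ‖ρ - ρ₀‖ * ‖v‖ := by rw [hK]; ring
      apply lt_of_le_of_lt hnorm
      have h5 : ‖ρ - ρ₀‖ * (K + 1) < c := (lt_div_iff₀ (by positivity)).mp hd2
      nlinarith [norm_nonneg (ρ - ρ₀)]
    · -- derivative and formula
      intro ρ hρ
      obtain ⟨h1, h2⟩ := hρ
      have hDapply := hDeq ρ ⟨h1, h2⟩
      constructor
      · -- HasFDerivAt
        rw [hDapply]
        set ε0 := e ρ with hε0
        have hε0pos : 0 < ε0 := hepos ρ ⟨h1, h2⟩
        set ε := ε0 / 2 with hεdef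
        have hεpos : 0 < ε := half_pos hε0pos
        set K := (2 / ε) * A with hK
        have hK0 : 0 ≤ K := by positivity
        rw [hasFDerivAt_iff_isLittleO_nhds_zero, Asymptotics.isLittleO_iff]
        intro c hc
        have hrpos : 0 < min ε (c / (K + 1)) := lt_min hεpos (by positivity)
        filter_upwards [Metric.ball_mem_nhds (0 : Lp ℝ ⊤ μ) hrpos] with v hv
        rw [mem_ball_zero_iff] at hv
        have hv1 : ‖v‖ ≤ ε := le_of_lt (lt_of_lt_of_le hv (min_le_left _ _))
        have hv2 : ‖v‖ ≤ c / (K + 1) := le_of_lt (lt_of_lt_of_le hv (min_le_right _ _))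
        have hI : ∀ᵐ x ∂μ, ρ x ∈ Icc ε (1 - ε) ∧ (ρ x + v x) ∈ Icc ε (1 - ε) ∧
            |v x| ≤ ‖v‖ := by
          filter_upwards [hIcc ρ, Lp_top_ae_le v] with x hx1 hx2
          have h3' := abs_le.mp hx2
          refine ⟨⟨by linarith [hx1.1], by linarith [hx1.2]⟩,
            ⟨by linarith [hx1.1, h3'.1], by linarith [hx1.2, h3'.2]⟩, hx2⟩
        have hadd := Lp.coeFn_add ρ v
        have hint1 : Integrable (fun x => fermiDirac (ρ x)) μ := by
          apply Integrable.mono' (integrable_const (2 * |Real.log ε|)) (hFDmeas ρ)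
          filter_upwards [hI] with x hx
          rw [Real.norm_eq_abs]
          exact abs_fermiDirac_le_s4 hεpos hx.1
        have hint2 : Integrable (fun x => fermiDirac ((↑(ρ + v) : _ → ℝ) x)) μ := by
          apply Integrable.mono' (integrable_const (2 * |Real.log ε|)) (hFDmeas (ρ + v))
          filter_upwards [hI, hadd] with x hx hx2
          rw [Real.norm_eq_abs, hx2, Pi.add_apply]
          exact abs_fermiDirac_le_s4 hεpos hx.2.1
        have hint3 : Integrable (fun x => Real.log (ρ x / (1 - ρ x)) * v x) μ :=
          pair_integrable (hGmeas ρ) (hGbd ρ ⟨h1, h2⟩) v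
        rw [hφ (ρ + v), hφ ρ, pairCLM_apply, ← integral_sub hint2 hint1]
        have hcomb : ∫ a, (fermiDirac ((↑(ρ + v) : _ → ℝ) a) - fermiDirac (ρ a) -
              Real.log (ρ a / (1 - ρ a)) * v a) ∂μ
            = (∫ a, (fermiDirac ((↑(ρ + v) : _ → ℝ) a) - fermiDirac (ρ a)) ∂μ)
              - ∫ x, Real.log (ρ x / (1 - ρ x)) * v x ∂μ :=
          integral_sub (hint2.sub hint1) hint3
        rw [← hcomb]
        have hbound : ∀ᵐ x ∂μ, ‖fermiDirac ((↑(ρ + v) : _ → ℝ) x) - fermiDirac (ρ x) -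
            Real.log (ρ x / (1 - ρ x)) * v x‖ ≤ (2 / ε) * ‖v‖ ^ 2 := by
          filter_upwards [hI, hadd] with x hx hx2
          rw [Real.norm_eq_abs, hx2, Pi.add_apply]
          have ht := fermiDirac_taylor hεpos hx.1 hx.2.1
          rw [add_sub_cancel_left] at ht
          calc |fermiDirac (ρ x + v x) - fermiDirac (ρ x) -
              Real.log (ρ x / (1 - ρ x)) * v x| ≤ (2 / ε) * |v x| ^ 2 := ht
            _ ≤ (2 / ε) * ‖v‖ ^ 2 := by
                apply mul_le_mul_of_nonneg_left _ (by positivity)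
                exact pow_le_pow_left₀ (abs_nonneg _) hx.2.2 2
        calc ‖∫ x, (fermiDirac ((↑(ρ + v) : _ → ℝ) x) - fermiDirac (ρ x) -
              Real.log (ρ x / (1 - ρ x)) * v x) ∂μ‖
            ≤ (2 / ε) * ‖v‖ ^ 2 * A := norm_integral_le_of_norm_le_const hbound
          _ = K * ‖v‖ * ‖v‖ := by rw [hK]; ring
          _ ≤ c * ‖v‖ := by
              have h5 : ‖v‖ * (K + 1) ≤ c := (le_div_iff₀ (by positivity)).mp hv2
              nlinarith [norm_nonneg v]
      · -- formula
        intro v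
        rw [hDapply, pairCLM_apply]
end

section
/- Let A : L¹(Ω) → ℝ be a bounded linear functional, α > 0 a constant, ρ ∈ L^∞(Ω) with 0 < ess inf ρ and ess sup ρ < 1, and let C be any nonempty, closed, convex subset of L¹_{[0,1]}(Ω). Then the functional J(q) := A(q) + α⁻¹ D_φ(q,ρ) attains its minimum over C at a unique point of C. -/
open MeasureTheory Real Set Filter
open scoped ENNReal Topology Classical

noncomputable def gfun (t : ℝ) : ℝ := t * Real.log t + (1 - t) * Real.log (1 - t)

noncomputable def kfun (t : ℝ) : ℝ := gfun t - t ^ 2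

lemma continuous_gfun : Continuous gfun := by
  have h1 : Continuous fun t : ℝ => t * Real.log t := Real.continuous_mul_log
  have h2 : Continuous fun t : ℝ => (1 - t) * Real.log (1 - t) :=
    Real.continuous_mul_log.comp (continuous_const.sub continuous_id)
  exact h1.add h2

lemma hasDerivAt_kfun {t : ℝ} (h0 : t ≠ 0) (h1 : t ≠ 1) :
    HasDerivAt kfun (Real.log t - Real.log (1 - t) - 2 * t) t := by
  have h1' : (1 : ℝ) - t ≠ 0 := sub_ne_zero.mpr (Ne.symm h1)
  have A := Real.hasDerivAt_mul_log h0
  have B : HasDerivAt (fun t : ℝ => (1 - t) * Real.log (1 - t))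
      (-(Real.log (1 - t) + 1)) t := by
    have hlin : HasDerivAt (fun t : ℝ => 1 - t) (-1) t := by
      simpa using (hasDerivAt_id t).const_sub 1
    have := (Real.hasDerivAt_mul_log h1').comp t hlin
    exact this.congr_deriv (by ring)
  have C : HasDerivAt (fun t : ℝ => t ^ 2) (2 * t) t := by
    simpa using hasDerivAt_pow 2 t
  have := (A.add B).sub C
  exact this.congr_deriv (by ring)

lemma hasDerivAt_kfun' {t : ℝ} (h0 : t ≠ 0) (h1 : t ≠ 1) :
    HasDerivAt (fun t => Real.log t - Real.log (1 - t) - 2 * t)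
      (t⁻¹ + (1 - t)⁻¹ - 2) t := by
  have h1' : (1 : ℝ) - t ≠ 0 := sub_ne_zero.mpr (Ne.symm h1)
  have A := Real.hasDerivAt_log h0
  have B : HasDerivAt (fun t : ℝ => Real.log (1 - t)) (-(1 - t)⁻¹) t := by
    have hlin : HasDerivAt (fun t : ℝ => 1 - t) (-1) t := by
      simpa using (hasDerivAt_id t).const_sub 1
    have := (Real.hasDerivAt_log h1').comp t hlin
    exact this.congr_deriv (by ring)
  have C : HasDerivAt (fun t : ℝ => 2 * t) 2 t := by
    simpa using (hasDerivAt_id t).const_mul 2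
  have := (A.sub B).sub C
  exact this.congr_deriv (by ring)

lemma convexOn_kfun : ConvexOn ℝ (Set.Icc (0:ℝ) 1) kfun := by
  have hint : interior (Set.Icc (0:ℝ) 1) = Set.Ioo 0 1 := interior_Icc
  have hne : ∀ t ∈ Set.Ioo (0:ℝ) 1, t ≠ 0 ∧ t ≠ 1 :=
    fun t ht => ⟨ne_of_gt ht.1, ne_of_lt ht.2⟩
  have hderiv : ∀ t ∈ Set.Ioo (0:ℝ) 1,
      deriv kfun t = Real.log t - Real.log (1 - t) - 2 * t := fun t ht =>
    (hasDerivAt_kfun (hne t ht).1 (hne t ht).2).deriv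
  refine convexOn_of_deriv2_nonneg (convex_Icc 0 1)
    ((continuous_gfun.sub (continuous_pow 2)).continuousOn) ?_ ?_ ?_
  · rw [hint]
    intro t ht
    exact (hasDerivAt_kfun (hne t ht).1 (hne t ht).2).differentiableAt.differentiableWithinAt
  · rw [hint]
    intro t ht
    have hEq : deriv kfun =ᶠ[𝓝 t] fun s => Real.log s - Real.log (1 - s) - 2 * s :=
      Filter.eventuallyEq_of_mem (Ioo_mem_nhds ht.1 ht.2) hderiv
    exact ((hasDerivAt_kfun' (hne t ht).1 (hne t ht).2).differentiableAt.congr_of_eventuallyEq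
      hEq).differentiableWithinAt
  · rw [hint]
    intro t ht
    have hEq : deriv kfun =ᶠ[𝓝 t] fun s => Real.log s - Real.log (1 - s) - 2 * s :=
      Filter.eventuallyEq_of_mem (Ioo_mem_nhds ht.1 ht.2) hderiv
    have h2 : deriv (deriv kfun) t = t⁻¹ + (1 - t)⁻¹ - 2 := by
      rw [hEq.deriv_eq]
      exact (hasDerivAt_kfun' (hne t ht).1 (hne t ht).2).deriv
    have : deriv^[2] kfun t = deriv (deriv kfun) t := by
      simp [Function.iterate_succ, Function.comp]
    rw [this, h2]
    have ht1 : (1:ℝ) ≤ t⁻¹ := (one_le_inv₀ ht.1).mpr ht.2.le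
    have ht2 : (1:ℝ) ≤ (1 - t)⁻¹ :=
      (one_le_inv₀ (by linarith [ht.2])).mpr (by linarith [ht.1])
    linarith

lemma gfun_strong_midpoint {a b : ℝ} (ha : a ∈ Set.Icc (0:ℝ) 1) (hb : b ∈ Set.Icc (0:ℝ) 1) :
    gfun ((a + b) / 2) ≤ (gfun a + gfun b) / 2 - (a - b) ^ 2 / 4 := by
  have h := convexOn_kfun.2 ha hb (by norm_num : (0:ℝ) ≤ 1/2) (by norm_num : (0:ℝ) ≤ 1/2)
    (by norm_num)
  simp only [smul_eq_mul, kfun] at h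
  have hmid : (1/2 : ℝ) * a + (1/2 : ℝ) * b = (a + b) / 2 := by ring
  rw [hmid] at h
  nlinarith [h]

noncomputable def Phi (r t : ℝ) : ℝ :=
  t * Real.log (t / r) + (1 - t) * Real.log ((1 - t) / (1 - r))

lemma mul_log_div (t r : ℝ) (hr : r ≠ 0) :
    t * Real.log (t / r) = t * Real.log t - t * Real.log r := by
  rcases eq_or_ne t 0 with rfl | ht
  · simp
  · rw [Real.log_div ht hr]; ring

lemma Phi_eq {r : ℝ} (hr0 : r ≠ 0) (hr1 : r ≠ 1) (t : ℝ) :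
    Phi r t = gfun t - t * Real.log r - (1 - t) * Real.log (1 - r) := by
  have hr1' : (1:ℝ) - r ≠ 0 := sub_ne_zero.mpr (Ne.symm hr1)
  unfold Phi gfun
  rw [mul_log_div t r hr0, mul_log_div (1 - t) (1 - r) hr1']
  ring

lemma abs_mul_log_le {t : ℝ} (h0 : 0 ≤ t) (h1 : t ≤ 1) : |t * Real.log t| ≤ 1 := by
  rcases eq_or_lt_of_le h0 with rfl | ht
  · simp
  · have hu : Real.log t ≤ 0 := Real.log_nonpos h0 h1
    have hlow : Real.log t⁻¹ ≤ t⁻¹ - 1 := Real.log_le_sub_one_of_pos (inv_pos.mpr ht)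
    rw [Real.log_inv] at hlow
    have h2 : t * (1 - t⁻¹) ≤ t * Real.log t :=
      mul_le_mul_of_nonneg_left (by linarith) h0
    have h3 : t * (1 - t⁻¹) = t - 1 := by
      field_simp
    have h4 : t * Real.log t ≤ 0 := mul_nonpos_of_nonneg_of_nonpos h0 hu
    rw [abs_le]
    constructor <;> nlinarith

lemma abs_gfun_le {t : ℝ} (h0 : 0 ≤ t) (h1 : t ≤ 1) : |gfun t| ≤ 2 := by
  have h2 := abs_mul_log_le (t := 1 - t) (by linarith) (by linarith)
  have h1' := abs_mul_log_le h0 h1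
  unfold gfun
  calc |t * Real.log t + (1 - t) * Real.log (1 - t)|
      ≤ |t * Real.log t| + |(1 - t) * Real.log (1 - t)| := abs_add_le _ _
    _ ≤ 2 := by linarith

lemma Phi_abs_le {δ ε r t : ℝ} (hδ : 0 < δ) (hε : 0 < ε) (hr1 : δ ≤ r) (hr2 : r ≤ 1 - ε)
    (ht0 : 0 ≤ t) (ht1 : t ≤ 1) : |Phi r t| ≤ 2 - Real.log δ - Real.log ε := by
  have hr0 : (0:ℝ) < r := lt_of_lt_of_le hδ hr1
  have hrlt1 : r < 1 := by linarith
  rw [Phi_eq (ne_of_gt hr0) (ne_of_lt hrlt1)]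
  have hg := abs_gfun_le ht0 ht1
  have hlogr : |Real.log r| ≤ -Real.log δ := by
    rw [abs_of_nonpos (Real.log_nonpos hr0.le (by linarith))]
    have := Real.log_le_log hδ hr1
    linarith
  have hlog1r : |Real.log (1 - r)| ≤ -Real.log ε := by
    rw [abs_of_nonpos (Real.log_nonpos (by linarith) (by linarith))]
    have := Real.log_le_log hε (by linarith : ε ≤ 1 - r)
    linarith
  have h2 : |t * Real.log r| ≤ -Real.log δ := by
    rw [abs_mul, abs_of_nonneg ht0]
    calc t * |Real.log r| ≤ 1 * (-Real.log δ) :=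
          mul_le_mul ht1 hlogr (abs_nonneg _) zero_le_one
      _ = -Real.log δ := one_mul _
  have h3 : |(1 - t) * Real.log (1 - r)| ≤ -Real.log ε := by
    rw [abs_mul, abs_of_nonneg (by linarith : (0:ℝ) ≤ 1 - t)]
    calc (1 - t) * |Real.log (1 - r)| ≤ 1 * (-Real.log ε) :=
          mul_le_mul (by linarith) hlog1r (abs_nonneg _) zero_le_one
      _ = -Real.log ε := one_mul _
  rw [abs_le] at hg h2 h3 ⊢
  constructor <;> linarith

lemma Phi_strong_midpoint {δ ε r a b : ℝ} (hδ : 0 < δ) (hε : 0 < ε)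
    (hr1 : δ ≤ r) (hr2 : r ≤ 1 - ε)
    (ha : a ∈ Set.Icc (0:ℝ) 1) (hb : b ∈ Set.Icc (0:ℝ) 1) :
    Phi r ((a + b) / 2) ≤ (Phi r a + Phi r b) / 2 - (a - b) ^ 2 / 4 := by
  have hr0 : r ≠ 0 := ne_of_gt (lt_of_lt_of_le hδ hr1)
  have hrlt1 : r ≠ 1 := ne_of_lt (by linarith)
  rw [Phi_eq hr0 hrlt1, Phi_eq hr0 hrlt1, Phi_eq hr0 hrlt1]
  have := gfun_strong_midpoint ha hb
  nlinarith [this]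

lemma sq_integral_le_measure_mul {X : Type*} [MeasurableSpace X] {μ : Measure X}
    [IsFiniteMeasure μ] {u : X → ℝ} (hu : Integrable u μ)
    (hu2 : Integrable (fun x => (u x) ^ 2) μ) :
    (∫ x, u x ∂μ) ^ 2 ≤ (μ Set.univ).toReal * ∫ x, (u x) ^ 2 ∂μ := by
  rcases eq_or_ne ((μ Set.univ).toReal) 0 with hT | hT
  · have h0 : μ Set.univ = 0 :=
      (ENNReal.toReal_eq_zero_iff _).mp hT |>.resolve_right (measure_ne_top μ _)
    have hμ0 : μ = 0 := Measure.measure_univ_eq_zero.mp h0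
    simp [hμ0]
  · set T := (μ Set.univ).toReal with hTdef
    have hT0 : 0 < T := lt_of_le_of_ne ENNReal.toReal_nonneg (Ne.symm hT)
    set I := ∫ x, u x ∂μ with hI
    set c : ℝ := I / T with hc
    have h0 : (0:ℝ) ≤ ∫ x, (u x - c) ^ 2 ∂μ := integral_nonneg fun x => sq_nonneg _
    have hexpand : ∫ x, (u x - c) ^ 2 ∂μ
        = (∫ x, (u x) ^ 2 ∂μ) - 2 * c * I + c ^ 2 * T := by
      have heq : (fun x => (u x - c) ^ 2)
          = fun x => ((u x) ^ 2 - 2 * c * u x) + c ^ 2 := by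
        funext x; ring
      have i1 : Integrable (fun x => (u x) ^ 2 - 2 * c * u x) μ :=
        hu2.sub (hu.const_mul (2 * c))
      have i2 : Integrable (fun x => 2 * c * u x) μ := hu.const_mul (2 * c)
      rw [heq, integral_add i1 (integrable_const _), integral_sub hu2 i2, integral_const,
        integral_const_mul]
      simp only [smul_eq_mul, measureReal_def, ← hTdef, ← hI]
      ring
    rw [hexpand] at h0
    have hcT : c * T = I := by
      rw [hc]; field_simp
    nlinarith [h0, hcT, sq_nonneg c]


set_option maxHeartbeats 1000000

/-- let `A : L¹(Ω) → ℝ` be a bounded linear functional, `α > 0`,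
`ρ ∈ L^∞(Ω)` with `0 < ess inf ρ` and `ess sup ρ < 1`, and `C` a nonempty closed convex
subset of `L¹_{[0,1]}(Ω)`.  Then `J(q) = A(q) + α⁻¹ D_φ(q,ρ)` attains its minimum over
`C` at a unique point of `C`. -/
theorem entropy_projection_exists_unique
    {d : ℕ} (Ω : Set (Fin d → ℝ)) (hmeas : MeasurableSet Ω)
    (hpos : 0 < volume Ω) (hfin : volume Ω ≠ ⊤)
    (A : Lp ℝ 1 (volume.restrict Ω) →L[ℝ] ℝ) (α : ℝ) (hα : 0 < α)
    (ρ : Lp ℝ ⊤ (volume.restrict Ω))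
    (hρ0 : 0 < essInf (⇑ρ) (volume.restrict Ω))
    (hρ1 : essSup (⇑ρ) (volume.restrict Ω) < 1)
    (C : Set (Lp ℝ 1 (volume.restrict Ω))) (hCne : C.Nonempty)
    (hCclosed : IsClosed C) (hCconvex : Convex ℝ C)
    (hCsub : ∀ q ∈ C, ∀ᵐ x ∂(volume.restrict Ω), 0 ≤ q x ∧ q x ≤ 1)
    (J : Lp ℝ 1 (volume.restrict Ω) → ℝ)
    (hJ : ∀ q, J q = A q + α⁻¹ *
      ∫ x, q x * Real.log (q x / ρ x)
        + (1 - q x) * Real.log ((1 - q x) / (1 - ρ x)) ∂(volume.restrict Ω)) :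
    ∃! qstar, qstar ∈ C ∧ ∀ q ∈ C, J qstar ≤ J q := by
  classical
  haveI : Fact ((1:ℝ≥0∞) ≤ 1) := ⟨le_rfl⟩
  haveI : IsFiniteMeasure (volume.restrict Ω) := ⟨by
    rw [Measure.restrict_apply_univ]
    exact lt_top_iff_ne_top.mpr hfin⟩
  haveI : (ae (volume.restrict Ω)).NeBot := ae_neBot.mpr (by
    intro h
    apply hpos.ne'
    rw [← Measure.restrict_apply_univ, h]
    simp)
  set T := ((volume.restrict Ω) Set.univ).toReal with hT
  have hTpos : 0 < T := by
    rw [hT, Measure.restrict_apply_univ]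
    exact ENNReal.toReal_pos hpos.ne' hfin
  have hρmeas := (Lp.aestronglyMeasurable ρ).aemeasurable
  -- a.e. bounds on ρ
  have hbound : ∀ᵐ x ∂(volume.restrict Ω), |ρ x| ≤ (eLpNormEssSup (⇑ρ) (volume.restrict Ω)).toReal := by
    have hS : eLpNormEssSup (⇑ρ) (volume.restrict Ω) ≠ ⊤ := by
      have h := Lp.eLpNorm_lt_top ρ
      rw [eLpNorm_exponent_top] at h
      exact h.ne
    filter_upwards [enorm_ae_le_eLpNormEssSup (⇑ρ) (volume.restrict Ω)] with x hx
    have h2 : ((‖ρ x‖₊ : ℝ≥0∞)).toReal ≤ (eLpNormEssSup (⇑ρ) (volume.restrict Ω)).toReal :=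
      ENNReal.toReal_mono hS hx
    simpa [Real.norm_eq_abs] using h2
  have hb1 : IsBoundedUnder (· ≤ ·) (ae (volume.restrict Ω)) (⇑ρ) :=
    ⟨(eLpNormEssSup (⇑ρ) (volume.restrict Ω)).toReal, by
      rw [Filter.eventually_map]
      filter_upwards [hbound] with x hx
      exact le_of_abs_le hx⟩
  have hb2 : IsBoundedUnder (· ≥ ·) (ae (volume.restrict Ω)) (⇑ρ) :=
    ⟨-(eLpNormEssSup (⇑ρ) (volume.restrict Ω)).toReal, by
      rw [Filter.eventually_map]
      filter_upwards [hbound] with x hx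
      exact neg_le_of_abs_le hx⟩
  set δ := essInf (⇑ρ) (volume.restrict Ω) with hδdef
  set β := essSup (⇑ρ) (volume.restrict Ω) with hβdef
  set ε := (1 : ℝ) - β with hεdef
  have hδpos : 0 < δ := hρ0
  have hεpos : 0 < ε := by rw [hεdef]; linarith [hρ1]
  have hδβ : δ ≤ β := by
    have h := ae_essInf_le (f := ⇑ρ) (μ := volume.restrict Ω) hb2
    have h2 := ae_le_essSup (f := ⇑ρ) (μ := volume.restrict Ω) hb1
    obtain ⟨x, hx1, hx2⟩ := (h.and h2).exists
    exact le_trans hx1 hx2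
  have hρae : ∀ᵐ x ∂(volume.restrict Ω), δ ≤ ρ x ∧ ρ x ≤ 1 - ε := by
    filter_upwards [ae_essInf_le (f := ⇑ρ) (μ := volume.restrict Ω) hb2,
      ae_le_essSup (f := ⇑ρ) (μ := volume.restrict Ω) hb1] with x h1 h2
    refine ⟨h1, ?_⟩
    rw [hεdef]; linarith
  set M : ℝ := 2 - Real.log δ - Real.log ε with hM
  -- measurability and integrability of the entropy integrand
  have hPhimeas : ∀ q : Lp ℝ 1 (volume.restrict Ω), AEStronglyMeasurable (fun x => Phi (ρ x) (q x)) (volume.restrict Ω) := by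
    intro q
    have hq := (Lp.aestronglyMeasurable q).aemeasurable
    have hmeas2 : AEMeasurable (fun x => Phi (ρ x) (q x)) (volume.restrict Ω) := by
      unfold Phi
      exact (hq.mul (Real.measurable_log.comp_aemeasurable (hq.div hρmeas))).add
        ((aemeasurable_const.sub hq).mul
          (Real.measurable_log.comp_aemeasurable
            ((aemeasurable_const.sub hq).div (aemeasurable_const.sub hρmeas))))
    exact hmeas2.aestronglyMeasurable
  have hPhibound : ∀ q ∈ C, ∀ᵐ x ∂(volume.restrict Ω), ‖Phi (ρ x) (q x)‖ ≤ M := by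
    intro q hq
    filter_upwards [hCsub q hq, hρae] with x hx hrx
    rw [Real.norm_eq_abs, hM]
    exact Phi_abs_le hδpos hεpos hrx.1 hrx.2 hx.1 hx.2
  have hPhiint : ∀ q ∈ C, Integrable (fun x => Phi (ρ x) (q x)) (volume.restrict Ω) := fun q hq =>
    Integrable.mono' (integrable_const M) (hPhimeas q) (hPhibound q hq)
  set E : Lp ℝ 1 (volume.restrict Ω) → ℝ := fun q => ∫ x, Phi (ρ x) (q x) ∂(volume.restrict Ω) with hE
  have hJ' : ∀ q, J q = A q + α⁻¹ * E q := by
    intro q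
    rw [hJ q]
    rfl
  have hEbound : ∀ q ∈ C, |E q| ≤ M * T := by
    intro q hq
    have h := norm_integral_le_of_norm_le_const (hPhibound q hq)
    simpa [hE, Real.norm_eq_abs, hT, measureReal_def] using h
  have hnormC : ∀ q ∈ C, ‖q‖ ≤ T := by
    intro q hq
    rw [L1.norm_eq_integral_norm]
    have hle : ∀ᵐ x ∂(volume.restrict Ω), ‖q x‖ ≤ 1 := by
      filter_upwards [hCsub q hq] with x hx
      rw [Real.norm_eq_abs, abs_le]
      exact ⟨by linarith [hx.1], hx.2⟩
    calc ∫ x, ‖q x‖ ∂(volume.restrict Ω) ≤ ∫ _x, (1:ℝ) ∂(volume.restrict Ω) :=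
          integral_mono_ae (L1.integrable_coeFn q).norm (integrable_const 1) hle
      _ = T := by simp [hT, measureReal_def]
  have hαinv : 0 < α⁻¹ := inv_pos.mpr hα
  have hJlb : ∀ q ∈ C, -(‖A‖ * T + α⁻¹ * (M * T)) ≤ J q := by
    intro q hq
    rw [hJ' q]
    have h1 : |A q| ≤ ‖A‖ * T := by
      calc |A q| = ‖A q‖ := (Real.norm_eq_abs _).symm
        _ ≤ ‖A‖ * ‖q‖ := A.le_opNorm q
        _ ≤ ‖A‖ * T := mul_le_mul_of_nonneg_left (hnormC q hq) (norm_nonneg A)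
    have h2 := hEbound q hq
    rw [abs_le] at h1 h2
    have h3 := mul_le_mul_of_nonneg_left h2.1 hαinv.le
    nlinarith [h1.1, h3]
  set c : ℝ := α⁻¹ / (4 * T) with hc
  have hcpos : 0 < c := div_pos hαinv (by linarith)
  have hmidmem : ∀ q₁ ∈ C, ∀ q₂ ∈ C, ((1/2 : ℝ) • q₁ + (1/2 : ℝ) • q₂) ∈ C := by
    intro q₁ h₁ q₂ h₂
    exact hCconvex h₁ h₂ (by norm_num) (by norm_num) (by norm_num)
  -- key strong midpoint convexity of J on C
  have hkey : ∀ q₁ ∈ C, ∀ q₂ ∈ C,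
      J ((1/2 : ℝ) • q₁ + (1/2 : ℝ) • q₂) ≤ (J q₁ + J q₂) / 2 - c * ‖q₁ - q₂‖ ^ 2 := by
    intro q₁ h₁ q₂ h₂
    set qm := (1/2 : ℝ) • q₁ + (1/2 : ℝ) • q₂ with hqm
    have hqmC : qm ∈ C := hmidmem q₁ h₁ q₂ h₂
    have hqmae : ∀ᵐ x ∂(volume.restrict Ω), qm x = (q₁ x + q₂ x) / 2 := by
      filter_upwards [Lp.coeFn_add ((1/2 : ℝ) • q₁) ((1/2 : ℝ) • q₂),
        Lp.coeFn_smul (1/2 : ℝ) q₁, Lp.coeFn_smul (1/2 : ℝ) q₂] with x h1 h2 h3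
      rw [hqm]
      simp only [Pi.add_apply, Pi.smul_apply, smul_eq_mul] at h1 h2 h3
      rw [h1, h2, h3]
      ring
    have hptwise : ∀ᵐ x ∂(volume.restrict Ω), Phi (ρ x) (qm x)
        ≤ (Phi (ρ x) (q₁ x) + Phi (ρ x) (q₂ x)) / 2 - (q₁ x - q₂ x) ^ 2 / 4 := by
      filter_upwards [hqmae, hCsub q₁ h₁, hCsub q₂ h₂, hρae] with x hmx h1 h2 hr
      rw [hmx]
      exact Phi_strong_midpoint hδpos hεpos hr.1 hr.2 ⟨h1.1, h1.2⟩ ⟨h2.1, h2.2⟩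
    have hVint : Integrable (fun x => (q₁ x - q₂ x) ^ 2) (volume.restrict Ω) := by
      refine Integrable.mono' (integrable_const 1) ?_ ?_
      · exact (((Lp.aestronglyMeasurable q₁).aemeasurable.sub
          (Lp.aestronglyMeasurable q₂).aemeasurable).pow_const 2).aestronglyMeasurable
      · filter_upwards [hCsub q₁ h₁, hCsub q₂ h₂] with x hx1 hx2
        rw [Real.norm_eq_abs, abs_of_nonneg (sq_nonneg _)]
        nlinarith [hx1.1, hx1.2, hx2.1, hx2.2]
    have hint1 := hPhiint q₁ h₁
    have hint2 := hPhiint q₂ h₂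
    have hEineq : E qm ≤ (E q₁ + E q₂) / 2 - (∫ x, (q₁ x - q₂ x) ^ 2 ∂(volume.restrict Ω)) / 4 := by
      have hRHSint : Integrable (fun x =>
          (Phi (ρ x) (q₁ x) + Phi (ρ x) (q₂ x)) / 2 - (q₁ x - q₂ x) ^ 2 / 4) (volume.restrict Ω) :=
        ((hint1.add hint2).div_const 2).sub (hVint.div_const 4)
      have hmono := integral_mono_ae (hPhiint qm hqmC) hRHSint hptwise
      calc E qm ≤ ∫ x, ((Phi (ρ x) (q₁ x) + Phi (ρ x) (q₂ x)) / 2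
            - (q₁ x - q₂ x) ^ 2 / 4) ∂(volume.restrict Ω) := hmono
        _ = (E q₁ + E q₂) / 2 - (∫ x, (q₁ x - q₂ x) ^ 2 ∂(volume.restrict Ω)) / 4 := by
            have i1 : Integrable (fun x => (Phi (ρ x) (q₁ x) + Phi (ρ x) (q₂ x)) / 2)
                (volume.restrict Ω) := (hint1.add hint2).div_const 2
            have i2 : Integrable (fun x => (q₁ x - q₂ x) ^ 2 / 4) (volume.restrict Ω) :=
              hVint.div_const 4
            have i3 : Integrable (fun x => Phi (ρ x) (q₁ x) + Phi (ρ x) (q₂ x))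
                (volume.restrict Ω) := hint1.add hint2
            rw [integral_sub i1 i2, integral_div, integral_div, integral_add hint1 hint2]
    have hsubint : Integrable (fun x => q₁ x - q₂ x) (volume.restrict Ω) :=
      (L1.integrable_coeFn q₁).sub (L1.integrable_coeFn q₂)
    have hnorm : ‖q₁ - q₂‖ = ∫ x, |q₁ x - q₂ x| ∂(volume.restrict Ω) := by
      rw [L1.norm_eq_integral_norm]
      refine integral_congr_ae ?_
      filter_upwards [Lp.coeFn_sub q₁ q₂] with x hx
      rw [hx]
      simp [Real.norm_eq_abs]
    have hCS : ‖q₁ - q₂‖ ^ 2 ≤ T * ∫ x, (q₁ x - q₂ x) ^ 2 ∂(volume.restrict Ω) := by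
      have hint2' : Integrable (fun x => |q₁ x - q₂ x| ^ 2) (volume.restrict Ω) :=
        hVint.congr (Filter.Eventually.of_forall fun x => (sq_abs _).symm)
      have h := sq_integral_le_measure_mul (u := fun x => |q₁ x - q₂ x|)
        hsubint.abs hint2'
      have heq2 : ∫ x, |q₁ x - q₂ x| ^ 2 ∂(volume.restrict Ω)
          = ∫ x, (q₁ x - q₂ x) ^ 2 ∂(volume.restrict Ω) :=
        integral_congr_ae (Filter.Eventually.of_forall fun x => sq_abs _)
      rw [← hnorm, heq2, ← hT] at h
      exact h
    have hstep : c * ‖q₁ - q₂‖ ^ 2 ≤ α⁻¹ * (∫ x, (q₁ x - q₂ x) ^ 2 ∂(volume.restrict Ω)) / 4 := by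
      have h2 := mul_le_mul_of_nonneg_left hCS hcpos.le
      have heq : c * (T * ∫ x, (q₁ x - q₂ x) ^ 2 ∂(volume.restrict Ω))
          = α⁻¹ * (∫ x, (q₁ x - q₂ x) ^ 2 ∂(volume.restrict Ω)) / 4 := by
        rw [hc]
        field_simp
      linarith [h2, heq.ge, heq.le]
    have hAqm : A qm = (A q₁ + A q₂) / 2 := by
      rw [hqm, A.map_add, A.map_smul, A.map_smul]
      simp only [smul_eq_mul]
      ring
    rw [hJ' qm, hJ' q₁, hJ' q₂, hAqm]
    have hmul := mul_le_mul_of_nonneg_left hEineq hαinv.le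
    linarith [hmul, hstep]
  -- minimizing sequence
  have hJC_ne : (J '' C).Nonempty := hCne.image J
  have hbddbelow : BddBelow (J '' C) := ⟨-(‖A‖ * T + α⁻¹ * (M * T)), by
    rintro y ⟨q, hq, rfl⟩
    exact hJlb q hq⟩
  set m := sInf (J '' C) with hm
  have hmle : ∀ q ∈ C, m ≤ J q := fun q hq => csInf_le hbddbelow ⟨q, hq, rfl⟩
  have hexists : ∀ n : ℕ, ∃ q, q ∈ C ∧ J q < m + 1 / ((n : ℝ) + 1) := by
    intro n
    have hlt : m < m + 1 / ((n : ℝ) + 1) := lt_add_of_pos_right m (by positivity)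
    obtain ⟨y, ⟨q, hq, rfl⟩, hy⟩ := exists_lt_of_csInf_lt hJC_ne hlt
    exact ⟨q, hq, hy⟩
  choose u huC huJ using hexists
  have hdistbound : ∀ n k : ℕ,
      c * dist (u n) (u k) ^ 2 ≤ 1 / ((n : ℝ) + 1) / 2 + 1 / ((k : ℝ) + 1) / 2 := by
    intro n k
    have h1 := hkey (u n) (huC n) (u k) (huC k)
    have h2 := hmle _ (hmidmem _ (huC n) _ (huC k))
    have h3 := huJ n
    have h4 := huJ k
    rw [dist_eq_norm]
    linarith [h1, h2, h3, h4]
  have hcauchy : CauchySeq u := by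
    rw [Metric.cauchySeq_iff]
    intro e he
    have hce : 0 < c * e ^ 2 := by positivity
    obtain ⟨N, hN⟩ := exists_nat_gt (1 / (c * e ^ 2))
    refine ⟨N, fun n hn k hk => ?_⟩
    have hd := hdistbound n k
    have hmn : (1:ℝ) / ((n : ℝ) + 1) ≤ 1 / ((N : ℝ) + 1) := by
      apply one_div_le_one_div_of_le (by positivity)
      have : (N : ℝ) ≤ (n : ℝ) := Nat.cast_le.mpr hn
      linarith
    have hmk : (1:ℝ) / ((k : ℝ) + 1) ≤ 1 / ((N : ℝ) + 1) := by
      apply one_div_le_one_div_of_le (by positivity)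
      have : (N : ℝ) ≤ (k : ℝ) := Nat.cast_le.mpr hk
      linarith
    have hlt2 : (1:ℝ) < ((N : ℝ) + 1) * (c * e ^ 2) := by
      have h := (div_lt_iff₀ hce).mp (by linarith [hN] : 1 / (c * e ^ 2) < (N : ℝ) + 1)
      linarith
    have hN1 : 1 / ((N : ℝ) + 1) < c * e ^ 2 :=
      (div_lt_iff₀ (by positivity)).mpr (by linarith [hlt2])
    have hcd : c * dist (u n) (u k) ^ 2 < c * e ^ 2 := by linarith
    have hd2 : dist (u n) (u k) ^ 2 < e ^ 2 := lt_of_mul_lt_mul_left hcd hcpos.le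
    exact lt_of_pow_lt_pow_left₀ 2 he.le hd2
  obtain ⟨qstar, hqstar_tendsto⟩ := cauchySeq_tendsto_of_complete hcauchy
  have hqstarC : qstar ∈ C :=
    hCclosed.mem_of_tendsto hqstar_tendsto (Filter.Eventually.of_forall huC)
  have hJu_tendsto : Tendsto (fun n => J (u n)) atTop (𝓝 m) := by
    have h0 : Tendsto (fun n : ℕ => 1 / ((n : ℝ) + 1)) atTop (𝓝 0) :=
      tendsto_one_div_add_atTop_nhds_zero_nat
    have h1 : Tendsto (fun n : ℕ => m + 1 / ((n : ℝ) + 1)) atTop (𝓝 m) := by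
      simpa using tendsto_const_nhds.add h0
    exact tendsto_of_tendsto_of_tendsto_of_le_of_le tendsto_const_nhds h1
      (fun n => hmle _ (huC n)) (fun n => (huJ n).le)
  have hTIM : TendstoInMeasure (volume.restrict Ω) (fun n => ⇑(u n)) atTop ⇑qstar :=
    tendstoInMeasure_of_tendsto_Lp hqstar_tendsto
  obtain ⟨ns, hns_mono, hns_ae⟩ := hTIM.exists_seq_tendsto_ae
  have hE_tendsto : Tendsto (fun i => E (u (ns i))) atTop (𝓝 (E qstar)) := by
    refine tendsto_integral_of_dominated_convergence (fun _ => M)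
      (fun i => hPhimeas (u (ns i))) (integrable_const M)
      (fun i => hPhibound _ (huC (ns i))) ?_
    filter_upwards [hns_ae, hρae] with x hx hr
    have h0 : ρ x ≠ 0 := ne_of_gt (lt_of_lt_of_le hδpos hr.1)
    have h1 : ρ x ≠ 1 := ne_of_lt (by linarith [hr.2, hεpos])
    have hfuneq : (fun t => Phi (ρ x) t)
        = fun t => gfun t - t * Real.log (ρ x) - (1 - t) * Real.log (1 - ρ x) :=
      funext (Phi_eq h0 h1)
    have hcont : Continuous fun t => Phi (ρ x) t := by
      rw [hfuneq]
      exact (continuous_gfun.sub (continuous_id.mul continuous_const)).sub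
        ((continuous_const.sub continuous_id).mul continuous_const)
    exact (hcont.tendsto _).comp hx
  have hJsub : Tendsto (fun i => J (u (ns i))) atTop (𝓝 (A qstar + α⁻¹ * E qstar)) := by
    have hA : Tendsto (fun i => A (u (ns i))) atTop (𝓝 (A qstar)) :=
      (A.continuous.tendsto qstar).comp (hqstar_tendsto.comp hns_mono.tendsto_atTop)
    have h := hA.add (hE_tendsto.const_mul α⁻¹)
    simpa [hJ'] using h
  have hJqstar : J qstar = m := by
    have h1 : Tendsto (fun i => J (u (ns i))) atTop (𝓝 m) :=
      hJu_tendsto.comp hns_mono.tendsto_atTop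
    have h2 := tendsto_nhds_unique hJsub h1
    rw [hJ' qstar]
    exact h2
  refine ⟨qstar, ⟨hqstarC, fun q hq => ?_⟩, ?_⟩
  · rw [hJqstar]
    exact hmle q hq
  · rintro q' ⟨hq'C, hq'min⟩
    have hq'm : J q' = m :=
      le_antisymm (hJqstar ▸ hq'min qstar hqstarC) (hmle q' hq'C)
    have hkey2 := hkey q' hq'C qstar hqstarC
    have hmm := hmle _ (hmidmem _ hq'C _ hqstarC)
    have hle0 : c * ‖q' - qstar‖ ^ 2 ≤ 0 := by linarith [hkey2, hmm, hq'm, hJqstar]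
    have hsq0 : ‖q' - qstar‖ ^ 2 = 0 := by
      nlinarith [sq_nonneg ‖q' - qstar‖, hcpos]
    have h0 : ‖q' - qstar‖ = 0 := by
      have := (pow_eq_zero_iff two_ne_zero).mp hsq0
      simpa using this
    exact sub_eq_zero.mp (norm_eq_zero.mp h0)
end

section
/- Let 0 < θ < 1, let ρ_k ∈ Å (the L^∞-relative interior of the admissible set), let g ∈ L^∞(Ω), and let α > 0. Then the functional J_k(ρ) := ∫_Ω g ρ dx + α⁻¹ D_φ(ρ, ρ_k) has a unique minimizer ρ_{k+1} over the admissible set A. Moreover ρ_{k+1} ∈ Å, and there exists μ ∈ ℝ such that σ⁻¹(ρ_{k+1}) = σ⁻¹(ρ_k) − α g + μ a.e. in Ω, where μ solves the volume correction equation ∫_Ω σ(σ⁻¹(ρ_k) − α g + μ) dx = θ|Ω|. -/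
open MeasureTheory Real Set Filter
open scoped ENNReal Topology Classical

/-- The logistic sigmoid `σ(x) = 1/(1 + e^{-x})`. -/
noncomputable def sigmoid (x : ℝ) : ℝ := 1 / (1 + Real.exp (-x))

/-- The logit function `σ⁻¹(x) = ln(x/(1-x))`, inverse of the sigmoid on `(0,1)`. -/
noncomputable def logit (x : ℝ) : ℝ := Real.log (x / (1 - x))

namespace SPDU


lemma one_add_exp_pos (x : ℝ) : 0 < 1 + Real.exp (-x) := by positivity

lemma sigmoid_pos (x : ℝ) : 0 < _root_.sigmoid x := by
  unfold _root_.sigmoid; positivity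

lemma sigmoid_lt_one (x : ℝ) : _root_.sigmoid x < 1 := by
  unfold _root_.sigmoid
  rw [div_lt_one (one_add_exp_pos x)]
  linarith [Real.exp_pos (-x)]

lemma one_sub_sigmoid (x : ℝ) : 1 - _root_.sigmoid x = Real.exp (-x) / (1 + Real.exp (-x)) := by
  unfold _root_.sigmoid
  field_simp
  ring

lemma logit_sigmoid (x : ℝ) : logit (_root_.sigmoid x) = x := by
  unfold logit
  rw [one_sub_sigmoid]
  unfold _root_.sigmoid
  have h := one_add_exp_pos x
  have he := Real.exp_pos (-x)
  rw [show (1:ℝ) / (1 + rexp (-x)) / (rexp (-x) / (1 + rexp (-x))) = (rexp (-x))⁻¹ by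
    field_simp]
  rw [← Real.exp_neg, neg_neg, Real.log_exp]

lemma sigmoid_logit {p : ℝ} (h0 : 0 < p) (h1 : p < 1) : _root_.sigmoid (logit p) = p := by
  unfold _root_.sigmoid logit
  rw [← Real.log_inv, Real.exp_log (by rw [inv_div]; exact div_pos (by linarith) h0), inv_div]
  rw [show 1 + (1 - p) / p = 1 / p by field_simp; ring]
  simp

lemma sigmoid_le_sigmoid {x y : ℝ} (h : x ≤ y) : _root_.sigmoid x ≤ _root_.sigmoid y := by
  unfold _root_.sigmoid
  apply div_le_div_of_nonneg_left one_pos.le (one_add_exp_pos y)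
  have := Real.exp_le_exp.mpr (neg_le_neg h)
  linarith

lemma logit_le_logit {x y : ℝ} (h0 : 0 < x) (h : x ≤ y) (h1 : y < 1) : logit x ≤ logit y := by
  unfold logit
  apply Real.log_le_log (by apply div_pos h0; linarith)
  rw [div_le_div_iff₀ (by linarith) (by linarith)]
  nlinarith

/-- key convexity inequality : `x - y ≤ x log (x/y)` -/
lemma xky {x y : ℝ} (hx : 0 ≤ x) (hy : 0 < y) : x - y ≤ x * Real.log (x / y) := by
  rcases eq_or_lt_of_le hx with h | h
  · simp [← h]; linarith
  · have h1 : Real.log (y / x) ≤ y / x - 1 := Real.log_le_sub_one_of_pos (by positivity)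
    have h2 : Real.log (y / x) = -Real.log (x / y) := by
      rw [← Real.log_inv, inv_div]
    rw [h2] at h1
    have h3 : 1 - y / x ≤ Real.log (x / y) := by linarith
    have := mul_le_mul_of_nonneg_left h3 h.le
    calc x - y = x * (1 - y / x) := by field_simp
    _ ≤ x * Real.log (x / y) := this

lemma xky_strict {x y : ℝ} (hx : 0 ≤ x) (hy : 0 < y) (hne : x ≠ y) :
    x - y < x * Real.log (x / y) := by
  rcases eq_or_lt_of_le hx with h | h
  · have : y ≠ 0 := hy.ne'
    simp [← h]
    have : x = 0 := h.symm
    subst this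
    linarith
  · have h1 : Real.log (y / x) < y / x - 1 := by
      apply Real.log_lt_sub_one_of_pos (by positivity)
      intro hc
      apply hne
      field_simp at hc
      linarith
    have h2 : Real.log (y / x) = -Real.log (x / y) := by
      rw [← Real.log_inv, inv_div]
    rw [h2] at h1
    have h3 : 1 - y / x < Real.log (x / y) := by linarith
    have := mul_lt_mul_of_pos_left h3 h
    calc x - y = x * (1 - y / x) := by field_simp
    _ < x * Real.log (x / y) := this

lemma K_nonneg {a b : ℝ} (ha0 : 0 ≤ a) (ha1 : a ≤ 1) (hb0 : 0 < b) (hb1 : b < 1) :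
    0 ≤ a * Real.log (a / b) + (1 - a) * Real.log ((1 - a) / (1 - b)) := by
  have h1 := xky ha0 hb0
  have h2 := xky (x := 1 - a) (y := 1 - b) (by linarith) (by linarith)
  linarith

lemma K_pos {a b : ℝ} (ha0 : 0 ≤ a) (ha1 : a ≤ 1) (hb0 : 0 < b) (hb1 : b < 1)
    (hne : a ≠ b) :
    0 < a * Real.log (a / b) + (1 - a) * Real.log ((1 - a) / (1 - b)) := by
  have h1 := xky_strict ha0 hb0 hne
  have h2 := xky (x := 1 - a) (y := 1 - b) (by linarith) (by linarith)
  linarith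

lemma K_expand {a b : ℝ} (ha0 : 0 ≤ a) (ha1 : a ≤ 1) (hb0 : 0 < b) (hb1 : b < 1) :
    a * Real.log (a / b) + (1 - a) * Real.log ((1 - a) / (1 - b))
      = (a * Real.log a + (1 - a) * Real.log (1 - a))
        - a * Real.log b - (1 - a) * Real.log (1 - b) := by
  have e1 : a * Real.log (a / b) = a * Real.log a - a * Real.log b := by
    rcases eq_or_lt_of_le ha0 with h | h
    · simp [← h]
    · rw [Real.log_div h.ne' hb0.ne']; ring
  have e2 : (1 - a) * Real.log ((1 - a) / (1 - b))
      = (1 - a) * Real.log (1 - a) - (1 - a) * Real.log (1 - b) := by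
    rcases eq_or_lt_of_le ha1 with h | h
    · simp [h]
    · rw [Real.log_div (by linarith) (by linarith : (1:ℝ) - b ≠ 0)]; ring
  rw [e1, e2]; ring

lemma logit_eq {b : ℝ} (hb0 : 0 < b) (hb1 : b < 1) :
    logit b = Real.log b - Real.log (1 - b) :=
  Real.log_div hb0.ne' (by linarith)

/-- Bregman three-point identity. -/
lemma K_three {a b bk : ℝ} (ha0 : 0 ≤ a) (ha1 : a ≤ 1) (hb0 : 0 < b) (hb1 : b < 1)
    (hk0 : 0 < bk) (hk1 : bk < 1) :
    a * Real.log (a / bk) + (1 - a) * Real.log ((1 - a) / (1 - bk))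
      = (b * Real.log (b / bk) + (1 - b) * Real.log ((1 - b) / (1 - bk)))
        + (a * Real.log (a / b) + (1 - a) * Real.log ((1 - a) / (1 - b)))
        + (a - b) * (logit b - logit bk) := by
  rw [K_expand ha0 ha1 hk0 hk1, K_expand hb0.le hb1.le hk0 hk1, K_expand ha0 ha1 hb0 hb1,
    logit_eq hb0 hb1, logit_eq hk0 hk1]
  ring

lemma abs_xlogx_le {x : ℝ} (h0 : 0 ≤ x) (h1 : x ≤ 1) : |x * Real.log x| ≤ 1 := by
  rcases eq_or_lt_of_le h0 with h | h
  · simp [← h]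
  · have hlog : Real.log x ≤ 0 := Real.log_nonpos h0 h1
    have h2 : Real.log x⁻¹ ≤ x⁻¹ - 1 := Real.log_le_sub_one_of_pos (by positivity)
    rw [Real.log_inv] at h2
    have h3 : -Real.log x ≤ x⁻¹ - 1 := by linarith
    have h4 : x * (-Real.log x) ≤ x * (x⁻¹ - 1) := mul_le_mul_of_nonneg_left h3 h.le
    have h5 : x * (x⁻¹ - 1) = 1 - x := by field_simp
    rw [abs_of_nonpos (mul_nonpos_of_nonneg_of_nonpos h0 hlog)]
    nlinarith

lemma K_abs_le {a b : ℝ} (ha0 : 0 ≤ a) (ha1 : a ≤ 1) (hb0 : 0 < b) (hb1 : b < 1) :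
    |a * Real.log (a / b) + (1 - a) * Real.log ((1 - a) / (1 - b))|
      ≤ 2 + |Real.log b| + |Real.log (1 - b)| := by
  rw [K_expand ha0 ha1 hb0 hb1]
  have h1 := abs_xlogx_le ha0 ha1
  have h2 := abs_xlogx_le (x := 1 - a) (by linarith) (by linarith)
  have h3 : |a * Real.log b| ≤ |Real.log b| := by
    rw [abs_mul, abs_of_nonneg ha0]
    nlinarith [abs_nonneg (Real.log b)]
  have h4 : |(1 - a) * Real.log (1 - b)| ≤ |Real.log (1 - b)| := by
    rw [abs_mul, abs_of_nonneg (by linarith : (0:ℝ) ≤ 1 - a)]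
    nlinarith [abs_nonneg (Real.log (1 - b))]
  calc |(a * Real.log a + (1 - a) * Real.log (1 - a)) - a * Real.log b
        - (1 - a) * Real.log (1 - b)|
      ≤ |a * Real.log a| + |(1 - a) * Real.log (1 - a)| + |a * Real.log b|
        + |(1 - a) * Real.log (1 - b)| := by
        calc _ ≤ |a * Real.log a + (1 - a) * Real.log (1 - a) - a * Real.log b|
            + |(1 - a) * Real.log (1 - b)| := abs_sub _ _
        _ ≤ |a * Real.log a + (1 - a) * Real.log (1 - a)| + |a * Real.log b|
            + |(1 - a) * Real.log (1 - b)| := by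
              have := abs_sub (a * Real.log a + (1 - a) * Real.log (1 - a)) (a * Real.log b)
              linarith
        _ ≤ _ := by
              have := abs_add_le (a * Real.log a) ((1 - a) * Real.log (1 - a))
              linarith
  _ ≤ _ := by linarith

lemma abs_le_of_between {lo x hi : ℝ} (h1 : lo ≤ x) (h2 : x ≤ hi) : |x| ≤ |lo| + |hi| := by
  have := abs_le_max_abs_abs h1 h2
  have := le_max_iff.mp this
  rcases this with h | h
  · have := abs_nonneg hi; linarith
  · have := abs_nonneg lo; linarith

lemma integrable_of_abs_bound {X : Type*} [MeasurableSpace X] {μ : Measure X}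
    [IsFiniteMeasure μ] {f : X → ℝ} (hm : AEStronglyMeasurable f μ) (C : ℝ)
    (h : ∀ᵐ x ∂μ, |f x| ≤ C) : Integrable f μ :=
  Integrable.mono' (integrable_const C) hm (by simpa [Real.norm_eq_abs] using h)

lemma measurable_logit : Measurable logit := by
  unfold logit
  exact Real.measurable_log.comp (measurable_id.div (measurable_const.sub measurable_id))


lemma continuous_sigmoid : Continuous _root_.sigmoid := by
  unfold _root_.sigmoid
  exact continuous_const.div
    (continuous_const.add (Real.continuous_exp.comp continuous_neg))
    (fun x => by positivity)

lemma K_abs_le' {a b lo hi : ℝ} (ha0 : 0 ≤ a) (ha1 : a ≤ 1) (hlo : 0 < lo) (hhi : hi < 1)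
    (h1 : lo ≤ b) (h2 : b ≤ hi) :
    |a * Real.log (a / b) + (1 - a) * Real.log ((1 - a) / (1 - b))|
      ≤ 2 + (|Real.log lo| + |Real.log hi|) + (|Real.log (1 - hi)| + |Real.log (1 - lo)|) := by
  have hb0 : 0 < b := lt_of_lt_of_le hlo h1
  have hb1 : b < 1 := lt_of_le_of_lt h2 hhi
  have hK := K_abs_le ha0 ha1 hb0 hb1
  have e1 : |Real.log b| ≤ |Real.log lo| + |Real.log hi| :=
    abs_le_of_between (Real.log_le_log hlo h1) (Real.log_le_log hb0 h2)
  have e2 : |Real.log (1-b)| ≤ |Real.log (1-hi)| + |Real.log (1-lo)| :=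
    abs_le_of_between (Real.log_le_log (by linarith) (by linarith))
      (Real.log_le_log (by linarith) (by linarith))
  linarith

end SPDU

/-- Primal-dual update rule: with `ρ_k` in the `L^∞`-relative interior
`Å` of the admissible set `A`, `g ∈ L^∞(Ω)`, and `α > 0`, the functional
`J(ρ) = ∫ g ρ + α⁻¹ D_φ(ρ, ρ_k)` has a unique minimizer `ρ_{k+1}` over `A`; moreover
`ρ_{k+1} ∈ Å` and there is a multiplier `μ ∈ ℝ` with
`σ⁻¹(ρ_{k+1}) = σ⁻¹(ρ_k) - α g + μ` a.e., where `μ` solves the volume correction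
equation `∫ σ(σ⁻¹(ρ_k) - α g + μ) = θ |Ω|`. -/
theorem simpl_primal_dual_update_rule
    {d : ℕ} (Ω : Set (Fin d → ℝ)) (hmeas : MeasurableSet Ω)
    (hpos : 0 < volume Ω) (hfin : volume Ω ≠ ⊤)
    (θ : ℝ) (hθ : θ ∈ Set.Ioo (0:ℝ) 1)
    (A Ai : Set (Lp ℝ ⊤ (volume.restrict Ω)))
    (hA : A = {ρ : Lp ℝ ⊤ (volume.restrict Ω) |
      (∀ᵐ x ∂(volume.restrict Ω), 0 ≤ ρ x ∧ ρ x ≤ 1) ∧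
      ∫ x, ρ x ∂(volume.restrict Ω) = θ * (volume Ω).toReal})
    (hAi : Ai = {ρ ∈ A | 0 < essInf (⇑ρ) (volume.restrict Ω) ∧
      essSup (⇑ρ) (volume.restrict Ω) < 1})
    (ρk : Lp ℝ ⊤ (volume.restrict Ω)) (hρk : ρk ∈ Ai)
    (g : Lp ℝ ⊤ (volume.restrict Ω)) (α : ℝ) (hα : 0 < α)
    (J : Lp ℝ ⊤ (volume.restrict Ω) → ℝ)
    (hJ : ∀ ρ, J ρ = (∫ x, g x * ρ x ∂(volume.restrict Ω)) + α⁻¹ *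
      ∫ x, ρ x * Real.log (ρ x / ρk x)
        + (1 - ρ x) * Real.log ((1 - ρ x) / (1 - ρk x)) ∂(volume.restrict Ω)) :
    ∃ ρn : Lp ℝ ⊤ (volume.restrict Ω),
      (ρn ∈ A ∧ ∀ ρ ∈ A, J ρn ≤ J ρ) ∧
      (∀ ρ' : Lp ℝ ⊤ (volume.restrict Ω),
        (ρ' ∈ A ∧ ∀ ρ ∈ A, J ρ' ≤ J ρ) → ρ' = ρn) ∧
      ρn ∈ Ai ∧
      ∃ c : ℝ,
        (∀ᵐ x ∂(volume.restrict Ω), logit (ρn x) = logit (ρk x) - α * g x + c) ∧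
        ∫ x, _root_.sigmoid (logit (ρk x) - α * g x + c) ∂(volume.restrict Ω)
          = θ * (volume Ω).toReal := by
  classical
  have hμuniv : (volume.restrict Ω) Set.univ = volume Ω := Measure.restrict_apply_univ _
  haveI hfinM : IsFiniteMeasure (volume.restrict Ω) := ⟨by rw [hμuniv]; exact lt_top_iff_ne_top.mpr hfin⟩
  have hμne : (volume.restrict Ω) ≠ 0 := by
    intro h
    rw [h] at hμuniv
    simp at hμuniv
    exact hpos.ne' hμuniv.symm
  haveI : (ae (volume.restrict Ω)).NeBot := MeasureTheory.ae_neBot.mpr hμne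
  have hvolR : 0 < (volume Ω).toReal := ENNReal.toReal_pos hpos.ne' hfin
  -- g bound
  have hgmem : eLpNormEssSup (⇑g) (volume.restrict Ω) < ⊤ := by
    have := (Lp.memLp g).2
    rwa [eLpNorm_exponent_top] at this
  set Cg := (eLpNormEssSup (⇑g) (volume.restrict Ω)).toReal with hCgdef
  have hCg : ∀ᵐ x ∂(volume.restrict Ω), |g x| ≤ Cg := by
    filter_upwards [ae_le_eLpNormEssSup (f := ⇑g) (μ := (volume.restrict Ω))] with x hx
    have := ENNReal.toReal_mono hgmem.ne hx
    rwa [toReal_enorm, Real.norm_eq_abs] at this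
  -- ρk facts
  rw [hAi] at hρk
  obtain ⟨hρkA, hδk, hMk⟩ := hρk
  rw [hA] at hρkA
  obtain ⟨hρk01, hρkInt⟩ := hρkA
  set δk := essInf (⇑ρk) (volume.restrict Ω) with hδkdef
  set Mk := essSup (⇑ρk) (volume.restrict Ω) with hMkdef
  have hbddk_ge : IsBoundedUnder (· ≥ ·) (ae (volume.restrict Ω)) (⇑ρk) :=
    isBoundedUnder_of_eventually_ge (a := (0:ℝ))
      (by filter_upwards [hρk01] with x hx using hx.1)
  have hbddk_le : IsBoundedUnder (· ≤ ·) (ae (volume.restrict Ω)) (⇑ρk) :=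
    isBoundedUnder_of_eventually_le (a := (1:ℝ))
      (by filter_upwards [hρk01] with x hx using hx.2)
  have hk_lb : ∀ᵐ x ∂(volume.restrict Ω), δk ≤ ρk x := ae_essInf_le hbddk_ge
  have hk_ub : ∀ᵐ x ∂(volume.restrict Ω), ρk x ≤ Mk := ae_le_essSup hbddk_le
  have hδkMk : δk ≤ Mk := by
    obtain ⟨x, h1, h2⟩ := (hk_lb.and hk_ub).exists
    exact h1.trans h2
  have hMk0 : 0 < Mk := lt_of_lt_of_le hδk hδkMk
  have hδk1 : δk < 1 := lt_of_le_of_lt hδkMk hMk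
  -- bounds on logit ρk - α g
  set Lb := logit δk - α * Cg with hLbdef
  set Ub := logit Mk + α * Cg with hUbdef
  have hh_lb : ∀ᵐ x ∂(volume.restrict Ω), Lb ≤ logit (ρk x) - α * g x := by
    filter_upwards [hk_lb, hk_ub, hCg] with x h1 h2 h3
    have hl : logit δk ≤ logit (ρk x) :=
      SPDU.logit_le_logit hδk h1 (lt_of_le_of_lt h2 hMk)
    have : α * g x ≤ α * Cg := by
      have := (abs_le.mp h3).2
      exact mul_le_mul_of_nonneg_left this hα.le
    rw [hLbdef]; linarith
  have hh_ub : ∀ᵐ x ∂(volume.restrict Ω), logit (ρk x) - α * g x ≤ Ub := by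
    filter_upwards [hk_lb, hk_ub, hCg] with x h1 h2 h3
    have hl : logit (ρk x) ≤ logit Mk :=
      SPDU.logit_le_logit (lt_of_lt_of_le hδk h1) h2 hMk
    have : -(α * Cg) ≤ α * g x := by
      have := (abs_le.mp h3).1
      nlinarith
    rw [hUbdef]; linarith
  -- the family and its integral
  set F : ℝ → (Fin d → ℝ) → ℝ := fun t x => _root_.sigmoid (logit (ρk x) - α * g x + t) with hFdef
  have habs_sig : ∀ y : ℝ, |_root_.sigmoid y| ≤ 1 :=
    fun y => abs_le.mpr ⟨by nlinarith [SPDU.sigmoid_pos y], (SPDU.sigmoid_lt_one y).le⟩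
  have hFmeas : ∀ t, AEStronglyMeasurable (F t) (volume.restrict Ω) := by
    intro t
    apply AEMeasurable.aestronglyMeasurable
    apply SPDU.continuous_sigmoid.measurable.comp_aemeasurable
    exact ((SPDU.measurable_logit.comp_aemeasurable
      (Lp.aestronglyMeasurable ρk).aemeasurable).sub
      ((Lp.aestronglyMeasurable g).aemeasurable.const_mul α)).add aemeasurable_const
  have hFint : ∀ t, Integrable (F t) (volume.restrict Ω) := fun t =>
    SPDU.integrable_of_abs_bound (hFmeas t) 1 (ae_of_all _ fun x => habs_sig _)
  have hΦcont : Continuous (fun t => ∫ x, F t x ∂(volume.restrict Ω)) := by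
    apply continuous_of_dominated hFmeas
      (fun t => ae_of_all _ fun x => by
        simpa [Real.norm_eq_abs] using habs_sig (logit (ρk x) - α * g x + t))
      (integrable_const 1)
    exact ae_of_all _ fun x =>
      SPDU.continuous_sigmoid.comp (continuous_const.add continuous_id)
  obtain ⟨hθ0, hθ1⟩ := hθ
  -- endpoints
  have hupper : θ * (volume Ω).toReal < ∫ x, F (logit ((1+θ)/2) - Lb) x ∂(volume.restrict Ω) := by
    set t2 := logit ((1+θ)/2) - Lb
    have hge : ∀ᵐ x ∂(volume.restrict Ω), (1+θ)/2 ≤ F t2 x := by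
      filter_upwards [hh_lb] with x hx
      have h1 : Lb + t2 ≤ logit (ρk x) - α * g x + t2 := by linarith
      have h2 := SPDU.sigmoid_le_sigmoid h1
      rwa [show Lb + t2 = logit ((1+θ)/2) by ring,
        SPDU.sigmoid_logit (by linarith) (by linarith)] at h2
    have hmono := integral_mono_ae (integrable_const ((1+θ)/2)) (hFint t2) hge
    rw [integral_const, measureReal_def, hμuniv, smul_eq_mul] at hmono
    nlinarith
  have hlower : ∫ x, F (logit (θ/2) - Ub) x ∂(volume.restrict Ω) < θ * (volume Ω).toReal := by
    set t1 := logit (θ/2) - Ub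
    have hge : ∀ᵐ x ∂(volume.restrict Ω), F t1 x ≤ θ/2 := by
      filter_upwards [hh_ub] with x hx
      have h1 : logit (ρk x) - α * g x + t1 ≤ Ub + t1 := by linarith
      have h2 := SPDU.sigmoid_le_sigmoid h1
      rwa [show Ub + t1 = logit (θ/2) by ring,
        SPDU.sigmoid_logit (by linarith) (by linarith)] at h2
    have hmono := integral_mono_ae (hFint t1) (integrable_const (θ/2)) hge
    rw [integral_const, measureReal_def, hμuniv, smul_eq_mul] at hmono
    nlinarith
  -- IVT
  obtain ⟨c, hcmem, hc⟩ := intermediate_value_uIcc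
    (a := logit (θ/2) - Ub) (b := logit ((1+θ)/2) - Lb) hΦcont.continuousOn
    (Set.mem_uIcc.mpr (Or.inl ⟨hlower.le, hupper.le⟩))
  -- define ρn
  have hmemρ : MemLp (F c) ⊤ (volume.restrict Ω) := memLp_top_of_bound (hFmeas c) 1
    (ae_of_all _ fun x => by simpa [Real.norm_eq_abs] using habs_sig _)
  set ρn := hmemρ.toLp (F c) with hρndef
  have hcoe : ⇑ρn =ᵐ[(volume.restrict Ω)] F c := hmemρ.coeFn_toLp
  set sL := _root_.sigmoid (Lb + c) with hsLdef
  set sU := _root_.sigmoid (Ub + c) with hsUdef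
  have hsL0 : 0 < sL := SPDU.sigmoid_pos _
  have hsU1 : sU < 1 := SPDU.sigmoid_lt_one _
  have hρn_lb : ∀ᵐ x ∂(volume.restrict Ω), sL ≤ ρn x := by
    filter_upwards [hcoe, hh_lb] with x h1 h2
    rw [h1]
    exact SPDU.sigmoid_le_sigmoid (by linarith)
  have hρn_ub : ∀ᵐ x ∂(volume.restrict Ω), ρn x ≤ sU := by
    filter_upwards [hcoe, hh_ub] with x h1 h2
    rw [h1]
    exact SPDU.sigmoid_le_sigmoid (by linarith)
  have hρn01 : ∀ᵐ x ∂(volume.restrict Ω), 0 ≤ ρn x ∧ ρn x ≤ 1 := by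
    filter_upwards [hρn_lb, hρn_ub] with x h1 h2
    exact ⟨le_trans hsL0.le h1, le_trans h2 hsU1.le⟩
  have hρnInt : ∫ x, ρn x ∂(volume.restrict Ω) = θ * (volume Ω).toReal := by
    rw [integral_congr_ae hcoe]
    exact hc
  have hlogit : ∀ᵐ x ∂(volume.restrict Ω), logit (ρn x) = logit (ρk x) - α * g x + c := by
    filter_upwards [hcoe] with x hx
    rw [hx]
    exact SPDU.logit_sigmoid _
  have hρnInf : (0:ℝ) < essInf (⇑ρn) (volume.restrict Ω) := by
    apply lt_of_lt_of_le hsL0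
    exact le_liminf_of_le
      (isCoboundedUnder_ge_of_eventually_le _
        (by filter_upwards [hρn01] with x hx using hx.2)) hρn_lb
  have hρnSup : essSup (⇑ρn) (volume.restrict Ω) < 1 := by
    apply lt_of_le_of_lt _ hsU1
    exact limsup_le_of_le
      (isCoboundedUnder_le_of_eventually_le _
        (by filter_upwards [hρn01] with x hx using hx.1)) hρn_ub
  -- measurability of Bregman integrands
  have hKmeas : ∀ u v : Lp ℝ ⊤ (volume.restrict Ω), AEStronglyMeasurable
      (fun x => u x * Real.log (u x / v x)
        + (1 - u x) * Real.log ((1 - u x) / (1 - v x))) (volume.restrict Ω) := by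
    intro u v
    have hu := (Lp.aestronglyMeasurable u).aemeasurable
    have hv := (Lp.aestronglyMeasurable v).aemeasurable
    apply AEMeasurable.aestronglyMeasurable
    exact (hu.mul (Real.measurable_log.comp_aemeasurable (hu.div hv))).add
      ((aemeasurable_const.sub hu).mul (Real.measurable_log.comp_aemeasurable
        ((aemeasurable_const.sub hu).div (aemeasurable_const.sub hv))))
  have hIntK_k : ∀ ρ : Lp ℝ ⊤ (volume.restrict Ω), (∀ᵐ x ∂(volume.restrict Ω), 0 ≤ ρ x ∧ ρ x ≤ 1) →
      Integrable (fun x => ρ x * Real.log (ρ x / ρk x)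
        + (1 - ρ x) * Real.log ((1 - ρ x) / (1 - ρk x))) (volume.restrict Ω) := by
    intro ρ h01
    apply SPDU.integrable_of_abs_bound (hKmeas ρ ρk)
      (2 + (|Real.log δk| + |Real.log Mk|) + (|Real.log (1 - Mk)| + |Real.log (1 - δk)|))
    filter_upwards [h01, hk_lb, hk_ub] with x h1 h2 h3
    exact SPDU.K_abs_le' h1.1 h1.2 hδk hMk h2 h3
  have hIntK_n : ∀ ρ : Lp ℝ ⊤ (volume.restrict Ω), (∀ᵐ x ∂(volume.restrict Ω), 0 ≤ ρ x ∧ ρ x ≤ 1) →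
      Integrable (fun x => ρ x * Real.log (ρ x / ρn x)
        + (1 - ρ x) * Real.log ((1 - ρ x) / (1 - ρn x))) (volume.restrict Ω) := by
    intro ρ h01
    apply SPDU.integrable_of_abs_bound (hKmeas ρ ρn)
      (2 + (|Real.log sL| + |Real.log sU|) + (|Real.log (1 - sU)| + |Real.log (1 - sL)|))
    filter_upwards [h01, hρn_lb, hρn_ub] with x h1 h2 h3
    exact SPDU.K_abs_le' h1.1 h1.2 hsL0 hsU1 h2 h3
  have hIntg : ∀ ρ : Lp ℝ ⊤ (volume.restrict Ω), (∀ᵐ x ∂(volume.restrict Ω), 0 ≤ ρ x ∧ ρ x ≤ 1) →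
      Integrable (fun x => g x * ρ x) (volume.restrict Ω) := by
    intro ρ h01
    apply SPDU.integrable_of_abs_bound
      (((Lp.aestronglyMeasurable g).aemeasurable.mul
        (Lp.aestronglyMeasurable ρ).aemeasurable).aestronglyMeasurable) Cg
    filter_upwards [h01, hCg] with x h1 h2
    rw [Pi.mul_apply, abs_mul]
    calc |g x| * |ρ x| ≤ Cg * 1 :=
          mul_le_mul h2 (abs_le.mpr ⟨by linarith [h1.1], h1.2⟩) (abs_nonneg _)
            (le_trans (abs_nonneg _) h2)
    _ = Cg := mul_one Cg
  have hIntρ : ∀ ρ : Lp ℝ ⊤ (volume.restrict Ω), (∀ᵐ x ∂(volume.restrict Ω), 0 ≤ ρ x ∧ ρ x ≤ 1) →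
      Integrable (⇑ρ) (volume.restrict Ω) := by
    intro ρ h01
    apply SPDU.integrable_of_abs_bound (Lp.aestronglyMeasurable ρ) 1
    filter_upwards [h01] with x h1
    exact abs_le.mpr ⟨by linarith [h1.1], h1.2⟩
  -- key Bregman identity for the objective
  have hkey : ∀ ρ : Lp ℝ ⊤ (volume.restrict Ω), ρ ∈ A →
      J ρ = J ρn + α⁻¹ * ∫ x, (ρ x * Real.log (ρ x / ρn x)
        + (1 - ρ x) * Real.log ((1 - ρ x) / (1 - ρn x))) ∂(volume.restrict Ω) := by
    intro ρ hρA
    rw [hA] at hρA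
    obtain ⟨hρ01, hρInt⟩ := hρA
    have hf1 := hIntK_k ρ hρ01
    have hf2 := hIntK_k ρn hρn01
    have hf3 := hIntK_n ρ hρ01
    have hgρ := hIntg ρ hρ01
    have hgρn := hIntg ρn hρn01
    have hρint := hIntρ ρ hρ01
    have hρnint := hIntρ ρn hρn01
    have hae : (fun x => ρ x * Real.log (ρ x / ρk x)
        + (1 - ρ x) * Real.log ((1 - ρ x) / (1 - ρk x)))
        =ᵐ[(volume.restrict Ω)] (fun x => ((ρn x * Real.log (ρn x / ρk x)
            + (1 - ρn x) * Real.log ((1 - ρn x) / (1 - ρk x)))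
          + (ρ x * Real.log (ρ x / ρn x)
            + (1 - ρ x) * Real.log ((1 - ρ x) / (1 - ρn x))))
          + (((-α) * (g x * ρ x) - (-α) * (g x * ρn x)) + (c * ρ x - c * ρn x))) := by
      filter_upwards [hρ01, hk_lb, hk_ub, hρn_lb, hρn_ub, hlogit]
        with x h01 hlb hub hnlb hnub hlg
      have h3 := SPDU.K_three (a := ρ x) (b := ρn x) (bk := ρk x) h01.1 h01.2
        (lt_of_lt_of_le hsL0 hnlb) (lt_of_le_of_lt hnub hsU1)
        (lt_of_lt_of_le hδk hlb) (lt_of_le_of_lt hub hMk)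
      rw [h3, hlg]
      ring
    have hint4a : Integrable (fun x => (-α) * (g x * ρ x) - (-α) * (g x * ρn x)) (volume.restrict Ω) :=
      (hgρ.const_mul _).sub (hgρn.const_mul _)
    have hint4b : Integrable (fun x => c * ρ x - c * ρn x) (volume.restrict Ω) :=
      (hρint.const_mul c).sub (hρnint.const_mul c)
    have hsplit : ∫ x, (ρ x * Real.log (ρ x / ρk x)
          + (1 - ρ x) * Real.log ((1 - ρ x) / (1 - ρk x))) ∂(volume.restrict Ω)
        = ((∫ x, (ρn x * Real.log (ρn x / ρk x)
            + (1 - ρn x) * Real.log ((1 - ρn x) / (1 - ρk x))) ∂(volume.restrict Ω))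
          + ∫ x, (ρ x * Real.log (ρ x / ρn x)
            + (1 - ρ x) * Real.log ((1 - ρ x) / (1 - ρn x))) ∂(volume.restrict Ω))
          + ((-α) * ∫ x, g x * ρ x ∂(volume.restrict Ω)
            - (-α) * ∫ x, g x * ρn x ∂(volume.restrict Ω)) := by
      have eA : ∫ x, (((ρn x * Real.log (ρn x / ρk x)
            + (1 - ρn x) * Real.log ((1 - ρn x) / (1 - ρk x)))
          + (ρ x * Real.log (ρ x / ρn x)
            + (1 - ρ x) * Real.log ((1 - ρ x) / (1 - ρn x))))
          + (((-α) * (g x * ρ x) - (-α) * (g x * ρn x))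
            + (c * ρ x - c * ρn x))) ∂(volume.restrict Ω)
          = ((∫ x, (ρn x * Real.log (ρn x / ρk x)
              + (1 - ρn x) * Real.log ((1 - ρn x) / (1 - ρk x))) ∂(volume.restrict Ω))
            + ∫ x, (ρ x * Real.log (ρ x / ρn x)
              + (1 - ρ x) * Real.log ((1 - ρ x) / (1 - ρn x))) ∂(volume.restrict Ω))
            + ((∫ x, ((-α) * (g x * ρ x) - (-α) * (g x * ρn x)) ∂(volume.restrict Ω))
              + ∫ x, (c * ρ x - c * ρn x) ∂(volume.restrict Ω)) := by
        exact (integral_add (hf2.add hf3) (hint4a.add hint4b)).trans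
          (congrArg₂ (· + ·) (integral_add hf2 hf3) (integral_add hint4a hint4b))
      have eB : ∫ x, ((-α) * (g x * ρ x) - (-α) * (g x * ρn x)) ∂(volume.restrict Ω)
          = (-α) * (∫ x, g x * ρ x ∂(volume.restrict Ω))
            - (-α) * ∫ x, g x * ρn x ∂(volume.restrict Ω) := by
        exact (integral_sub (hgρ.const_mul _) (hgρn.const_mul _)).trans
          (congrArg₂ (· - ·) (integral_const_mul _ _) (integral_const_mul _ _))
      have eC : ∫ x, (c * ρ x - c * ρn x) ∂(volume.restrict Ω) = 0 := by
        rw [(integral_sub (hρint.const_mul c) (hρnint.const_mul c)).trans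
          (congrArg₂ (· - ·) (integral_const_mul _ _) (integral_const_mul _ _)), hρInt, hρnInt]
        ring
      rw [integral_congr_ae hae, eA, eB, eC]
      ring
    rw [hJ ρ, hJ ρn, hsplit]
    field_simp
    ring
  have hnn : ∀ ρ : Lp ℝ ⊤ (volume.restrict Ω), (∀ᵐ x ∂(volume.restrict Ω), 0 ≤ ρ x ∧ ρ x ≤ 1) →
      (0 : (Fin d → ℝ) → ℝ) ≤ᵐ[(volume.restrict Ω)] (fun x => ρ x * Real.log (ρ x / ρn x)
        + (1 - ρ x) * Real.log ((1 - ρ x) / (1 - ρn x))) := by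
    intro ρ h01
    filter_upwards [h01, hρn_lb, hρn_ub] with x h1 h2 h3
    exact SPDU.K_nonneg h1.1 h1.2 (lt_of_lt_of_le hsL0 h2) (lt_of_le_of_lt h3 hsU1)
  have hmin : ∀ ρ ∈ A, J ρn ≤ J ρ := by
    intro ρ hρA
    rw [hkey ρ hρA]
    have h01 : ∀ᵐ x ∂(volume.restrict Ω), 0 ≤ ρ x ∧ ρ x ≤ 1 := by
      rw [hA] at hρA; exact hρA.1
    have hI : 0 ≤ ∫ x, (ρ x * Real.log (ρ x / ρn x)
        + (1 - ρ x) * Real.log ((1 - ρ x) / (1 - ρn x))) ∂(volume.restrict Ω) :=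
      integral_nonneg_of_ae (hnn ρ h01)
    have := mul_nonneg (inv_pos.mpr hα).le hI
    linarith
  have hρnA : ρn ∈ A := by
    rw [hA]
    exact ⟨hρn01, hρnInt⟩
  refine ⟨ρn, ⟨hρnA, hmin⟩, ?_, ?_, c, hlogit, ?_⟩
  · rintro ρ' ⟨hρ'A, hρ'min⟩
    have h01 : ∀ᵐ x ∂(volume.restrict Ω), 0 ≤ ρ' x ∧ ρ' x ≤ 1 := by
      have := hρ'A; rw [hA] at this; exact this.1
    have heq := hkey ρ' hρ'A
    have hJeq : J ρ' = J ρn := le_antisymm (hρ'min ρn hρnA) (hmin ρ' hρ'A)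
    have hI0 : ∫ x, (ρ' x * Real.log (ρ' x / ρn x)
        + (1 - ρ' x) * Real.log ((1 - ρ' x) / (1 - ρn x))) ∂(volume.restrict Ω) = 0 := by
      have hz : α⁻¹ * ∫ x, (ρ' x * Real.log (ρ' x / ρn x)
          + (1 - ρ' x) * Real.log ((1 - ρ' x) / (1 - ρn x))) ∂(volume.restrict Ω) = 0 := by
        rw [hJeq] at heq
        linarith
      rcases mul_eq_zero.mp hz with h | h
      · exact absurd h (inv_ne_zero hα.ne')
      · exact h
    have hz := (integral_eq_zero_iff_of_nonneg_ae (hnn ρ' h01) (hIntK_n ρ' h01)).mp hI0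
    apply Lp.ext
    filter_upwards [hz, h01, hρn_lb, hρn_ub] with x h0 h1 h2 h3
    by_contra hne
    have hp := SPDU.K_pos h1.1 h1.2 (lt_of_lt_of_le hsL0 h2) (lt_of_le_of_lt h3 hsU1) hne
    simp only [Pi.zero_apply] at h0
    linarith
  · rw [hAi]
    exact ⟨hρnA, hρnInf, hρnSup⟩
  · simp only [hFdef] at hc
    exact hc
end

section
/- Let (ρ_k) ⊂ L¹(Ω) with 0 ≤ ρ_k ≤ 1 a.e. for all k, and let ρ* ∈ L¹(Ω) take only the values 0 and 1 a.e. in Ω. Suppose ∫_Ω ρ_k g dx → ∫_Ω ρ* g dx for every g ∈ L^∞(Ω). Then there exists a subsequence (ρ_{k_j}) such that ρ_{k_j} → ρ* almost everywhere in Ω and ‖ρ_{k_j} − ρ*‖_{L^p(Ω)} → 0 for every p ∈ [1, ∞). -/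
open MeasureTheory Real Set Filter
open scoped ENNReal Topology Classical

/-- Auxiliary general version over an arbitrary measure. -/
theorem binary_limit_strong_convergence_aux {α : Type*} [MeasurableSpace α]
    {μ : Measure α}
    (ρk : ℕ → Lp ℝ 1 μ)
    (hρk : ∀ k, ∀ᵐ x ∂μ, 0 ≤ ρk k x ∧ ρk k x ≤ 1)
    (ρs : Lp ℝ 1 μ)
    (hbin : ∀ᵐ x ∂μ, ρs x = 0 ∨ ρs x = 1)
    (hweak : ∀ g : Lp ℝ ⊤ μ,
      Filter.Tendsto (fun k => ∫ x, ρk k x * g x ∂μ)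
        Filter.atTop (nhds (∫ x, ρs x * g x ∂μ))) :
    ∃ φ : ℕ → ℕ, StrictMono φ ∧
      (∀ᵐ x ∂μ,
        Filter.Tendsto (fun j => ρk (φ j) x) Filter.atTop (nhds (ρs x))) ∧
      ∀ p : ℝ≥0∞, 1 ≤ p → p ≠ ⊤ →
        Filter.Tendsto
          (fun j => eLpNorm (fun x => ρk (φ j) x - ρs x) p μ)
          Filter.atTop (nhds 0) := by
  -- basic integrability facts
  have hρs_int : Integrable (fun x => ρs x) μ := L1.integrable_coeFn ρs
  have hρk_int : ∀ k, Integrable (fun x => ρk k x) μ := fun k => L1.integrable_coeFn (ρk k)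
  have hρs_bdd : ∀ᵐ x ∂μ, ‖ρs x‖ ≤ 1 := by
    filter_upwards [hbin] with x hx
    rcases hx with h | h <;> simp [h]
  have hρs_mem : MemLp (fun x => ρs x) ⊤ μ :=
    memLp_top_of_bound (Lp.aestronglyMeasurable ρs) 1 hρs_bdd
  have hmul_int : ∀ k, Integrable (fun x => ρk k x * ρs x) μ := by
    intro k
    refine Integrable.bdd_mul (c := 1) hρs_int (Lp.aestronglyMeasurable (ρk k)) ?_
    filter_upwards [hρk k] with x hx
    rw [Real.norm_eq_abs, abs_le]
    exact ⟨by linarith [hx.1], hx.2⟩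
  -- testing against g = 1
  have hA : Tendsto (fun k => ∫ x, ρk k x ∂μ) atTop (𝓝 (∫ x, ρs x ∂μ)) := by
    have h1 : MemLp (fun _ : α => (1 : ℝ)) ⊤ μ := memLp_top_const 1
    have hg1 := h1.coeFn_toLp
    have key : ∀ f : Lp ℝ 1 μ, (∫ x, f x * (h1.toLp _) x ∂μ) = ∫ x, f x ∂μ := by
      intro f
      refine integral_congr_ae ?_
      filter_upwards [hg1] with x h
      rw [h, mul_one]
    have := hweak (h1.toLp _)
    rwa [key ρs, funext (fun k => key (ρk k))] at this
  -- testing against g = ρs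
  have hB : Tendsto (fun k => ∫ x, ρk k x * ρs x ∂μ) atTop (𝓝 (∫ x, ρs x ∂μ)) := by
    have hg2 := hρs_mem.coeFn_toLp
    have key : ∀ f : Lp ℝ 1 μ, (∫ x, f x * (hρs_mem.toLp _) x ∂μ) = ∫ x, f x * ρs x ∂μ := by
      intro f
      refine integral_congr_ae ?_
      filter_upwards [hg2] with x h
      rw [h]
    have hsq : (∫ x, ρs x * ρs x ∂μ) = ∫ x, ρs x ∂μ := by
      refine integral_congr_ae ?_
      filter_upwards [hbin] with x hx
      rcases hx with h | h <;> simp [h]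
    have := hweak (hρs_mem.toLp _)
    rwa [key ρs, hsq, funext (fun k => key (ρk k))] at this
  -- the L¹ distance
  have hIdent : ∀ k, (∫ x, |ρk k x - ρs x| ∂μ)
      = (∫ x, ρk k x ∂μ) - 2 * (∫ x, ρk k x * ρs x ∂μ) + ∫ x, ρs x ∂μ := by
    intro k
    have h1 : (∫ x, |ρk k x - ρs x| ∂μ)
        = ∫ x, (ρk k x - 2 * (ρk k x * ρs x)) + ρs x ∂μ := by
      refine integral_congr_ae ?_
      filter_upwards [hρk k, hbin] with x hx hb
      rcases hb with h | h
      · rw [h, abs_of_nonneg (by linarith [hx.1])]; ring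
      · rw [h, abs_of_nonpos (by linarith [hx.2])]; ring
    have hint1 : Integrable (fun x => ρk k x - 2 * (ρk k x * ρs x)) μ := by
      exact (hρk_int k).sub ((hmul_int k).const_mul 2)
    rw [h1, integral_add hint1 hρs_int,
      integral_sub (hρk_int k) ((hmul_int k).const_mul 2), integral_const_mul]
  have hI : Tendsto (fun k => ∫ x, |ρk k x - ρs x| ∂μ) atTop (𝓝 0) := by
    have h := (hA.sub (hB.const_mul 2)).add
      (tendsto_const_nhds (x := ∫ x, ρs x ∂μ) (f := atTop (α := ℕ)))
    have h0 : (∫ x, ρs x ∂μ) - 2 * (∫ x, ρs x ∂μ) + (∫ x, ρs x ∂μ) = 0 := by ring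
    rw [h0] at h
    simpa [hIdent] using h
  -- L¹ norm convergence
  have hsub_int : ∀ k, Integrable (fun x => ρk k x - ρs x) μ :=
    fun k => (hρk_int k).sub hρs_int
  have hL1 : Tendsto (fun k => eLpNorm (fun x => ρk k x - ρs x) 1 μ) atTop (𝓝 0) := by
    have he : ∀ k, eLpNorm (fun x => ρk k x - ρs x) 1 μ
        = ENNReal.ofReal (∫ x, |ρk k x - ρs x| ∂μ) := by
      intro k
      rw [eLpNorm_one_eq_lintegral_enorm, ← ofReal_integral_norm_eq_lintegral_enorm (hsub_int k)]
      simp [Real.norm_eq_abs]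
    have := (ENNReal.continuous_ofReal.tendsto 0).comp hI
    simpa [he, Function.comp_def] using this
  -- convergence in measure and a.e. subsequence
  have hmeasconv : TendstoInMeasure μ (fun k x => ρk k x) atTop (fun x => ρs x) := by
    refine tendstoInMeasure_of_tendsto_eLpNorm (p := 1) one_ne_zero
      (fun n => Lp.aestronglyMeasurable _) (Lp.aestronglyMeasurable ρs) ?_
    exact hL1
  obtain ⟨φ, hφ, hae⟩ := hmeasconv.exists_seq_tendsto_ae
  refine ⟨φ, hφ, hae, ?_⟩
  intro p hp hptop
  have hL1' : Tendsto (fun j => eLpNorm (fun x => ρk (φ j) x - ρs x) 1 μ) atTop (𝓝 0) :=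
    hL1.comp hφ.tendsto_atTop
  have hpne : p ≠ 0 := fun h => by simp [h] at hp
  have hp1 : (1 : ℝ) ≤ p.toReal := by
    have := ENNReal.toReal_mono hptop hp
    simpa using this
  have hppos : (0 : ℝ) < p.toReal := lt_of_lt_of_le one_pos hp1
  -- key bound: ‖f‖_p ≤ ‖f‖_1 ^ (1/p) when |f| ≤ 1 a.e.
  have hbound : ∀ j, eLpNorm (fun x => ρk (φ j) x - ρs x) p μ
      ≤ (eLpNorm (fun x => ρk (φ j) x - ρs x) 1 μ) ^ (1 / p.toReal) := by
    intro j
    rw [eLpNorm_eq_lintegral_rpow_enorm_toReal hpne hptop, eLpNorm_one_eq_lintegral_enorm]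
    refine ENNReal.rpow_le_rpow ?_ (by positivity)
    refine lintegral_mono_ae ?_
    filter_upwards [hρk (φ j), hbin] with x hx hb
    have habs : |ρk (φ j) x - ρs x| ≤ 1 := by
      rcases hb with h | h
      · rw [h, abs_le]; constructor <;> [linarith [hx.1]; linarith [hx.2]]
      · rw [h, abs_le]; constructor <;> [linarith [hx.2]; linarith [hx.1]]
    have hnn : ‖ρk (φ j) x - ρs x‖₊ ≤ 1 := by
      rw [← NNReal.coe_le_coe, coe_nnnorm, NNReal.coe_one, Real.norm_eq_abs]
      exact habs
    have hle1 : (‖ρk (φ j) x - ρs x‖₊ : ℝ≥0∞) ≤ 1 := by exact_mod_cast hnn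
    calc (‖ρk (φ j) x - ρs x‖₊ : ℝ≥0∞) ^ p.toReal
        ≤ (‖ρk (φ j) x - ρs x‖₊ : ℝ≥0∞) ^ (1 : ℝ) :=
          ENNReal.rpow_le_rpow_of_exponent_ge hle1 hp1
      _ = _ := by rw [ENNReal.rpow_one]; rfl
  have hrhs : Tendsto (fun j => (eLpNorm (fun x => ρk (φ j) x - ρs x) 1 μ) ^ (1 / p.toReal))
      atTop (𝓝 0) := by
    have hc := (ENNReal.continuous_rpow_const (y := 1 / p.toReal)).tendsto 0
    have h0 : (0 : ℝ≥0∞) ^ (1 / p.toReal) = 0 :=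
      ENNReal.zero_rpow_of_pos (by positivity)
    have := hc.comp hL1'
    rw [h0] at this
    simpa [Function.comp_def] using this
  exact tendsto_of_tendsto_of_tendsto_of_le_of_le tendsto_const_nhds hrhs
    (fun j => zero_le) hbound

/-- if `(ρ_k) ⊂ L¹(Ω)` with `0 ≤ ρ_k ≤ 1` a.e. converges weakly in
`L¹(Ω)` to a binary-valued `ρ*` (values `0` and `1` a.e.), then there is a
subsequence converging to `ρ*` almost everywhere and in `L^p(Ω)`-norm for every
`p ∈ [1, ∞)`. -/
theorem binary_limit_strong_convergence
    {d : ℕ} (Ω : Set (Fin d → ℝ)) (hmeas : MeasurableSet Ω)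
    (hpos : 0 < volume Ω) (hfin : volume Ω ≠ ⊤)
    (ρk : ℕ → Lp ℝ 1 (volume.restrict Ω))
    (hρk : ∀ k, ∀ᵐ x ∂(volume.restrict Ω), 0 ≤ ρk k x ∧ ρk k x ≤ 1)
    (ρs : Lp ℝ 1 (volume.restrict Ω))
    (hbin : ∀ᵐ x ∂(volume.restrict Ω), ρs x = 0 ∨ ρs x = 1)
    (hweak : ∀ g : Lp ℝ ⊤ (volume.restrict Ω),
      Filter.Tendsto (fun k => ∫ x, ρk k x * g x ∂(volume.restrict Ω))
        Filter.atTop (nhds (∫ x, ρs x * g x ∂(volume.restrict Ω)))) :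
    ∃ φ : ℕ → ℕ, StrictMono φ ∧
      (∀ᵐ x ∂(volume.restrict Ω),
        Filter.Tendsto (fun j => ρk (φ j) x) Filter.atTop (nhds (ρs x))) ∧
      ∀ p : ℝ≥0∞, 1 ≤ p → p ≠ ⊤ →
        Filter.Tendsto
          (fun j => eLpNorm (fun x => ρk (φ j) x - ρs x) p (volume.restrict Ω))
          Filter.atTop (nhds 0) :=
  binary_limit_strong_convergence_aux ρk hρk ρs hbin hweak
end

section
/- Let ρ ∈ L^∞(Ω) with 0 < ess inf ρ and ess sup ρ < 1, satisfying ∫_Ω ρ dx = θ|Ω| for some 0 < θ < 1, and let v ∈ L^∞(Ω). Define e(α, μ) := ∫_Ω (σ(σ⁻¹(ρ) − α v + μ) − θ) dx. Then for every (α, μ) ∈ ℝ², the partial derivative ∂e/∂μ exists and equals ∫_Ω σ'(σ⁻¹(ρ) − α v + μ) dx > 0, where σ'(x) = σ(x)(1−σ(x)), and there exists a differentiable function g : ℝ → ℝ with g(0) = 0 such that e(α, g(α)) = 0 for all α ∈ ℝ, with derivative g'(α) = (∫_Ω σ'(σ⁻¹(ρ) − α v + g(α)) v dx) / (∫_Ω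 σ'(σ⁻¹(ρ) − α v + g(α)) dx). -/
open MeasureTheory Real Set Filter
open scoped ENNReal Topology Classical

noncomputable def dsigmoid (x : ℝ) : ℝ := _root_.sigmoid x * (1 - _root_.sigmoid x)

lemma one_add_exp_pos (x : ℝ) : 0 < 1 + Real.exp (-x) := by positivity

lemma _root_.sigmoid_pos (x : ℝ) : 0 < _root_.sigmoid x := by
  unfold _root_.sigmoid; positivity

lemma _root_.sigmoid_lt_one (x : ℝ) : _root_.sigmoid x < 1 := by
  unfold _root_.sigmoid
  rw [div_lt_one (one_add_exp_pos x)]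
  linarith [Real.exp_pos (-x)]

lemma dsigmoid_pos (x : ℝ) : 0 < dsigmoid x :=
  mul_pos (_root_.sigmoid_pos x) (by linarith [_root_.sigmoid_lt_one x])

lemma dsigmoid_le_one (x : ℝ) : dsigmoid x ≤ 1 := by
  have h1 := _root_.sigmoid_pos x; have h2 := _root_.sigmoid_lt_one x
  unfold dsigmoid
  nlinarith

lemma _root_.sigmoid_strictMono : StrictMono _root_.sigmoid := by
  intro a b hab
  unfold _root_.sigmoid
  apply div_lt_div_of_pos_left one_pos (one_add_exp_pos _)
  have := Real.exp_lt_exp.2 (neg_lt_neg hab)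
  linarith

lemma _root_.hasDerivAt_sigmoid (x : ℝ) : HasDerivAt _root_.sigmoid (dsigmoid x) x := by
  have h : HasDerivAt (fun y : ℝ => 1 + Real.exp (-y)) (-Real.exp (-x)) x := by
    simpa using (hasDerivAt_neg x).exp.const_add 1
  have h2 := h.inv (ne_of_gt (one_add_exp_pos x))
  have h3 : _root_.sigmoid = fun y : ℝ => (1 + Real.exp (-y))⁻¹ := by
    funext y; simp [_root_.sigmoid, one_div]
  rw [h3]
  refine h2.congr_deriv ?_
  unfold dsigmoid _root_.sigmoid
  field_simp
  ring

lemma sigmoid_logit {x : ℝ} (h0 : 0 < x) (h1 : x < 1) : _root_.sigmoid (logit x) = x := by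
  unfold _root_.sigmoid logit
  have hx : 0 < x / (1 - x) := div_pos h0 (by linarith)
  rw [← Real.log_inv, Real.exp_log (by positivity)]
  field_simp
  ring

lemma logit_le_logit {a b : ℝ} (h0 : 0 < a) (hab : a ≤ b) (h1 : b < 1) : logit a ≤ logit b := by
  unfold logit
  apply Real.log_le_log (div_pos h0 (by linarith))
  apply div_le_div₀ (by linarith) hab (by linarith) (by linarith)

lemma dsigmoid_lower {K y : ℝ} (hy : |y| ≤ K) :
    _root_.sigmoid (-K) * (1 - _root_.sigmoid K) ≤ dsigmoid y := by
  rw [abs_le] at hy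
  have h1 : _root_.sigmoid (-K) ≤ _root_.sigmoid y := _root_.sigmoid_strictMono.monotone hy.1
  have h2 : _root_.sigmoid y ≤ _root_.sigmoid K := _root_.sigmoid_strictMono.monotone hy.2
  have := _root_.sigmoid_pos (-K); have := _root_.sigmoid_lt_one K
  unfold dsigmoid
  nlinarith

lemma sigmoid_lipschitz : LipschitzWith 1 _root_.sigmoid := by
  apply lipschitzWith_of_nnnorm_deriv_le (fun x => (_root_.hasDerivAt_sigmoid x).differentiableAt)
  intro x
  rw [(_root_.hasDerivAt_sigmoid x).deriv, ← NNReal.coe_le_coe, coe_nnnorm, Real.norm_eq_abs,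
    abs_of_pos (dsigmoid_pos x)]
  exact dsigmoid_le_one x

lemma sigmoid_abs_sub (s t : ℝ) : |_root_.sigmoid s - _root_.sigmoid t| ≤ |s - t| := by
  have := sigmoid_lipschitz.dist_le_mul s t
  simpa [Real.dist_eq] using this

lemma continuous_sigmoid' : Continuous _root_.sigmoid :=
  Differentiable.continuous (fun x => (_root_.hasDerivAt_sigmoid x).differentiableAt)

lemma measurable_logit : Measurable logit :=
  Real.measurable_log.comp (measurable_id.div (measurable_const.sub measurable_id))

lemma Linfty_ae_bound {α : Type*} {ms : MeasurableSpace α} {μ : Measure α} (f : Lp ℝ ⊤ μ) :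
    ∀ᵐ x ∂μ, |f x| ≤ (eLpNormEssSup (⇑f) μ).toReal := by
  have h : eLpNormEssSup (⇑f) μ < ⊤ := by
    have := Lp.eLpNorm_lt_top f
    rwa [eLpNorm_exponent_top] at this
  filter_upwards [ae_le_eLpNormEssSup (f := ⇑f) (μ := μ)] with x hx
  have : ((‖f x‖₊ : ℝ≥0∞)).toReal ≤ (eLpNormEssSup (⇑f) μ).toReal :=
    ENNReal.toReal_mono h.ne hx
  simpa using this

lemma Linfty_ae_between {X : Type*} {ms : MeasurableSpace X} {μ : Measure X} (f : Lp ℝ ⊤ μ) :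
    ∀ᵐ x ∂μ, essInf (⇑f) μ ≤ f x ∧ f x ≤ essSup (⇑f) μ := by
  have hbdd : IsBoundedUnder (· ≤ ·) (ae μ) (⇑f) :=
    ⟨(eLpNormEssSup (⇑f) μ).toReal, by
      rw [eventually_map]
      filter_upwards [Linfty_ae_bound f] with x hx; exact (abs_le.1 hx).2⟩
  have hbdd' : IsBoundedUnder (· ≥ ·) (ae μ) (⇑f) :=
    ⟨-(eLpNormEssSup (⇑f) μ).toReal, by
      rw [eventually_map]
      filter_upwards [Linfty_ae_bound f] with x hx; exact (abs_le.1 hx).1⟩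
  exact (ae_essInf_le hbdd').and (ae_le_essSup hbdd)

set_option maxHeartbeats 8000000 in
set_option synthInstance.maxHeartbeats 400000 in
theorem aux_icf {X : Type*} [MeasurableSpace X] (m : Measure X) [IsFiniteMeasure m]
    (hm0 : m ≠ 0) (ρ v : X → ℝ)
    (hρm : AEMeasurable ρ m) (hvm : AEMeasurable v m)
    (r s : ℝ) (hr0 : 0 < r) (hs1 : s < 1)
    (hρae : ∀ᵐ x ∂m, r ≤ ρ x ∧ ρ x ≤ s)
    (N : ℝ) (hvae : ∀ᵐ x ∂m, |v x| ≤ N)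
    (θ : ℝ) (hθ : θ ∈ Set.Ioo (0:ℝ) 1)
    (hvol : ∫ x, ρ x ∂m = θ * (m Set.univ).toReal) :
    (∀ α c : ℝ,
      HasDerivAt (fun c' => ∫ x, (_root_.sigmoid (logit (ρ x) - α * v x + c') - θ) ∂m)
        (∫ x, dsigmoid (logit (ρ x) - α * v x + c) ∂m) c ∧
      0 < ∫ x, dsigmoid (logit (ρ x) - α * v x + c) ∂m) ∧
    ∃ g : ℝ → ℝ, g 0 = 0 ∧
      (∀ α, (∫ x, (_root_.sigmoid (logit (ρ x) - α * v x + g α) - θ) ∂m) = 0) ∧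
      ∀ α, HasDerivAt g
        ((∫ x, dsigmoid (logit (ρ x) - α * v x + g α) * v x ∂m) /
          (∫ x, dsigmoid (logit (ρ x) - α * v x + g α) ∂m)) α := by
  haveI : (ae m).NeBot := ae_neBot.2 hm0
  set V : ℝ := (m Set.univ).toReal with hVdef
  have hV : 0 < V := by
    apply ENNReal.toReal_pos _ (measure_ne_top m _)
    simpa using hm0
  have hN0 : 0 ≤ N := by
    obtain ⟨x, hx⟩ := hvae.exists
    exact le_trans (abs_nonneg _) hx
  have hrs : r ≤ s := by
    obtain ⟨x, hx1, hx2⟩ := hρae.exists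
    linarith
  have hr1 : r < 1 := lt_of_le_of_lt hrs hs1
  have hs0 : 0 < s := lt_of_lt_of_le hr0 hrs
  set M : ℝ := max |logit r| |logit s| with hMdef
  have hM0 : 0 ≤ M := le_trans (abs_nonneg _) (le_max_left _ _)
  have hlogitae : ∀ᵐ x ∂m, |logit (ρ x)| ≤ M := by
    filter_upwards [hρae] with x hx
    obtain ⟨h1, h2⟩ := hx
    have hl1 : logit r ≤ logit (ρ x) := logit_le_logit hr0 h1 (lt_of_le_of_lt h2 hs1)
    have hl2 : logit (ρ x) ≤ logit s := logit_le_logit (lt_of_lt_of_le hr0 h1) h2 hs1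
    rw [abs_le]
    constructor
    · calc -M ≤ -|logit r| := by simp [hMdef]
        _ ≤ logit r := neg_abs_le _
        _ ≤ _ := hl1
    · exact hl2.trans ((le_abs_self _).trans (le_max_right _ _))
  have hbm : ∀ a c : ℝ, AEMeasurable (fun x => logit (ρ x) - a * v x + c) m := fun a c =>
    ((measurable_logit.comp_aemeasurable hρm).sub (hvm.const_mul a)).add_const c
  have hsmeas : ∀ a c : ℝ,
      AEStronglyMeasurable (fun x => _root_.sigmoid (logit (ρ x) - a * v x + c)) m := fun a c =>
    (continuous_sigmoid'.measurable.comp_aemeasurable (hbm a c)).aestronglyMeasurable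
  have hdmeas : ∀ a c : ℝ,
      AEStronglyMeasurable (fun x => dsigmoid (logit (ρ x) - a * v x + c)) m := fun a c =>
    (((continuous_sigmoid'.measurable.comp_aemeasurable (hbm a c)).mul
      ((measurable_const.sub continuous_sigmoid'.measurable).comp_aemeasurable
        (hbm a c)))).aestronglyMeasurable
  have hint1 : ∀ a c : ℝ,
      Integrable (fun x => _root_.sigmoid (logit (ρ x) - a * v x + c) - θ) m := by
    intro a c
    refine Integrable.mono' (integrable_const (1 + |θ|)) ((hsmeas a c).sub
      aestronglyMeasurable_const) (Eventually.of_forall fun x => ?_)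
    have h1 := _root_.sigmoid_pos (logit (ρ x) - a * v x + c)
    have h2 := _root_.sigmoid_lt_one (logit (ρ x) - a * v x + c)
    rw [Real.norm_eq_abs]
    calc |_root_.sigmoid (logit (ρ x) - a * v x + c) - θ|
        ≤ |_root_.sigmoid (logit (ρ x) - a * v x + c)| + |θ| := abs_sub _ _
      _ ≤ 1 + |θ| := by rw [abs_of_pos h1]; linarith
  have hint2 : ∀ a c : ℝ,
      Integrable (fun x => dsigmoid (logit (ρ x) - a * v x + c)) m := by
    intro a c
    refine Integrable.mono' (integrable_const 1) (hdmeas a c) (Eventually.of_forall fun x => ?_)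
    rw [Real.norm_eq_abs, abs_of_pos (dsigmoid_pos _)]
    exact dsigmoid_le_one _
  have hint3 : ∀ a c : ℝ,
      Integrable (fun x => dsigmoid (logit (ρ x) - a * v x + c) * v x) m := by
    intro a c
    refine Integrable.mono' (integrable_const N) ((hdmeas a c).mul
      hvm.aestronglyMeasurable) ?_
    filter_upwards [hvae] with x hx
    rw [Real.norm_eq_abs, abs_mul, abs_of_pos (dsigmoid_pos _)]
    calc dsigmoid (logit (ρ x) - a * v x + c) * |v x| ≤ 1 * |v x| := by
          apply mul_le_mul_of_nonneg_right (dsigmoid_le_one _) (abs_nonneg _)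
      _ = |v x| := one_mul _
      _ ≤ N := hx
  have hIlow : ∀ (w : X → ℝ) (δ : ℝ), Integrable w m → (∀ᵐ x ∂m, δ ≤ w x) →
      δ * V ≤ ∫ x, w x ∂m := by
    intro w δ hw hb
    have := integral_mono_ae (integrable_const δ) hw hb
    rw [integral_const] at this
    simpa [smul_eq_mul, mul_comm, measureReal_def] using this
  have hIhigh : ∀ (w : X → ℝ) (δ : ℝ), Integrable w m → (∀ᵐ x ∂m, w x ≤ δ) →
      (∫ x, w x ∂m) ≤ δ * V := by
    intro w δ hw hb
    have := integral_mono_ae hw (integrable_const δ) hb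
    rw [integral_const] at this
    simpa [smul_eq_mul, mul_comm, measureReal_def] using this
  have habs : ∀ a c : ℝ, ∀ᵐ x ∂m, |logit (ρ x) - a * v x + c| ≤ M + |a| * N + |c| := by
    intro a c
    filter_upwards [hlogitae, hvae] with x h1 h2
    calc |logit (ρ x) - a * v x + c| ≤ |logit (ρ x) - a * v x| + |c| := abs_add_le _ _
      _ ≤ |logit (ρ x)| + |a * v x| + |c| := by linarith [abs_sub (logit (ρ x)) (a * v x)]
      _ ≤ M + |a| * N + |c| := by
          rw [abs_mul]
          have : |a| * |v x| ≤ |a| * N := mul_le_mul_of_nonneg_left h2 (abs_nonneg a)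
          linarith
  have hpart1 : ∀ α c : ℝ,
      HasDerivAt (fun c' => ∫ x, (_root_.sigmoid (logit (ρ x) - α * v x + c') - θ) ∂m)
        (∫ x, dsigmoid (logit (ρ x) - α * v x + c) ∂m) c := by
    intro α c
    have := hasDerivAt_integral_of_dominated_loc_of_deriv_le (μ := m)
      (F := fun c' x => _root_.sigmoid (logit (ρ x) - α * v x + c') - θ)
      (F' := fun c' x => dsigmoid (logit (ρ x) - α * v x + c'))
      (x₀ := c) (bound := fun _ => 1) (s := Metric.ball c 1) (Metric.ball_mem_nhds _ one_pos)
      (Eventually.of_forall fun c' => (hsmeas α c').sub aestronglyMeasurable_const)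
      (hint1 α c) (hdmeas α c)
      (Eventually.of_forall fun x => fun c' _ => by
        rw [Real.norm_eq_abs, abs_of_pos (dsigmoid_pos _)]
        exact dsigmoid_le_one _)
      (integrable_const 1)
      (Eventually.of_forall fun x => fun c' _ => by
        have h0 : HasDerivAt (fun c'' : ℝ => logit (ρ x) - α * v x + c'') 1 c' := by
          simpa using (hasDerivAt_id c').const_add (logit (ρ x) - α * v x)
        have := ((_root_.hasDerivAt_sigmoid (logit (ρ x) - α * v x + c')).comp c' h0).sub_const θ
        simpa using this)
    exact this.2
  have hpospt : ∀ α c : ℝ, 0 < ∫ x, dsigmoid (logit (ρ x) - α * v x + c) ∂m := by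
    intro α c
    set K : ℝ := M + |α| * N + |c| with hK
    have hδ : 0 < _root_.sigmoid (-K) * (1 - _root_.sigmoid K) :=
      mul_pos (_root_.sigmoid_pos _) (by linarith [_root_.sigmoid_lt_one K])
    calc (0:ℝ) < _root_.sigmoid (-K) * (1 - _root_.sigmoid K) * V := mul_pos hδ hV
      _ ≤ _ := by
          apply hIlow _ _ (hint2 α c)
          filter_upwards [habs α c] with x hx
          exact dsigmoid_lower hx
  refine ⟨fun α c => ⟨hpart1 α c, hpospt α c⟩, ?_⟩
  -- strict monotonicity and continuity in c
  have hmono : ∀ a : ℝ, StrictMono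
      (fun c => ∫ x, (_root_.sigmoid (logit (ρ x) - a * v x + c) - θ) ∂m) := by
    intro a
    apply strictMono_of_deriv_pos
    intro c
    rw [(hpart1 a c).deriv]
    exact hpospt a c
  have hcont : ∀ a : ℝ, Continuous
      (fun c => ∫ x, (_root_.sigmoid (logit (ρ x) - a * v x + c) - θ) ∂m) := fun a =>
    Differentiable.continuous (fun c => (hpart1 a c).differentiableAt)
  have hwabs : ∀ a : ℝ, ∀ᵐ x ∂m, |logit (ρ x) - a * v x| ≤ M + |a| * N := by
    intro a
    filter_upwards [habs a 0] with x hx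
    simpa using hx
  have hσθ : _root_.sigmoid (logit θ) = θ := sigmoid_logit hθ.1 hθ.2
  -- existence of a root for every a
  have hex : ∀ a : ℝ, ∃ c : ℝ,
      (∫ x, (_root_.sigmoid (logit (ρ x) - a * v x + c) - θ) ∂m) = 0 := by
    intro a
    set K : ℝ := M + |a| * N with hK
    have hK0 : 0 ≤ K := add_nonneg hM0 (mul_nonneg (abs_nonneg a) hN0)
    have hup : 0 < ∫ x, (_root_.sigmoid (logit (ρ x) - a * v x + (K + (logit θ + 1))) - θ) ∂m := by
      have hd : 0 < _root_.sigmoid (logit θ + 1) - θ := by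
        have := _root_.sigmoid_strictMono (show logit θ < logit θ + 1 by linarith)
        rw [hσθ] at this
        linarith
      calc (0:ℝ) < (_root_.sigmoid (logit θ + 1) - θ) * V := mul_pos hd hV
        _ ≤ _ := by
          apply hIlow _ _ (hint1 a _)
          filter_upwards [hwabs a] with x hx
          have h1 : -K ≤ logit (ρ x) - a * v x := neg_le_of_abs_le hx
          have h2 : _root_.sigmoid (logit θ + 1)
              ≤ _root_.sigmoid (logit (ρ x) - a * v x + (K + (logit θ + 1))) :=
            _root_.sigmoid_strictMono.monotone (by linarith)
          linarith
    have hdown : (∫ x, (_root_.sigmoid (logit (ρ x) - a * v x + (-K + (logit θ - 1))) - θ) ∂m) < 0 := by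
      have hd : _root_.sigmoid (logit θ - 1) - θ < 0 := by
        have := _root_.sigmoid_strictMono (show logit θ - 1 < logit θ by linarith)
        rw [hσθ] at this
        linarith
      calc (∫ x, (_root_.sigmoid (logit (ρ x) - a * v x + (-K + (logit θ - 1))) - θ) ∂m)
          ≤ (_root_.sigmoid (logit θ - 1) - θ) * V := by
            apply hIhigh _ _ (hint1 a _)
            filter_upwards [hwabs a] with x hx
            have h1 : logit (ρ x) - a * v x ≤ K := le_of_abs_le hx
            have h2 : _root_.sigmoid (logit (ρ x) - a * v x + (-K + (logit θ - 1)))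
                ≤ _root_.sigmoid (logit θ - 1) :=
              _root_.sigmoid_strictMono.monotone (by linarith)
            linarith
        _ < 0 := mul_neg_of_neg_of_pos hd hV
    have hle : -K + (logit θ - 1) ≤ K + (logit θ + 1) := by linarith
    obtain ⟨c, _, hc⟩ := intermediate_value_Icc hle ((hcont a).continuousOn)
      (Set.mem_Icc.2 ⟨hdown.le, hup.le⟩)
    exact ⟨c, hc⟩
  set g : ℝ → ℝ := fun a => Classical.choose (hex a) with hgdef
  have hgroot : ∀ a : ℝ, (∫ x, (_root_.sigmoid (logit (ρ x) - a * v x + g a) - θ) ∂m) = 0 :=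
    fun a => Classical.choose_spec (hex a)
  have hρint : Integrable ρ m := by
    refine Integrable.mono' (integrable_const (max |r| |s|)) hρm.aestronglyMeasurable ?_
    filter_upwards [hρae] with x hx
    obtain ⟨h1, h2⟩ := hx
    rw [Real.norm_eq_abs, abs_le]
    constructor
    · have h3 : -(max |r| |s|) ≤ -|r| := by simp
      have h4 : -|r| ≤ r := neg_abs_le r
      linarith
    · exact h2.trans ((le_abs_self s).trans (le_max_right _ _))
  have h00 : (∫ x, (_root_.sigmoid (logit (ρ x) - 0 * v x + 0) - θ) ∂m) = 0 := by
    have hcongr : ∀ᵐ x ∂m,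
        _root_.sigmoid (logit (ρ x) - 0 * v x + 0) - θ = ρ x - θ := by
      filter_upwards [hρae] with x hx
      obtain ⟨h1, h2⟩ := hx
      have hsl : _root_.sigmoid (logit (ρ x)) = ρ x :=
        sigmoid_logit (lt_of_lt_of_le hr0 h1) (lt_of_le_of_lt h2 hs1)
      rw [show logit (ρ x) - 0 * v x + 0 = logit (ρ x) by ring, hsl]
    rw [integral_congr_ae hcongr, integral_sub hρint (integrable_const θ), hvol,
      integral_const]
    simp [smul_eq_mul, mul_comm, measureReal_def, hVdef]
  have hg0 : g 0 = 0 := (hmono 0).injective ((hgroot 0).trans h00.symm)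
  refine ⟨g, hg0, hgroot, ?_⟩
  intro α₀
  set c₀ : ℝ := g α₀ with hc₀
  have hroot₀ : (∫ x, (_root_.sigmoid (logit (ρ x) - α₀ * v x + c₀) - θ) ∂m) = 0 := by
    rw [hc₀]; exact hgroot α₀
  set A : ℝ := ∫ x, dsigmoid (logit (ρ x) - α₀ * v x + c₀) * v x ∂m with hA
  set B : ℝ := ∫ x, dsigmoid (logit (ρ x) - α₀ * v x + c₀) ∂m with hB
  have hBpos : 0 < B := hpospt α₀ c₀
  set Φ : X → (ℝ × ℝ) →L[ℝ] ℝ := fun x =>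
    dsigmoid (logit (ρ x) - α₀ * v x + c₀) •
      (ContinuousLinearMap.snd ℝ ℝ ℝ - v x • ContinuousLinearMap.fst ℝ ℝ ℝ) with hΦ
  have hCLM : ∀ (x : X) (t : ℝ), |t| ≤ 1 → |v x| ≤ N →
      ‖(t • (ContinuousLinearMap.snd ℝ ℝ ℝ - v x • ContinuousLinearMap.fst ℝ ℝ ℝ)
        : (ℝ × ℝ) →L[ℝ] ℝ)‖ ≤ 1 + N := by
    intro x t ht hx
    have hN0' : (0:ℝ) ≤ 1 + N := by
      have := (abs_nonneg (v x)).trans hx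
      linarith
    apply ContinuousLinearMap.opNorm_le_bound _ hN0'
    intro q
    have h1 : |q.1| ≤ ‖q‖ := by simpa [Real.norm_eq_abs] using norm_fst_le q
    have h2 : |q.2| ≤ ‖q‖ := by simpa [Real.norm_eq_abs] using norm_snd_le q
    have happ : (t • (ContinuousLinearMap.snd ℝ ℝ ℝ - v x • ContinuousLinearMap.fst ℝ ℝ ℝ)) q
        = t * (q.2 - v x * q.1) := by
      simp [ContinuousLinearMap.sub_apply, ContinuousLinearMap.smul_apply]
      try ring
    rw [happ, Real.norm_eq_abs, abs_mul]
    have h3 : |q.2 - v x * q.1| ≤ (1 + N) * ‖q‖ := by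
      calc |q.2 - v x * q.1| ≤ |q.2| + |v x * q.1| := abs_sub _ _
        _ ≤ ‖q‖ + N * ‖q‖ := by
            rw [abs_mul]
            have h4 : |v x| * |q.1| ≤ N * ‖q‖ :=
              mul_le_mul hx h1 (abs_nonneg _) ((abs_nonneg _).trans hx)
            linarith
        _ = (1 + N) * ‖q‖ := by ring
    calc |t| * |q.2 - v x * q.1| ≤ 1 * ((1 + N) * ‖q‖) :=
        mul_le_mul ht h3 (abs_nonneg _) one_pos.le
      _ = (1 + N) * ‖q‖ := one_mul _
  have hΦmeas : AEStronglyMeasurable Φ m :=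
    (hdmeas α₀ c₀).smul (aestronglyMeasurable_const.sub
      (hvm.aestronglyMeasurable.smul aestronglyMeasurable_const))
  have hΦint : Integrable Φ m := by
    refine Integrable.mono' (integrable_const (1 + N)) hΦmeas ?_
    filter_upwards [hvae] with x hx
    show ‖dsigmoid (logit (ρ x) - α₀ * v x + c₀) •
        (ContinuousLinearMap.snd ℝ ℝ ℝ - v x • ContinuousLinearMap.fst ℝ ℝ ℝ)‖ ≤ 1 + N
    exact hCLM x _ (by rw [abs_of_pos (dsigmoid_pos _)]; exact dsigmoid_le_one _) hx
  have hE : HasFDerivAt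
      (fun p : ℝ × ℝ => ∫ x, (_root_.sigmoid (logit (ρ x) - p.1 * v x + p.2) - θ) ∂m)
      (∫ x, Φ x ∂m) (α₀, c₀) := by
    refine hasFDerivAt_integral_of_dominated_of_fderiv_le (μ := m)
      (x₀ := ((α₀ : ℝ), c₀))
      (F := fun (p : ℝ × ℝ) x => _root_.sigmoid (logit (ρ x) - p.1 * v x + p.2) - θ)
      (F' := fun (p : ℝ × ℝ) x => dsigmoid (logit (ρ x) - p.1 * v x + p.2) •
        (ContinuousLinearMap.snd ℝ ℝ ℝ - v x • ContinuousLinearMap.fst ℝ ℝ ℝ))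
      (bound := fun _ => 1 + N) (s := Metric.ball ((α₀ : ℝ), c₀) 1) (Metric.ball_mem_nhds _ one_pos)
      (Eventually.of_forall fun p => (hsmeas p.1 p.2).sub aestronglyMeasurable_const)
      (hint1 α₀ c₀) hΦmeas ?_ (integrable_const (1 + N)) ?_
    · filter_upwards [hvae] with x hx
      intro p _
      exact hCLM x _ (by rw [abs_of_pos (dsigmoid_pos _)]; exact dsigmoid_le_one _) hx
    · refine Eventually.of_forall fun x => fun p _ => ?_
      have hfun : (fun q : ℝ × ℝ => logit (ρ x) - q.1 * v x + q.2)
          = fun q : ℝ × ℝ => logit (ρ x) +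
            (ContinuousLinearMap.snd ℝ ℝ ℝ - v x • ContinuousLinearMap.fst ℝ ℝ ℝ) q := by
        funext q
        simp [ContinuousLinearMap.sub_apply, ContinuousLinearMap.smul_apply]
        ring
      have hl : HasFDerivAt (fun q : ℝ × ℝ => logit (ρ x) - q.1 * v x + q.2)
          (ContinuousLinearMap.snd ℝ ℝ ℝ - v x • ContinuousLinearMap.fst ℝ ℝ ℝ) p := by
        rw [hfun]
        exact ((ContinuousLinearMap.snd ℝ ℝ ℝ
          - v x • ContinuousLinearMap.fst ℝ ℝ ℝ).hasFDerivAt).const_add _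
      have := ((_root_.hasDerivAt_sigmoid (logit (ρ x) - p.1 * v x + p.2)).comp_hasFDerivAt
        p hl).sub_const θ
      simpa [Function.comp_def] using this
  have hLapp : ∀ q : ℝ × ℝ, (∫ x, Φ x ∂m) q = B * q.2 - A * q.1 := by
    intro q
    rw [ContinuousLinearMap.integral_apply hΦint]
    have h1 : (fun x => (Φ x) q) = fun x =>
        q.2 * dsigmoid (logit (ρ x) - α₀ * v x + c₀)
          - q.1 * (dsigmoid (logit (ρ x) - α₀ * v x + c₀) * v x) := by
      funext x
      have happ : Φ x = dsigmoid (logit (ρ x) - α₀ * v x + c₀) •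
          (ContinuousLinearMap.snd ℝ ℝ ℝ - v x • ContinuousLinearMap.fst ℝ ℝ ℝ) := rfl
      rw [happ]
      simp [ContinuousLinearMap.sub_apply, ContinuousLinearMap.smul_apply]
      ring
    rw [h1, integral_sub ((hint2 α₀ c₀).const_mul _) ((hint3 α₀ c₀).const_mul _),
      integral_const_mul, integral_const_mul, ← hA, ← hB]
    ring
  -- Lipschitz in the first variable
  have hLipa : ∀ (c a a' : ℝ),
      |(∫ x, (_root_.sigmoid (logit (ρ x) - a * v x + c) - θ) ∂m)
        - ∫ x, (_root_.sigmoid (logit (ρ x) - a' * v x + c) - θ) ∂m| ≤ N * V * |a - a'| := by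
    intro c a a'
    rw [← integral_sub (hint1 a c) (hint1 a' c)]
    have hb : ∀ᵐ x ∂m, ‖(_root_.sigmoid (logit (ρ x) - a * v x + c) - θ)
        - (_root_.sigmoid (logit (ρ x) - a' * v x + c) - θ)‖ ≤ N * |a - a'| := by
      filter_upwards [hvae] with x hx
      rw [Real.norm_eq_abs]
      rw [show (_root_.sigmoid (logit (ρ x) - a * v x + c) - θ)
          - (_root_.sigmoid (logit (ρ x) - a' * v x + c) - θ)
          = _root_.sigmoid (logit (ρ x) - a * v x + c) - _root_.sigmoid (logit (ρ x) - a' * v x + c)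
        by ring]
      calc |_root_.sigmoid (logit (ρ x) - a * v x + c) - _root_.sigmoid (logit (ρ x) - a' * v x + c)|
          ≤ |(logit (ρ x) - a * v x + c) - (logit (ρ x) - a' * v x + c)| :=
            sigmoid_abs_sub _ _
        _ = |v x| * |a - a'| := by
            rw [show (logit (ρ x) - a * v x + c) - (logit (ρ x) - a' * v x + c)
              = v x * (a' - a) by ring, abs_mul, abs_sub_comm a' a]
        _ ≤ N * |a - a'| := mul_le_mul_of_nonneg_right hx (abs_nonneg _)
    have hnn := norm_integral_le_of_norm_le (integrable_const (N * |a - a'|)) hb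
    rw [integral_const, Real.norm_eq_abs] at hnn
    calc |∫ x, ((_root_.sigmoid (logit (ρ x) - a * v x + c) - θ)
          - (_root_.sigmoid (logit (ρ x) - a' * v x + c) - θ)) ∂m|
        ≤ (m Set.univ).toReal • (N * |a - a'|) := hnn
      _ = N * V * |a - a'| := by rw [smul_eq_mul, ← hVdef]; ring
  -- uniform positive lower bound on the c-derivative near (α₀, c₀)
  set K₂ : ℝ := M + (|α₀| + 1) * N + (|c₀| + 1) with hK₂
  set ε₂ : ℝ := _root_.sigmoid (-K₂) * (1 - _root_.sigmoid K₂) * V with hε₂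
  have hε₂pos : 0 < ε₂ :=
    mul_pos (mul_pos (_root_.sigmoid_pos _) (by linarith [_root_.sigmoid_lt_one K₂])) hV
  have hderivlb : ∀ a c' : ℝ, |a - α₀| ≤ 1 → |c' - c₀| ≤ 1 →
      ε₂ ≤ ∫ x, dsigmoid (logit (ρ x) - a * v x + c') ∂m := by
    intro a c' ha hc
    apply hIlow _ _ (hint2 a c')
    filter_upwards [habs a c'] with x hx
    apply dsigmoid_lower
    have h1 : |a| ≤ |α₀| + 1 := by
      calc |a| = |α₀ + (a - α₀)| := by ring_nf
        _ ≤ |α₀| + |a - α₀| := abs_add_le _ _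
        _ ≤ |α₀| + 1 := by linarith
    have h2 : |c'| ≤ |c₀| + 1 := by
      calc |c'| = |c₀ + (c' - c₀)| := by ring_nf
        _ ≤ |c₀| + |c' - c₀| := abs_add_le _ _
        _ ≤ |c₀| + 1 := by linarith
    refine hx.trans ?_
    rw [hK₂]
    nlinarith
  have hkey : ∀ a : ℝ, |a - α₀| ≤ 1 → ∀ c c' : ℝ, c ∈ Icc (c₀ - 1) (c₀ + 1) →
      c' ∈ Icc (c₀ - 1) (c₀ + 1) → c ≤ c' →
      ε₂ * (c' - c) ≤ (∫ x, (_root_.sigmoid (logit (ρ x) - a * v x + c') - θ) ∂m)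
        - ∫ x, (_root_.sigmoid (logit (ρ x) - a * v x + c) - θ) ∂m := by
    intro a ha c c' hc hc' hcc
    refine (convex_Icc (c₀ - 1) (c₀ + 1)).mul_sub_le_image_sub_of_le_deriv
      ((hcont a).continuousOn)
      (fun y _ => ((hpart1 a y).differentiableAt).differentiableWithinAt) ?_ c hc c' hc' hcc
    intro y hy
    rw [interior_Icc] at hy
    rw [(hpart1 a y).deriv]
    refine hderivlb a y ha ?_
    rw [abs_le]
    exact ⟨by linarith [hy.1], by linarith [hy.2]⟩
  set L₁ : ℝ := N * V with hL₁
  have hL₁0 : 0 ≤ L₁ := mul_nonneg hN0 hV.le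
  set CC : ℝ := (L₁ + 1) / ε₂ with hCC
  have hCC0 : 0 < CC := div_pos (by linarith) hε₂pos
  set δ₀ : ℝ := min 1 (ε₂ / (2 * (L₁ + 1))) with hδ₀
  have hδ₀pos : 0 < δ₀ := lt_min one_pos (div_pos hε₂pos (by linarith))
  have hεC : ε₂ * CC = L₁ + 1 := by
    rw [hCC]
    field_simp
  have hloc : ∀ h : ℝ, |h| ≤ δ₀ → |g (α₀ + h) - c₀| ≤ CC * |h| := by
    intro h hh
    have hh1 : |h| ≤ 1 := hh.trans (min_le_left _ _)
    have hh2 : |h| ≤ ε₂ / (2 * (L₁ + 1)) := hh.trans (min_le_right _ _)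
    have ha1 : |(α₀ + h) - α₀| ≤ 1 := by simpa using hh1
    have hChalf : CC * |h| ≤ 1 / 2 := by
      calc CC * |h| ≤ CC * (ε₂ / (2 * (L₁ + 1))) := mul_le_mul_of_nonneg_left hh2 hCC0.le
        _ = 1 / 2 := by
            rw [hCC]
            field_simp
    have hbase : |(∫ x, (_root_.sigmoid (logit (ρ x) - (α₀ + h) * v x + c₀) - θ) ∂m)| ≤ L₁ * |h| := by
      have h2 := hLipa c₀ (α₀ + h) α₀
      rw [hroot₀] at h2
      simpa using h2
    have hstep : ∀ s : ℝ, CC * |h| < s → s ≤ 1 → |g (α₀ + h) - c₀| < s := by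
      intro s hs1 hs2
      have hs0 : 0 < s := lt_of_le_of_lt (mul_nonneg hCC0.le (abs_nonneg h)) hs1
      have hbase' := abs_le.1 hbase
      have hmul : ε₂ * (CC * |h|) < ε₂ * s := mul_lt_mul_of_pos_left hs1 hε₂pos
      have hup : 0 < ∫ x, (_root_.sigmoid (logit (ρ x) - (α₀ + h) * v x + (c₀ + s)) - θ) ∂m := by
        have k1 := hkey (α₀ + h) ha1 c₀ (c₀ + s) (Set.mem_Icc.2 ⟨by linarith, by linarith⟩)
          (Set.mem_Icc.2 ⟨by linarith, by linarith⟩) (by linarith)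
        nlinarith [abs_nonneg h]
      have hdown : (∫ x, (_root_.sigmoid (logit (ρ x) - (α₀ + h) * v x + (c₀ - s)) - θ) ∂m) < 0 := by
        have k1 := hkey (α₀ + h) ha1 (c₀ - s) c₀ (Set.mem_Icc.2 ⟨by linarith, by linarith⟩)
          (Set.mem_Icc.2 ⟨by linarith, by linarith⟩) (by linarith)
        nlinarith [abs_nonneg h]
      have hlt1 : g (α₀ + h) < c₀ + s := by
        apply (hmono (α₀ + h)).lt_iff_lt.mp
        show (∫ x, (_root_.sigmoid (logit (ρ x) - (α₀ + h) * v x + g (α₀ + h)) - θ) ∂m)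
          < ∫ x, (_root_.sigmoid (logit (ρ x) - (α₀ + h) * v x + (c₀ + s)) - θ) ∂m
        rw [hgroot (α₀ + h)]
        exact hup
      have hlt2 : c₀ - s < g (α₀ + h) := by
        apply (hmono (α₀ + h)).lt_iff_lt.mp
        show (∫ x, (_root_.sigmoid (logit (ρ x) - (α₀ + h) * v x + (c₀ - s)) - θ) ∂m)
          < ∫ x, (_root_.sigmoid (logit (ρ x) - (α₀ + h) * v x + g (α₀ + h)) - θ) ∂m
        rw [hgroot (α₀ + h)]
        exact hdown
      rw [abs_lt]
      exact ⟨by linarith, by linarith⟩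
    by_contra hcon
    push_neg at hcon
    rcases le_or_gt |g (α₀ + h) - c₀| 1 with hle | hgt
    · exact absurd (hstep _ hcon hle) (lt_irrefl _)
    · have := hstep 1 (by linarith) le_rfl
      linarith
  -- assemble the derivative of g
  have hq : ∀ᶠ h : ℝ in 𝓝 0, |g (α₀ + h) - c₀| ≤ CC * |h| := by
    have hball : ∀ᶠ h : ℝ in 𝓝 0, |h| ≤ δ₀ := by
      filter_upwards [Metric.ball_mem_nhds (0:ℝ) hδ₀pos] with h hh
      rw [Metric.mem_ball, Real.dist_eq, sub_zero] at hh
      exact hh.le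
    filter_upwards [hball] with h hh using hloc h hh
  have htend : Tendsto (fun h : ℝ => ((h, g (α₀ + h) - c₀) : ℝ × ℝ)) (𝓝 0)
      (𝓝 (0, 0)) := by
    apply Tendsto.prodMk_nhds tendsto_id
    apply squeeze_zero_norm' (a := fun h : ℝ => CC * |h|)
    · filter_upwards [hq] with h hh
      rw [Real.norm_eq_abs]
      exact hh
    · have : Tendsto (fun h : ℝ => CC * |h|) (𝓝 0) (𝓝 (CC * |0|)) :=
        (continuous_const.mul continuous_abs).tendsto 0
      simpa using this
  have hγO : (fun h : ℝ => ((h, g (α₀ + h) - c₀) : ℝ × ℝ)) =O[𝓝 0] fun h => h := by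
    rw [Asymptotics.isBigO_iff]
    refine ⟨max 1 CC, ?_⟩
    filter_upwards [hq] with h hh
    simp only [Prod.norm_def, Real.norm_eq_abs]
    apply max_le
    · calc |h| = 1 * |h| := (one_mul _).symm
        _ ≤ max 1 CC * |h| := mul_le_mul_of_nonneg_right (le_max_left _ _) (abs_nonneg _)
    · calc |g (α₀ + h) - c₀| ≤ CC * |h| := hh
        _ ≤ max 1 CC * |h| := mul_le_mul_of_nonneg_right (le_max_right _ _) (abs_nonneg _)
  have hlittle := hasFDerivAt_iff_isLittleO_nhds_zero.1 hE
  have htend' : Tendsto (fun h : ℝ => ((h, g (α₀ + h) - c₀) : ℝ × ℝ)) (𝓝 0)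
      (𝓝 (0 : ℝ × ℝ)) := htend
  have hcomp := (hlittle.comp_tendsto htend').trans_isBigO hγO
  have hsimp : (fun h : ℝ =>
        (fun p : ℝ × ℝ => ∫ x, (_root_.sigmoid (logit (ρ x) - p.1 * v x + p.2) - θ) ∂m)
          (((α₀ : ℝ), c₀) + (h, g (α₀ + h) - c₀))
        - (fun p : ℝ × ℝ => ∫ x, (_root_.sigmoid (logit (ρ x) - p.1 * v x + p.2) - θ) ∂m)
          (((α₀ : ℝ), c₀))
        - (∫ x, Φ x ∂m) (h, g (α₀ + h) - c₀))
      =ᶠ[𝓝 (0:ℝ)] fun h : ℝ => -(B * (g (α₀ + h) - c₀) - A * h) := by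
    refine Eventually.of_forall fun h => ?_
    have e1 : (((α₀ : ℝ), c₀) + (h, g (α₀ + h) - c₀) : ℝ × ℝ) = (α₀ + h, g (α₀ + h)) := by
      rw [Prod.mk_add_mk]
      exact Prod.ext rfl (by ring)
    have hL2 : (∫ x, Φ x ∂m) (h, g (α₀ + h) - c₀) = B * (g (α₀ + h) - c₀) - A * h := by
      rw [hLapp]
    show (∫ x, (_root_.sigmoid (logit (ρ x) - (α₀ + h) * v x + (c₀ + (g (α₀ + h) - c₀))) - θ) ∂m)
        - (∫ x, (_root_.sigmoid (logit (ρ x) - α₀ * v x + c₀) - θ) ∂m)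
        - (∫ x, Φ x ∂m) (h, g (α₀ + h) - c₀)
      = -(B * (g (α₀ + h) - c₀) - A * h)
    rw [hL2, show c₀ + (g (α₀ + h) - c₀) = g (α₀ + h) by ring, hgroot (α₀ + h), hroot₀]
    ring
  have h2 : (fun h : ℝ => B * (g (α₀ + h) - c₀) - A * h) =o[𝓝 (0:ℝ)] fun h => h :=
    Asymptotics.IsLittleO.of_neg_left ((hcomp.congr' hsimp (EventuallyEq.refl _ _)))
  have h3 := h2.const_mul_left (B⁻¹)
  rw [hasDerivAt_iff_isLittleO_nhds_zero]
  have heq2 : (fun h : ℝ => B⁻¹ * (B * (g (α₀ + h) - c₀) - A * h))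
      =ᶠ[𝓝 (0:ℝ)] fun h : ℝ => g (α₀ + h) - g α₀ - h • (A / B) := by
    refine Eventually.of_forall fun h => ?_
    show B⁻¹ * (B * (g (α₀ + h) - c₀) - A * h) = g (α₀ + h) - g α₀ - h • (A / B)
    rw [smul_eq_mul, ← hc₀]
    field_simp
  exact h3.congr' heq2 (EventuallyEq.refl _ _)


set_option maxHeartbeats 1000000 in
/-- with `ρ ∈ L^∞(Ω)`, `0 < ess inf ρ`, `ess sup ρ < 1`,
`∫ ρ = θ |Ω|`, `v ∈ L^∞(Ω)`, and
`e(α, μ) = ∫ (σ(σ⁻¹(ρ) - α v + μ) - θ)`, the partial derivative `∂e/∂μ` exists,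
equals `∫ σ'(σ⁻¹(ρ) - α v + μ) > 0`, and there is a differentiable `g : ℝ → ℝ` with
`g(0) = 0`, `e(α, g(α)) = 0` for all `α`, and
`g'(α) = (∫ σ'(σ⁻¹(ρ) - α v + g(α)) v) / (∫ σ'(σ⁻¹(ρ) - α v + g(α)))`. -/
theorem volume_correction_implicit_function
    {d : ℕ} (Ω : Set (Fin d → ℝ)) (hmeas : MeasurableSet Ω)
    (hpos : 0 < volume Ω) (hfin : volume Ω ≠ ⊤)
    (ρ : Lp ℝ ⊤ (volume.restrict Ω))
    (hρ0 : 0 < essInf (⇑ρ) (volume.restrict Ω))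
    (hρ1 : essSup (⇑ρ) (volume.restrict Ω) < 1)
    (θ : ℝ) (hθ : θ ∈ Set.Ioo (0:ℝ) 1)
    (hvol : ∫ x, ρ x ∂(volume.restrict Ω) = θ * (volume Ω).toReal)
    (v : Lp ℝ ⊤ (volume.restrict Ω))
    (e : ℝ → ℝ → ℝ)
    (he : ∀ α c, e α c =
      ∫ x, (_root_.sigmoid (logit (ρ x) - α * v x + c) - θ) ∂(volume.restrict Ω)) :
    (∀ α c : ℝ,
      HasDerivAt (fun c' => e α c')
        (∫ x, dsigmoid (logit (ρ x) - α * v x + c) ∂(volume.restrict Ω)) c ∧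
      0 < ∫ x, dsigmoid (logit (ρ x) - α * v x + c) ∂(volume.restrict Ω)) ∧
    ∃ g : ℝ → ℝ, g 0 = 0 ∧ (∀ α, e α (g α) = 0) ∧
      ∀ α, HasDerivAt g
        ((∫ x, dsigmoid (logit (ρ x) - α * v x + g α) * v x ∂(volume.restrict Ω)) /
          (∫ x, dsigmoid (logit (ρ x) - α * v x + g α) ∂(volume.restrict Ω))) α := by
  have heq : e = fun α c =>
      ∫ x, (_root_.sigmoid (logit (ρ x) - α * v x + c) - θ) ∂(volume.restrict Ω) := by
    funext α c; exact he α c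
  subst heq
  haveI : IsFiniteMeasure (volume.restrict Ω) :=
    ⟨by rw [Measure.restrict_apply_univ]; exact hfin.lt_top⟩
  have hm0 : volume.restrict Ω ≠ 0 := by
    intro h0
    have : volume Ω = 0 := by
      rw [← Measure.restrict_apply_univ, h0]; simp
    exact hpos.ne' this
  have hρae : ∀ᵐ x ∂(volume.restrict Ω),
      essInf (⇑ρ) (volume.restrict Ω) ≤ ρ x ∧ ρ x ≤ essSup (⇑ρ) (volume.restrict Ω) :=
    Linfty_ae_between ρ
  have hvol' : ∫ x, ρ x ∂(volume.restrict Ω) = θ * ((volume.restrict Ω) Set.univ).toReal := by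
    rwa [Measure.restrict_apply_univ]
  exact aux_icf (volume.restrict Ω) hm0 (⇑ρ) (⇑v)
    (Lp.aestronglyMeasurable ρ).aemeasurable (Lp.aestronglyMeasurable v).aemeasurable
    _ _ hρ0 hρ1 hρae _ (Linfty_ae_bound v) θ hθ hvol'
end

section
/- Let 0 < θ < 1, let ρ_k, ρ_{k+1} ∈ Å (the L^∞-relative interior of the admissible set A), let g ∈ L^∞(Ω), α > 0, and let F : A → ℝ. Assume the first-order optimality condition ∫_Ω (g + α⁻¹(σ⁻¹(ρ_{k+1}) − σ⁻¹(ρ_k)))(ρ − ρ_{k+1}) dx ≥ 0 for all ρ ∈ A, and the Bregman sufficient decrease condition F(ρ_{k+1}) ≤ F(ρ_k) + ∫_Ω g (ρ_{k+1} − ρ_k) dx + α⁻¹ D_φ(ρ_{k+1}, ρ_k). Then F(ρ_{k+1}) ≤ F(ρ_k) − α⁻¹ D_φ(ρ_k, ρ_{k+1}); in particular, if ρ_{k+1} ≠ ρ_k then F(ρ_{k+1}) < F(ρ_k). -/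
open MeasureTheory Real Set Filter
open scoped ENNReal Topology Classical

/-- pointwise Bregman term -/
noncomputable def breg (p q : ℝ) : ℝ :=
  p * Real.log (p / q) + (1 - p) * Real.log ((1 - p) / (1 - q))

lemma breg_nonneg {p q : ℝ} (hp0 : 0 < p) (hp1 : p < 1) (hq0 : 0 < q) (hq1 : q < 1) :
    0 ≤ breg p q := by
  have h1 : Real.log (q / p) ≤ q / p - 1 := Real.log_le_sub_one_of_pos (by positivity)
  have h2 : Real.log ((1 - q) / (1 - p)) ≤ (1 - q) / (1 - p) - 1 :=
    Real.log_le_sub_one_of_pos (div_pos (by linarith) (by linarith))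
  have e1 : Real.log (p / q) = - Real.log (q / p) := by
    rw [Real.log_div hp0.ne' hq0.ne', Real.log_div hq0.ne' hp0.ne']; ring
  have e2 : Real.log ((1 - p) / (1 - q)) = - Real.log ((1 - q) / (1 - p)) := by
    rw [Real.log_div (by linarith) (by linarith), Real.log_div (by linarith) (by linarith)]; ring
  have hp1' : (0:ℝ) < 1 - p := by linarith
  have key1 : p * Real.log (q / p) ≤ q - p := by
    have := mul_le_mul_of_nonneg_left h1 hp0.le
    calc p * Real.log (q / p) ≤ p * (q / p - 1) := this
      _ = q - p := by field_simp
  have key2 : (1 - p) * Real.log ((1 - q) / (1 - p)) ≤ p - q := by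
    have := mul_le_mul_of_nonneg_left h2 hp1'.le
    calc (1 - p) * Real.log ((1 - q) / (1 - p)) ≤ (1 - p) * ((1 - q) / (1 - p) - 1) := this
      _ = p - q := by field_simp; ring
  unfold breg
  rw [e1, e2]
  nlinarith

lemma breg_pos {p q : ℝ} (hp0 : 0 < p) (hp1 : p < 1) (hq0 : 0 < q) (hq1 : q < 1)
    (hne : p ≠ q) : 0 < breg p q := by
  have hqp : q / p ≠ 1 := by
    intro h; apply hne; field_simp at h; linarith
  have h1 : Real.log (q / p) < q / p - 1 := Real.log_lt_sub_one_of_pos (by positivity) hqp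
  have hqp2 : (1 - q) / (1 - p) ≠ 1 := by
    intro h; apply hne
    have hp1' : (1:ℝ) - p ≠ 0 := by linarith
    field_simp at h; linarith
  have h2 : Real.log ((1 - q) / (1 - p)) < (1 - q) / (1 - p) - 1 :=
    Real.log_lt_sub_one_of_pos (div_pos (by linarith) (by linarith)) hqp2
  have e1 : Real.log (p / q) = - Real.log (q / p) := by
    rw [Real.log_div hp0.ne' hq0.ne', Real.log_div hq0.ne' hp0.ne']; ring
  have e2 : Real.log ((1 - p) / (1 - q)) = - Real.log ((1 - q) / (1 - p)) := by
    rw [Real.log_div (by linarith) (by linarith), Real.log_div (by linarith) (by linarith)]; ring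
  have hp1' : (0:ℝ) < 1 - p := by linarith
  have key1 : p * Real.log (q / p) < q - p := by
    have := (mul_lt_mul_of_pos_left h1 hp0)
    calc p * Real.log (q / p) < p * (q / p - 1) := this
      _ = q - p := by field_simp
  have key2 : (1 - p) * Real.log ((1 - q) / (1 - p)) < p - q := by
    have := (mul_lt_mul_of_pos_left h2 hp1')
    calc (1 - p) * Real.log ((1 - q) / (1 - p)) < (1 - p) * ((1 - q) / (1 - p) - 1) := this
      _ = p - q := by field_simp; ring
  unfold breg
  rw [e1, e2]
  nlinarith

lemma breg_symm_identity {p q : ℝ} (hp0 : 0 < p) (hp1 : p < 1) (hq0 : 0 < q) (hq1 : q < 1) :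
    (logit q - logit p) * (p - q) = -(breg p q + breg q p) := by
  have hp1' : (1:ℝ) - p ≠ 0 := by linarith
  have hq1' : (1:ℝ) - q ≠ 0 := by linarith
  unfold logit breg
  rw [Real.log_div hq0.ne' hq1', Real.log_div hp0.ne' hp1',
    Real.log_div hp0.ne' hq0.ne', Real.log_div hp1' hq1',
    Real.log_div hq0.ne' hp0.ne', Real.log_div hq1' hp1']
  ring

lemma logit_mono {p q : ℝ} (hp0 : 0 < p) (hpq : p ≤ q) (hq1 : q < 1) :
    logit p ≤ logit q := by
  have hq0 : 0 < q := lt_of_lt_of_le hp0 hpq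
  have hp1 : p < 1 := lt_of_le_of_lt hpq hq1
  apply Real.log_le_log (div_pos hp0 (by linarith))
  apply div_le_div₀ hq0.le hpq (by linarith) (by linarith)

lemma abs_log_le_max {a b x : ℝ} (ha : 0 < a) (h1 : a ≤ x) (h2 : x ≤ b) :
    |Real.log x| ≤ max |Real.log a| |Real.log b| :=
  abs_le_max_abs_abs (Real.log_le_log ha h1) (Real.log_le_log (ha.trans_le h1) h2)

/-- SiMPL-B decrease: let `ρ_k, ρ_{k+1}` lie in the `L^∞`-relative
interior `Å` of the admissible set `A`.  If the first-order optimality condition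
`∫ (g + α⁻¹ (σ⁻¹(ρ_{k+1}) - σ⁻¹(ρ_k))) (ρ - ρ_{k+1}) ≥ 0` holds for all `ρ ∈ A`,
and the Bregman sufficient decrease condition
`F(ρ_{k+1}) ≤ F(ρ_k) + ∫ g (ρ_{k+1} - ρ_k) + α⁻¹ D_φ(ρ_{k+1}, ρ_k)` holds, then
`F(ρ_{k+1}) ≤ F(ρ_k) - α⁻¹ D_φ(ρ_k, ρ_{k+1})`; in particular `F(ρ_{k+1}) < F(ρ_k)`
whenever `ρ_{k+1} ≠ ρ_k`. -/
theorem simplB_monotone_decrease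
    {d : ℕ} (Ω : Set (Fin d → ℝ)) (hmeas : MeasurableSet Ω)
    (hpos : 0 < volume Ω) (hfin : volume Ω ≠ ⊤)
    (θ : ℝ) (hθ : θ ∈ Set.Ioo (0:ℝ) 1)
    (A Ai : Set (Lp ℝ ⊤ (volume.restrict Ω)))
    (hA : A = {ρ : Lp ℝ ⊤ (volume.restrict Ω) |
      (∀ᵐ x ∂(volume.restrict Ω), 0 ≤ ρ x ∧ ρ x ≤ 1) ∧
      ∫ x, ρ x ∂(volume.restrict Ω) = θ * (volume Ω).toReal})
    (hAi : Ai = {ρ ∈ A | 0 < essInf (⇑ρ) (volume.restrict Ω) ∧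
      essSup (⇑ρ) (volume.restrict Ω) < 1})
    (ρk ρk1 : Lp ℝ ⊤ (volume.restrict Ω)) (hρk : ρk ∈ Ai) (hρk1 : ρk1 ∈ Ai)
    (g : Lp ℝ ⊤ (volume.restrict Ω)) (α : ℝ) (hα : 0 < α)
    (F : Lp ℝ ⊤ (volume.restrict Ω) → ℝ)
    (hopt : ∀ ρ ∈ A,
      0 ≤ ∫ x, (g x + α⁻¹ * (logit (ρk1 x) - logit (ρk x))) * (ρ x - ρk1 x)
        ∂(volume.restrict Ω))
    (hdecrease : F ρk1 ≤ F ρk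
      + (∫ x, g x * (ρk1 x - ρk x) ∂(volume.restrict Ω))
      + α⁻¹ * ∫ x, ρk1 x * Real.log (ρk1 x / ρk x)
          + (1 - ρk1 x) * Real.log ((1 - ρk1 x) / (1 - ρk x)) ∂(volume.restrict Ω)) :
    F ρk1 ≤ F ρk
      - α⁻¹ * (∫ x, ρk x * Real.log (ρk x / ρk1 x)
          + (1 - ρk x) * Real.log ((1 - ρk x) / (1 - ρk1 x)) ∂(volume.restrict Ω)) ∧
    (ρk1 ≠ ρk → F ρk1 < F ρk) := by
  haveI hfm : IsFiniteMeasure (volume.restrict Ω) := ⟨by rw [Measure.restrict_apply_univ]; exact hfin.lt_top⟩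
  rw [hAi] at hρk hρk1
  obtain ⟨hρkA, hmk, hMk⟩ := hρk
  obtain ⟨hρk1A, hmk1, hMk1⟩ := hρk1
  have hρkA' := hρkA; have hρk1A' := hρk1A
  rw [hA] at hρkA' hρk1A'
  obtain ⟨hbk, -⟩ := hρkA'
  obtain ⟨hbk1, -⟩ := hρk1A'
  -- uniform a.e. bounds
  set mk := essInf (⇑ρk) (volume.restrict Ω)
  set Mk := essSup (⇑ρk) (volume.restrict Ω)
  set mk1 := essInf (⇑ρk1) (volume.restrict Ω)
  set Mk1 := essSup (⇑ρk1) (volume.restrict Ω)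
  have hbddk_lo : IsBoundedUnder (· ≥ ·) (ae (volume.restrict Ω)) ⇑ρk :=
    ⟨0, by rw [eventually_map]; filter_upwards [hbk] with x hx using hx.1⟩
  have hbddk_hi : IsBoundedUnder (· ≤ ·) (ae (volume.restrict Ω)) ⇑ρk :=
    ⟨1, by rw [eventually_map]; filter_upwards [hbk] with x hx using hx.2⟩
  have hbddk1_lo : IsBoundedUnder (· ≥ ·) (ae (volume.restrict Ω)) ⇑ρk1 :=
    ⟨0, by rw [eventually_map]; filter_upwards [hbk1] with x hx using hx.1⟩
  have hbddk1_hi : IsBoundedUnder (· ≤ ·) (ae (volume.restrict Ω)) ⇑ρk1 :=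
    ⟨1, by rw [eventually_map]; filter_upwards [hbk1] with x hx using hx.2⟩
  have haek : ∀ᵐ x ∂(volume.restrict Ω), mk ≤ ρk x ∧ ρk x ≤ Mk := by
    filter_upwards [ae_essInf_le hbddk_lo, ae_le_essSup hbddk_hi] with x h1 h2
    exact ⟨h1, h2⟩
  have haek1 : ∀ᵐ x ∂(volume.restrict Ω), mk1 ≤ ρk1 x ∧ ρk1 x ≤ Mk1 := by
    filter_upwards [ae_essInf_le hbddk1_lo, ae_le_essSup hbddk1_hi] with x h1 h2
    exact ⟨h1, h2⟩
  -- combined a.e. event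
  have hae : ∀ᵐ x ∂(volume.restrict Ω), (mk ≤ ρk x ∧ ρk x ≤ Mk) ∧ (mk1 ≤ ρk1 x ∧ ρk1 x ≤ Mk1) := by
    filter_upwards [haek, haek1] with x h1 h2 using ⟨h1, h2⟩
  -- bound for g
  set Cg := (eLpNormEssSup (⇑g) (volume.restrict Ω)).toReal with hCg
  have hgtop : eLpNormEssSup (⇑g) (volume.restrict Ω) ≠ ⊤ := by
    have := (Lp.memLp g).2
    rw [eLpNorm_exponent_top] at this
    exact this.ne
  have hgb : ∀ᵐ x ∂(volume.restrict Ω), ‖g x‖ ≤ Cg := by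
    filter_upwards [enorm_ae_le_eLpNormEssSup (⇑g) (volume.restrict Ω)] with x hx
    calc ‖g x‖ = ((‖g x‖₊ : ℝ≥0∞)).toReal := by simp
      _ ≤ Cg := ENNReal.toReal_mono hgtop hx
  -- measurability
  have hk : AEMeasurable (⇑ρk) (volume.restrict Ω) := (Lp.aestronglyMeasurable ρk).aemeasurable
  have hk1 : AEMeasurable (⇑ρk1) (volume.restrict Ω) := (Lp.aestronglyMeasurable ρk1).aemeasurable
  have hgm : AEMeasurable (⇑g) (volume.restrict Ω) := (Lp.aestronglyMeasurable g).aemeasurable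
  have int_of_bound : ∀ (f : (Fin d → ℝ) → ℝ) (C : ℝ), AEMeasurable f (volume.restrict Ω) →
      (∀ᵐ x ∂(volume.restrict Ω), ‖f x‖ ≤ C) → Integrable f (volume.restrict Ω) := fun f C hm hb =>
    (memLp_top_of_bound hm.aestronglyMeasurable C hb).integrable le_top
  -- the four functions
  set B0 : (Fin d → ℝ) → ℝ := fun x => breg (ρk x) (ρk1 x) with hB0
  set B1 : (Fin d → ℝ) → ℝ := fun x => breg (ρk1 x) (ρk x) with hB1
  have hmB0 : AEMeasurable B0 (volume.restrict Ω) := by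
    apply AEMeasurable.add
    · exact hk.mul (Real.measurable_log.comp_aemeasurable (hk.div hk1))
    · exact (aemeasurable_const.sub hk).mul
        (Real.measurable_log.comp_aemeasurable
          ((aemeasurable_const.sub hk).div (aemeasurable_const.sub hk1)))
  have hmB1 : AEMeasurable B1 (volume.restrict Ω) := by
    apply AEMeasurable.add
    · exact hk1.mul (Real.measurable_log.comp_aemeasurable (hk1.div hk))
    · exact (aemeasurable_const.sub hk1).mul
        (Real.measurable_log.comp_aemeasurable
          ((aemeasurable_const.sub hk1).div (aemeasurable_const.sub hk)))
  -- bound a breg-type function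
  have breg_bound : ∀ (p q mp Mp mq Mq : ℝ), 0 < mp → Mp < 1 → 0 < mq → Mq < 1 →
      mp ≤ p → p ≤ Mp → mq ≤ q → q ≤ Mq →
      ‖breg p q‖ ≤ (max |Real.log (mp / Mq)| |Real.log (Mp / mq)| +
        max |Real.log ((1 - Mp) / (1 - mq))| |Real.log ((1 - mp) / (1 - Mq))|) := by
    intro p q mp Mp mq Mq hmp hMp hmq hMq h1 h2 h3 h4
    have hp0 : 0 < p := hmp.trans_le h1
    have hq0 : 0 < q := hmq.trans_le h3
    have hp1 : p < 1 := h2.trans_lt hMp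
    have hq1 : q < 1 := h4.trans_lt hMq
    have e1 : |Real.log (p / q)| ≤ max |Real.log (mp / Mq)| |Real.log (Mp / mq)| := by
      apply abs_log_le_max (div_pos hmp (hmq.trans_le (h3.trans h4)))
      · exact div_le_div₀ hp0.le h1 hq0 h4
      · exact div_le_div₀ (hp0.le.trans h2) h2 hmq h3
    have e2 : |Real.log ((1 - p) / (1 - q))| ≤
        max |Real.log ((1 - Mp) / (1 - mq))| |Real.log ((1 - mp) / (1 - Mq))| := by
      apply abs_log_le_max (div_pos (by linarith) (by linarith))
      · exact div_le_div₀ (by linarith) (by linarith) (by linarith) (by linarith)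
      · exact div_le_div₀ (by linarith) (by linarith) (by linarith) (by linarith)
    have : ‖breg p q‖ ≤ |Real.log (p / q)| + |Real.log ((1 - p) / (1 - q))| := by
      unfold breg
      rw [Real.norm_eq_abs]
      calc |p * Real.log (p / q) + (1 - p) * Real.log ((1 - p) / (1 - q))|
          ≤ |p * Real.log (p / q)| + |(1 - p) * Real.log ((1 - p) / (1 - q))| := abs_add_le _ _
        _ ≤ |Real.log (p / q)| + |Real.log ((1 - p) / (1 - q))| := by
            rw [abs_mul, abs_mul]
            have : |p| ≤ 1 := by rw [abs_of_nonneg hp0.le]; exact hp1.le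
            have : |1 - p| ≤ 1 := by rw [abs_of_nonneg (by linarith)]; linarith
            have hap : |p| ≤ 1 := by rw [abs_of_nonneg hp0.le]; exact hp1.le
            have ha1p : |1 - p| ≤ 1 := by rw [abs_of_nonneg (by linarith)]; linarith
            have u1 := mul_le_of_le_one_left (abs_nonneg (Real.log (p / q))) hap
            have u2 := mul_le_of_le_one_left (abs_nonneg (Real.log ((1 - p) / (1 - q)))) ha1p
            linarith
    linarith [e1, e2, this]
  -- integrability of the four integrands
  have hCg0 : 0 ≤ Cg := ENNReal.toReal_nonneg
  have iB0 : Integrable B0 (volume.restrict Ω) := by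
    apply int_of_bound _ (max |Real.log (mk / Mk1)| |Real.log (Mk / mk1)| +
      max |Real.log ((1 - Mk) / (1 - mk1))| |Real.log ((1 - mk) / (1 - Mk1))|) hmB0
    filter_upwards [hae] with x hx
    exact breg_bound _ _ _ _ _ _ hmk hMk hmk1 hMk1 hx.1.1 hx.1.2 hx.2.1 hx.2.2
  have iB1 : Integrable B1 (volume.restrict Ω) := by
    apply int_of_bound _ (max |Real.log (mk1 / Mk)| |Real.log (Mk1 / mk)| +
      max |Real.log ((1 - Mk1) / (1 - mk))| |Real.log ((1 - mk1) / (1 - Mk))|) hmB1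
    filter_upwards [hae] with x hx
    exact breg_bound _ _ _ _ _ _ hmk1 hMk1 hmk hMk hx.2.1 hx.2.2 hx.1.1 hx.1.2
  have iδg : Integrable (fun x => g x * (ρk x - ρk1 x)) (volume.restrict Ω) := by
    apply int_of_bound _ (Cg * 2) (hgm.mul (hk.sub hk1))
    filter_upwards [hgb, hbk, hbk1] with x h1 h2 h3
    rw [Pi.mul_apply, Pi.sub_apply, norm_mul]
    have : ‖ρk x - ρk1 x‖ ≤ 2 := by
      rw [Real.norm_eq_abs, abs_le]; constructor <;> [linarith [h2.1, h3.2]; linarith [h2.2, h3.1]]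
    exact mul_le_mul h1 this (norm_nonneg _) hCg0
  -- a.e. pointwise three-point identity
  have hid : (fun x => (logit (ρk1 x) - logit (ρk x)) * (ρk x - ρk1 x))
      =ᵐ[volume.restrict Ω] (fun x => -(B0 x + B1 x)) := by
    filter_upwards [hae] with x hx
    exact breg_symm_identity (hmk.trans_le hx.1.1) (hx.1.2.trans_lt hMk)
      (hmk1.trans_le hx.2.1) (hx.2.2.trans_lt hMk1)
  have iΔδ : Integrable (fun x => (logit (ρk1 x) - logit (ρk x)) * (ρk x - ρk1 x))
      (volume.restrict Ω) := ((iB0.add iB1).neg).congr hid.symm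
  -- split the optimality integral
  have h0 := hopt ρk hρkA
  set Ig := ∫ x, g x * (ρk x - ρk1 x) ∂(volume.restrict Ω) with hIg
  set D0 := ∫ x, B0 x ∂(volume.restrict Ω) with hD0
  set D1 := ∫ x, B1 x ∂(volume.restrict Ω) with hD1
  have hsplit : ∫ x, (g x + α⁻¹ * (logit (ρk1 x) - logit (ρk x))) * (ρk x - ρk1 x)
        ∂(volume.restrict Ω)
      = Ig + α⁻¹ * ∫ x, (logit (ρk1 x) - logit (ρk x)) * (ρk x - ρk1 x)
        ∂(volume.restrict Ω) := by
    rw [hIg, ← integral_const_mul, ← integral_add iδg (iΔδ.const_mul α⁻¹)]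
    apply integral_congr_ae
    filter_upwards with x
    ring
  have hΔδ : ∫ x, (logit (ρk1 x) - logit (ρk x)) * (ρk x - ρk1 x) ∂(volume.restrict Ω)
      = -(D0 + D1) := by
    rw [integral_congr_ae hid, integral_neg, integral_add iB0 iB1]
  rw [hsplit, hΔδ] at h0
  -- rewrite hdecrease
  have hneg : (∫ x, g x * (ρk1 x - ρk x) ∂(volume.restrict Ω)) = -Ig := by
    rw [hIg, ← integral_neg]
    apply integral_congr_ae
    filter_upwards with x
    ring
  have hgoal1 : (∫ x, ρk1 x * Real.log (ρk1 x / ρk x)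
      + (1 - ρk1 x) * Real.log ((1 - ρk1 x) / (1 - ρk x)) ∂(volume.restrict Ω)) = D1 := rfl
  have hgoal0 : (∫ x, ρk x * Real.log (ρk x / ρk1 x)
      + (1 - ρk x) * Real.log ((1 - ρk x) / (1 - ρk1 x)) ∂(volume.restrict Ω)) = D0 := rfl
  rw [hneg, hgoal1] at hdecrease
  have hαi : 0 < α⁻¹ := inv_pos.mpr hα
  have main : F ρk1 ≤ F ρk - α⁻¹ * D0 := by nlinarith [h0, hdecrease]
  refine ⟨by rw [hgoal0]; exact main, ?_⟩
  intro hne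
  have hbnn : 0 ≤ᵐ[volume.restrict Ω] B0 := by
    filter_upwards [hae] with x hx
    exact breg_nonneg (hmk.trans_le hx.1.1) (hx.1.2.trans_lt hMk)
      (hmk1.trans_le hx.2.1) (hx.2.2.trans_lt hMk1)
  have hD0nn : 0 ≤ D0 := integral_nonneg_of_ae hbnn
  rcases hD0nn.lt_or_eq with hlt | heq
  · nlinarith [main, mul_pos hαi hlt]
  · exfalso
    have hz : B0 =ᵐ[volume.restrict Ω] 0 :=
      (integral_eq_zero_iff_of_nonneg_ae hbnn iB0).mp heq.symm
    have heq2 : ⇑ρk1 =ᵐ[volume.restrict Ω] ⇑ρk := by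
      filter_upwards [hz, hae] with x h1 h2
      simp only [Pi.zero_apply, hB0] at h1
      by_contra hne2
      exact absurd h1 (ne_of_gt (breg_pos (hmk.trans_le h2.1.1) (h2.1.2.trans_lt hMk)
        (hmk1.trans_le h2.2.1) (h2.2.2.trans_lt hMk1) (fun h => hne2 h.symm)))
    exact hne (Lp.ext heq2)
end
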